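/- arXiv:2507.06027 — 8 statements merged into one kernel-verified Lean document; each statement's English description precedes it below -/
import Mathlib

section
/- Let v be a solution of problem (1.4) with wave speed c, with associated continuous function Φ, and set I_v := {z ∈ ℝ : 0 < v(z) < 1}. Then I_v is an open (possibly unbounded) interval, v is strictly decreasing on I_v with v′(z) < 0 for every z ∈ I_v \ v⁻¹(Θ); moreover Φ(z) < 0 for every z ∈ I_v, Φ is continuously differentiable on I_v \ v⁻¹(Θ), and Φ′(z) + (c g(v(z)) − f(v(z))) v′(z) + h(v(z)) = 0 for every z ∈ I_v \ v⁻¹(Θ). -/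
open Filter Set MeasureTheory Topology

/-- A traveling-wave solution (solution of problem (1.4)) with speed `c`,
together with its associated continuous function `Φ`. -/
def IsTWSol (p : ℝ) (Θ : Set ℝ) (f g h d : ℝ → ℝ) (c : ℝ) (v Φ : ℝ → ℝ) : Prop :=
  Continuous v ∧ (∀ z, v z ∈ Set.Icc (0:ℝ) 1) ∧
  Filter.Tendsto v Filter.atBot (nhds 1) ∧
  Filter.Tendsto v Filter.atTop (nhds 0) ∧
  ContDiffOn ℝ 1 v {z : ℝ | v z ∉ Θ ∪ ({0, 1} : Set ℝ)} ∧
  Continuous Φ ∧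
  (∀ a b : ℝ, a < b → ContDiffOn ℝ 1 v (Set.Ioo a b) →
    (∀ z ∈ Set.Ioo a b, v z ∈ Set.Ioo (0:ℝ) 1) →
    ∀ z ∈ Set.Ioo a b, Φ z = d (v z) * |deriv v z| ^ (p - 2) * deriv v z) ∧
  Filter.Tendsto Φ Filter.atBot (nhds 0) ∧
  Filter.Tendsto Φ Filter.atTop (nhds 0) ∧
  (∀ z, (v z = 0 ∨ v z = 1) → Φ z = 0) ∧
  (∀ z₁ z₂ : ℝ,
    Φ z₂ - Φ z₁ + (∫ ξ in (v z₁)..(v z₂), (c * g ξ - f ξ)) + (∫ z in z₁..z₂, h (v z)) = 0)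

set_option maxHeartbeats 1000000 in
theorem statement0
    (p : ℝ) (hp : 1 < p)
    (Θ : Set ℝ) (hΘfin : Θ.Finite) (hΘsub : Θ ⊆ Set.Ioo 0 1)
    (f g h d : ℝ → ℝ)
    (hfb : ∃ M, ∀ x ∈ Set.Icc (0:ℝ) 1, |f x| ≤ M)
    (hgb : ∃ M, ∀ x ∈ Set.Icc (0:ℝ) 1, |g x| ≤ M)
    (hhb : ∃ M, ∀ x ∈ Set.Icc (0:ℝ) 1, |h x| ≤ M)
    (hfc : ∀ x ∈ Set.Icc (0:ℝ) 1 \ Θ, ContinuousWithinAt f (Set.Icc 0 1) x)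
    (hgc : ∀ x ∈ Set.Icc (0:ℝ) 1 \ Θ, ContinuousWithinAt g (Set.Icc 0 1) x)
    (hhc : ∀ x ∈ Set.Icc (0:ℝ) 1 \ Θ, ContinuousWithinAt h (Set.Icc 0 1) x)
    (hdc : ∀ x ∈ Set.Ioo (0:ℝ) 1 \ Θ, ContinuousWithinAt d (Set.Ioo 0 1) x)
    (hdbounds : ∀ a b : ℝ, 0 < a → a < b → b < 1 →
      (∃ m > 0, ∀ x ∈ Set.Icc a b, m ≤ d x) ∧ (∃ M, ∀ x ∈ Set.Icc a b, d x ≤ M))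
    (hh0 : h 0 = 0) (hh1 : h 1 = 0)
    (hhpos : ∀ a b : ℝ, 0 < a → a < b → b < 1 → ∃ m > 0, ∀ x ∈ Set.Icc a b, m ≤ h x)
    (κ : ℝ → ℝ) (hκdef : ∀ ξ, κ ξ = d ξ ^ ((1:ℝ)/(p-1)) * h ξ)
    (hκint : MeasureTheory.IntegrableOn κ (Set.Ioo 0 1))
    (c : ℝ) (v Φ : ℝ → ℝ)
    (hsol : IsTWSol p Θ f g h d c v Φ) :
    IsOpen {z : ℝ | v z ∈ Set.Ioo (0:ℝ) 1} ∧
    Set.OrdConnected {z : ℝ | v z ∈ Set.Ioo (0:ℝ) 1} ∧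
    StrictAntiOn v {z : ℝ | v z ∈ Set.Ioo (0:ℝ) 1} ∧
    (∀ z : ℝ, v z ∈ Set.Ioo (0:ℝ) 1 → v z ∉ Θ → deriv v z < 0) ∧
    (∀ z : ℝ, v z ∈ Set.Ioo (0:ℝ) 1 → Φ z < 0) ∧
    ContDiffOn ℝ 1 Φ {z : ℝ | v z ∈ Set.Ioo (0:ℝ) 1 ∧ v z ∉ Θ} ∧
    (∀ z : ℝ, v z ∈ Set.Ioo (0:ℝ) 1 → v z ∉ Θ →
      deriv Φ z + (c * g (v z) - f (v z)) * deriv v z + h (v z) = 0) := by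
  obtain ⟨hvC, hv01, hvbot, hvtop, hvCD, hΦC, hΦfor, hΦbot, hΦtop, hΦ01, hid⟩ := hsol
  obtain ⟨Mf, hMf⟩ := hfb
  obtain ⟨Mg, hMg⟩ := hgb
  obtain ⟨Mh, hMh⟩ := hhb
  set q : ℝ → ℝ := fun ξ => c * g ξ - f ξ with hqdef
  have hMf0 : 0 ≤ Mf := le_trans (abs_nonneg _) (hMf 0 (by norm_num))
  have hMg0 : 0 ≤ Mg := le_trans (abs_nonneg _) (hMg 0 (by norm_num))
  set Q : ℝ := |c| * Mg + Mf + 1 with hQdef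
  have hQpos : 0 < Q := by positivity
  have hQ : ∀ x ∈ Icc (0:ℝ) 1, |q x| ≤ Q := by
    intro x hx
    have h1 : |c * g x - f x| ≤ |c * g x| + |f x| := by
      calc |c * g x - f x| = |c * g x + -(f x)| := by ring_nf
        _ ≤ |c * g x| + |-(f x)| := abs_add_le _ _
        _ = |c * g x| + |f x| := by rw [abs_neg]
    have h2 : |c * g x| = |c| * |g x| := abs_mul _ _
    have h3 : |c| * |g x| ≤ |c| * Mg :=
      mul_le_mul_of_nonneg_left (hMg x hx) (abs_nonneg c)
    have h4 : |f x| ≤ Mf := hMf x hx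
    simp only [hqdef]
    linarith
  have hΘc : IsClosed Θ := hΘfin.isClosed
  set W : Set ℝ := {z : ℝ | v z ∈ Set.Ioo (0:ℝ) 1 ∧ v z ∉ Θ} with hWdef
  have hWeq : W = v ⁻¹' (Ioo 0 1 \ Θ) := rfl
  have hWopen : IsOpen W := by
    rw [hWeq]; exact (isOpen_Ioo.sdiff hΘc).preimage hvC
  have hWsub : W ⊆ {z : ℝ | v z ∉ Θ ∪ ({0, 1} : Set ℝ)} := by
    rintro z ⟨hz1, hz2⟩
    simp only [mem_setOf_eq, Set.mem_union, Set.mem_insert_iff, Set.mem_singleton_iff]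
    push_neg
    exact ⟨hz2, ne_of_gt hz1.1, ne_of_lt hz1.2⟩
  have hdpos : ∀ u ∈ Ioo (0:ℝ) 1, 0 < d u := by
    intro u hu
    obtain ⟨⟨m, hm, hdK⟩, -⟩ := hdbounds (u/2) ((u+1)/2)
      (by linarith [hu.1]) (by linarith [hu.1, hu.2]) (by linarith [hu.2])
    exact lt_of_lt_of_le hm (hdK u ⟨by linarith [hu.1], by linarith [hu.2]⟩)
  have hhposI : ∀ u ∈ Ioo (0:ℝ) 1, 0 < h u := by
    intro u hu
    obtain ⟨m, hm, hhK⟩ := hhpos (u/2) ((u+1)/2)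
      (by linarith [hu.1]) (by linarith [hu.1, hu.2]) (by linarith [hu.2])
    exact lt_of_lt_of_le hm (hhK u ⟨by linarith [hu.1], by linarith [hu.2]⟩)
  have hhnn : ∀ u ∈ Icc (0:ℝ) 1, 0 ≤ h u := by
    intro u hu
    rcases eq_or_lt_of_le hu.1 with h0 | h0
    · rw [← h0, hh0]
    rcases eq_or_lt_of_le hu.2 with h1 | h1
    · rw [h1, hh1]
    · exact (hhposI u ⟨h0, h1⟩).le
  have hqcont : ∀ u, u ∈ Ioo (0:ℝ) 1 → u ∉ Θ → ContinuousAt q u := by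
    intro u hu huΘ
    have hIcc : Icc (0:ℝ) 1 ∈ 𝓝 u := Icc_mem_nhds hu.1 hu.2
    have hf' : ContinuousAt f u :=
      (hfc u ⟨⟨hu.1.le, hu.2.le⟩, huΘ⟩).continuousAt hIcc
    have hg' : ContinuousAt g u :=
      (hgc u ⟨⟨hu.1.le, hu.2.le⟩, huΘ⟩).continuousAt hIcc
    exact (continuousAt_const.mul hg').sub hf'
  have hhcont : ∀ u, u ∈ Ioo (0:ℝ) 1 → u ∉ Θ → ContinuousAt h u := by
    intro u hu huΘ
    exact (hhc u ⟨⟨hu.1.le, hu.2.le⟩, huΘ⟩).continuousAt (Icc_mem_nhds hu.1 hu.2)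
  have hvda : ∀ z ∈ W, DifferentiableAt ℝ v z := by
    intro z hz
    have : {z : ℝ | v z ∉ Θ ∪ ({0, 1} : Set ℝ)} ∈ 𝓝 z :=
      mem_of_superset (hWopen.mem_nhds hz) hWsub
    exact (hvCD.contDiffAt this).differentiableAt one_ne_zero
  -- the representation formula on W
  have hphieq : ∀ z ∈ W, Φ z = d (v z) * |deriv v z| ^ (p-2) * deriv v z := by
    intro z hz
    obtain ⟨r, hr, hball⟩ := Metric.mem_nhds_iff.1 (hWopen.mem_nhds hz)
    have hsub : Ioo (z - r) (z + r) ⊆ W := by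
      rw [← Real.ball_eq_Ioo]; exact hball
    have hzz : z ∈ Ioo (z - r) (z + r) := by constructor <;> linarith
    exact hΦfor (z - r) (z + r) (by linarith)
      (hvCD.mono (fun x hx => hWsub (hsub hx)))
      (fun x hx => (hsub hx).1) z hzz
  -- sign facts for x ↦ |x|^(p-2) * x
  have hA2 : ∀ x : ℝ, 0 < x → 0 < |x| ^ (p-2) * x := by
    intro x hx
    have : (0:ℝ) < |x| ^ (p-2) := Real.rpow_pos_of_pos (abs_pos.2 (ne_of_gt hx)) _
    positivity
  have hA1 : ∀ x : ℝ, x < 0 → |x| ^ (p-2) * x < 0 := by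
    intro x hx
    have h1 : (0:ℝ) < |x| ^ (p-2) := Real.rpow_pos_of_pos (abs_pos.2 (ne_of_lt hx)) _
    exact mul_neg_of_pos_of_neg h1 hx
  have habs : ∀ x : ℝ, |(|x| ^ (p-2) * x)| = |x| ^ (p-1) := by
    intro x
    rcases eq_or_ne x 0 with h0 | h0
    · rw [h0]; simp [Real.zero_rpow (by intro hc; exact absurd hc (by intro hc'; linarith [hc'] : ¬ (p - 1 = 0)))]
    · have hxa : (0:ℝ) < |x| := abs_pos.2 h0
      rw [abs_mul, abs_of_nonneg (Real.rpow_nonneg (abs_nonneg x) _)]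
      rw [← Real.rpow_add_one (ne_of_gt hxa)]
      congr 1
      ring
  have hsign2 : ∀ z ∈ W, deriv v z ≤ 0 → Φ z ≤ 0 := by
    intro z hz hD
    rw [hphieq z hz, mul_assoc]
    rcases lt_or_eq_of_le hD with hD | hD
    · exact (mul_neg_of_pos_of_neg (hdpos _ hz.1) (hA1 _ hD)).le
    · rw [hD]; simp
  have hsign3 : ∀ z ∈ W, Φ z ≤ 0 → deriv v z ≤ 0 := by
    intro z hz hΦz
    by_contra hD
    push_neg at hD
    have := mul_pos (hdpos _ hz.1) (hA2 _ hD)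
    rw [hphieq z hz, mul_assoc] at hΦz
    linarith
  have hsign4 : ∀ z ∈ W, Φ z < 0 → deriv v z < 0 := by
    intro z hz hΦz
    rcases lt_or_eq_of_le (hsign3 z hz hΦz.le) with hD | hD
    · exact hD
    · rw [hphieq z hz, hD] at hΦz; simp at hΦz
  have hsign5 : ∀ z ∈ W, Φ z = 0 → deriv v z = 0 := by
    intro z hz hΦz
    rcases lt_trichotomy (deriv v z) 0 with hD | hD | hD
    · exfalso
      have := mul_neg_of_pos_of_neg (hdpos _ hz.1) (hA1 _ hD)
      rw [hphieq z hz, mul_assoc] at hΦz; linarith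
    · exact hD
    · exfalso
      have := mul_pos (hdpos _ hz.1) (hA2 _ hD)
      rw [hphieq z hz, mul_assoc] at hΦz; linarith
  -- no plateau
  have hplateau : ∀ s t y : ℝ, s < t → y ∈ Ioo (0:ℝ) 1 → (∀ z ∈ Ioo s t, v z = y) → False := by
    intro s t y hst hy hconst
    have hcd : ContDiffOn ℝ 1 v (Ioo s t) :=
      contDiffOn_const.congr hconst
    have hmem : ∀ z ∈ Ioo s t, v z ∈ Ioo (0:ℝ) 1 := fun z hz => (hconst z hz).symm ▸ hy
    have hΦ0 : ∀ z ∈ Ioo s t, Φ z = 0 := by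
      intro z hz
      have hdv : deriv v z = 0 := by
        have hev : v =ᶠ[𝓝 z] (fun _ => y) :=
          eventually_of_mem (isOpen_Ioo.mem_nhds hz) hconst
        rw [hev.deriv_eq, deriv_const]
      rw [hΦfor s t hst hcd hmem z hz, hdv, mul_zero]
    set s' : ℝ := s + (t - s)/4 with hs'
    set t' : ℝ := s + 3*(t - s)/4 with ht'
    have hs'mem : s' ∈ Ioo s t := by constructor <;> [skip; skip] <;> simp only [hs'] <;> linarith
    have ht'mem : t' ∈ Ioo s t := by constructor <;> [skip; skip] <;> simp only [ht'] <;> linarith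
    have hid' := hid s' t'
    rw [hΦ0 s' hs'mem, hΦ0 t' ht'mem, hconst s' hs'mem, hconst t' ht'mem,
      intervalIntegral.integral_same] at hid'
    have hceq : ∫ z in s'..t', h (v z) = (t' - s') * h y := by
      rw [intervalIntegral.integral_congr (g := fun _ => h y)
        (fun z hz => by
          rw [hconst z]
          have := Set.uIcc_of_le (by simp only [hs', ht']; linarith : s' ≤ t')
          rw [this] at hz
          exact ⟨lt_of_lt_of_le hs'mem.1 hz.1, lt_of_le_of_lt hz.2 ht'mem.2⟩),
        intervalIntegral.integral_const, smul_eq_mul]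
    rw [hceq] at hid'
    have hy' : 0 < h y := hhposI y hy
    have hts : 0 < t' - s' := by simp only [hs', ht']; linarith
    nlinarith
  -- derivative of Φ on W
  have hΦderiv : ∀ z ∈ W, HasDerivAt Φ (-(q (v z) * deriv v z) - h (v z)) z := by
    intro z hz
    have hU0 : IsOpen (Ioo (0:ℝ) 1 \ Θ) := isOpen_Ioo.sdiff hΘc
    have hvz : v z ∈ Ioo (0:ℝ) 1 \ Θ := ⟨hz.1, hz.2⟩
    -- derivative of the q-part
    have hqC : ContinuousOn q (Ioo (0:ℝ) 1 \ Θ) := fun u hu =>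
      (hqcont u hu.1 hu.2).continuousWithinAt
    have hF0 : HasDerivAt (fun u => ∫ x in (v z)..u, q x) (q (v z)) (v z) := by
      refine intervalIntegral.integral_hasDerivAt_right ?_ ?_ (hqcont _ hz.1 hz.2)
      · refine ⟨?_, ?_⟩ <;> simp [Set.Ioc_self]
      · exact hqC.stronglyMeasurableAtFilter hU0 _ hvz
    have hvd : HasDerivAt v (deriv v z) z := (hvda z hz).hasDerivAt
    have hF : HasDerivAt (fun x => ∫ u in (v z)..(v x), q u) (q (v z) * deriv v z) z :=
      HasDerivAt.comp z hF0 hvd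
    -- derivative of the h-part
    have hhvC : ContinuousOn (fun x => h (v x)) W := fun x hx =>
      ((hhcont _ hx.1 hx.2).comp hvC.continuousAt).continuousWithinAt
    have hG : HasDerivAt (fun x => ∫ u in z..x, h (v u)) (h (v z)) z := by
      refine intervalIntegral.integral_hasDerivAt_right ?_ ?_
        ((hhcont _ hz.1 hz.2).comp hvC.continuousAt)
      · refine ⟨?_, ?_⟩ <;> simp [Set.Ioc_self]
      · exact hhvC.stronglyMeasurableAtFilter hWopen _ hz
    have hrep : ∀ x, Φ x = Φ z - (∫ u in (v z)..(v x), q u) - ∫ u in z..x, h (v u) := by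
      intro x
      have := hid z x
      simp only [hqdef] at this ⊢
      linarith
    have hsum : HasDerivAt (fun x => Φ z - (∫ u in (v z)..(v x), q u) - ∫ u in z..x, h (v u))
        (0 - q (v z) * deriv v z - h (v z)) z :=
      ((hasDerivAt_const z (Φ z)).sub hF).sub hG
    have : HasDerivAt Φ (0 - q (v z) * deriv v z - h (v z)) z :=
      hsum.congr_of_eventuallyEq (Filter.Eventually.of_forall hrep)
    convert this using 1
    ring
  -- Φ ≤ 0 everywhere
  have hΦle : ∀ z, Φ z ≤ 0 := by
    by_contra hcon
    push_neg at hcon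
    obtain ⟨zb, hzb⟩ := hcon
    have hvzb : v zb ∈ Ioo (0:ℝ) 1 := by
      rcases lt_or_eq_of_le (hv01 zb).1 with h0 | h0
      · rcases lt_or_eq_of_le (hv01 zb).2 with h1 | h1
        · exact ⟨h0, h1⟩
        · exact absurd (hΦ01 zb (Or.inr h1)) (by linarith)
      · exact absurd (hΦ01 zb (Or.inl h0.symm)) (by linarith)
    -- find ζ with v ζ ∈ (0,1)\Θ and Φ ζ > 0
    obtain ⟨ζ, hζΦ, hζv1, hζv2⟩ : ∃ ζ, 0 < Φ ζ ∧ v ζ ∈ Ioo (0:ℝ) 1 ∧ v ζ ∉ Θ := by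
      by_cases hθ : v zb ∈ Θ
      · have hopen : IsOpen ({x : ℝ | 0 < Φ x} ∩ v ⁻¹' (Ioo 0 1)) :=
          (isOpen_lt continuous_const hΦC).inter (isOpen_Ioo.preimage hvC)
        obtain ⟨r, hr, hball⟩ := Metric.mem_nhds_iff.1 (hopen.mem_nhds ⟨hzb, hvzb⟩)
        rw [Real.ball_eq_Ioo] at hball
        have hnc : ∃ z' ∈ Ioo (zb - r) (zb + r), v z' ≠ v zb := by
          by_contra hcc
          push_neg at hcc
          exact hplateau _ _ _ (by linarith) hvzb hcc
        obtain ⟨z', hz', hne⟩ := hnc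
        have hz'mem := hball hz'
        have hlt : min (v z') (v zb) < max (v z') (v zb) := min_lt_max.2 hne
        obtain ⟨w, hwmem, hwΘ⟩ :
            ∃ w, w ∈ Ioo (min (v z') (v zb)) (max (v z') (v zb)) ∧ w ∉ Θ := by
          obtain ⟨w, hw⟩ := ((Set.Ioo_infinite hlt).diff hΘfin).nonempty
          exact ⟨w, hw.1, hw.2⟩
        have hzbball : zb ∈ Ioo (zb - r) (zb + r) := by constructor <;> linarith
        have huIcc : uIcc zb z' ⊆ Ioo (zb - r) (zb + r) :=
          Set.ordConnected_Ioo.uIcc_subset hzbball hz'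
        have hwu : w ∈ uIcc (v zb) (v z') := by
          rw [Set.uIcc_eq_union]
          rcases le_total (v zb) (v z') with hc | hc
          · left
            simp only [max_eq_left hc, min_eq_right hc] at hwmem
            exact ⟨hwmem.1.le, hwmem.2.le⟩
          · right
            simp only [max_eq_right hc, min_eq_left hc] at hwmem
            exact ⟨hwmem.1.le, hwmem.2.le⟩
        obtain ⟨ζ, hζu, hζw⟩ := intermediate_value_uIcc (hvC.continuousOn) hwu
        have hζball := huIcc hζu
        have h1 := (hball hζball).1
        have h2 := (hball hζball).2
        refine ⟨ζ, h1, ?_, ?_⟩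
        · rw [hζw]
          have h01 : (0:ℝ) < min (v z') (v zb) := lt_min (hball hz').2.1 hvzb.1
          have h11 : max (v z') (v zb) < 1 := max_lt (hball hz').2.2 hvzb.2
          exact ⟨lt_trans h01 hwmem.1, lt_trans hwmem.2 h11⟩
        · rw [hζw]; exact hwΘ
      · exact ⟨zb, hzb, hvzb, hθ⟩
    have hζW : ζ ∈ W := ⟨hζv1, hζv2⟩
    have hvdζ : HasDerivAt v (deriv v ζ) ζ := (hvda ζ hζW).hasDerivAt
    have hDpos : 0 < deriv v ζ := by
      by_contra hD
      push_neg at hD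
      exact absurd (hsign2 ζ hζW hD) (by linarith)
    -- v < v ζ just to the left of ζ
    have hev : ∀ᶠ x in 𝓝[<] ζ, v x < v ζ := by
      have h1 : ∀ᶠ x in 𝓝[≠] ζ, 0 < slope v ζ x :=
        (hasDerivAt_iff_tendsto_slope.1 hvdζ).eventually (eventually_gt_nhds hDpos)
      have h2 : ∀ᶠ x in 𝓝[<] ζ, 0 < slope v ζ x :=
        h1.filter_mono (nhdsWithin_mono ζ (fun x hx => ne_of_lt hx))
      filter_upwards [h2, self_mem_nhdsWithin] with x hx hx'
      by_contra hge
      push_neg at hge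
      have : slope v ζ x ≤ 0 := by
        rw [slope_def_field]
        exact div_nonpos_of_nonneg_of_nonpos (by linarith) (by simp only [mem_Iio] at hx'; linarith)
      linarith
    obtain ⟨l, hl, hIoo⟩ := mem_nhdsLT_iff_exists_Ioo_subset.1 hev
    simp only [mem_Iio] at hl
    set t : ℝ := (max l (ζ - 1) + ζ)/2 with htdef
    have htl : l < t := by
      have := le_max_left l (ζ - 1)
      have := max_lt hl (by linarith : ζ - 1 < ζ)
      simp only [htdef]; linarith
    have htζ : t < ζ := by
      have := max_lt hl (by linarith : ζ - 1 < ζ)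
      simp only [htdef]; linarith
    have hvt : v t < v ζ := hIoo ⟨htl, htζ⟩
    -- a point far to the left with v > v ζ
    have hwlt1 : v ζ < 1 := hζv1.2
    obtain ⟨B, hB⟩ := Filter.eventually_atBot.1 (hvbot.eventually (eventually_gt_nhds hwlt1))
    set zm : ℝ := min B (t - 1) with hzmdef
    have hzmt : zm < t := by
      have := min_le_right B (t - 1); simp only [hzmdef]; linarith
    have hzmv : v ζ < v zm := hB _ (min_le_left _ _)
    -- greatest point of [zm, t] where v ≥ v ζ
    set A : Set ℝ := Icc zm t ∩ {x | v ζ ≤ v x} with hAdef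
    have hAcpt : IsCompact A :=
      isCompact_Icc.inter_right (isClosed_le continuous_const hvC)
    have hAne : A.Nonempty := ⟨zm, ⟨le_refl _, hzmt.le⟩, hzmv.le⟩
    obtain ⟨γ, hγA, hγub⟩ := hAcpt.exists_isGreatest hAne
    obtain ⟨⟨hγ1, hγ2⟩, hγ3⟩ := hγA
    have hγt : γ < t := by
      rcases lt_or_eq_of_le hγ2 with hc | hc
      · exact hc
      · exfalso; rw [hc] at hγ3; simp only [mem_setOf_eq] at hγ3; linarith
    have hγζ : γ < ζ := lt_trans hγt htζ
    have hless : ∀ x ∈ Ioo γ ζ, v x < v ζ := by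
      intro x hx
      by_cases hxt : x ≤ t
      · by_contra hge
        push_neg at hge
        have hxA : x ∈ A := ⟨⟨le_trans hγ1 hx.1.le, hxt⟩, hge⟩
        exact absurd (hγub hxA) (not_le.2 hx.1)
      · push_neg at hxt
        exact hIoo ⟨lt_trans htl hxt, hx.2⟩
    have hγw : v γ = v ζ := by
      by_contra hne'
      have hgt : v ζ < v γ := lt_of_le_of_ne hγ3 (Ne.symm hne')
      have hev2 : ∀ᶠ x in 𝓝 γ, v ζ < v x :=
        hvC.continuousAt.eventually (eventually_gt_nhds hgt)
      have hmem3 : Ioo γ ζ ∈ 𝓝[>] γ := Ioo_mem_nhdsGT_of_mem ⟨le_refl γ, hγζ⟩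
      obtain ⟨x, h1, h2⟩ :=
        ((hev2.filter_mono nhdsWithin_le_nhds).and
          (eventually_of_mem hmem3 hless)).exists
      linarith
    have hγW : γ ∈ W := ⟨hγw ▸ hζv1, hγw ▸ hζv2⟩
    have hvdγ : HasDerivAt v (deriv v γ) γ := (hvda γ hγW).hasDerivAt
    have hγD : deriv v γ ≤ 0 := by
      have hmono : 𝓝[>] γ ≤ 𝓝[≠] γ :=
        nhdsWithin_mono γ (fun x (hx : x ∈ Ioi γ) => (ne_of_gt hx : x ≠ γ))
      have htd := (hasDerivAt_iff_tendsto_slope.1 hvdγ).mono_left hmono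
      have hev3 : ∀ᶠ x in 𝓝[>] γ, slope v γ x ≤ 0 := by
        have hmem3 : Ioo γ ζ ∈ 𝓝[>] γ := Ioo_mem_nhdsGT_of_mem ⟨le_refl γ, hγζ⟩
        filter_upwards [eventually_of_mem hmem3 (fun x hx => hx)] with x hx
        rw [slope_def_field]
        have := hless x hx
        exact div_nonpos_of_nonpos_of_nonneg (by rw [hγw]; linarith) (by linarith [hx.1])
      exact le_of_tendsto htd hev3
    have hΦγ : Φ γ ≤ 0 := hsign2 γ hγW hγD
    -- the identity on [γ, ζ]
    have hid' := hid γ ζ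
    rw [hγw, intervalIntegral.integral_same] at hid'
    have hHnn : 0 ≤ ∫ u in γ..ζ, h (v u) :=
      intervalIntegral.integral_nonneg hγζ.le (fun u _ => hhnn _ (hv01 u))
    linarith
  -- Φ < 0 on W
  have hΦlt : ∀ z ∈ W, Φ z < 0 := by
    intro z hz
    rcases lt_or_eq_of_le (hΦle z) with hlt | heq
    · exact hlt
    exfalso
    have hD0 : deriv v z = 0 := hsign5 z hz heq
    have hd' := hΦderiv z hz
    have hmax : IsLocalMax Φ z := by
      apply Filter.Eventually.of_forall
      intro x
      rw [heq]
      exact hΦle x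
    have := hmax.hasDerivAt_eq_zero hd'
    rw [hD0, mul_zero] at this
    have := hhposI _ hz.1
    linarith
  have hanti : Antitone v := by
    intro s t hst
    by_contra hvst
    push_neg at hvst
    have hstlt : s < t := by
      rcases lt_or_eq_of_le hst with hc | hc
      · exact hc
      · rw [hc] at hvst; exact absurd hvst (lt_irrefl _)
    obtain ⟨y, hymem, hyΘ⟩ : ∃ y, y ∈ Ioo (v s) (v t) ∧ y ∉ Θ := by
      obtain ⟨y, hy⟩ := ((Set.Ioo_infinite hvst).diff hΘfin).nonempty
      exact ⟨y, hy.1, hy.2⟩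
    have hy01 : y ∈ Ioo (0:ℝ) 1 :=
      ⟨lt_of_le_of_lt (hv01 s).1 hymem.1, lt_of_lt_of_le hymem.2 (hv01 t).2⟩
    set A : Set ℝ := Icc s t ∩ {x | v x = y} with hAdef
    have hAcpt : IsCompact A :=
      isCompact_Icc.inter_right (isClosed_eq hvC continuous_const)
    have hAne : A.Nonempty := by
      obtain ⟨x, hx1, hx2⟩ := intermediate_value_Icc hstlt.le hvC.continuousOn
        ⟨hymem.1.le, hymem.2.le⟩
      exact ⟨x, hx1, hx2⟩
    obtain ⟨zs, ⟨⟨hzs1, hzs2⟩, hzs3⟩, hub⟩ := hAcpt.exists_isGreatest hAne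
    simp only [mem_setOf_eq] at hzs3
    have hzst : zs < t := by
      rcases lt_or_eq_of_le hzs2 with hc | hc
      · exact hc
      · exfalso; rw [hc] at hzs3; rw [hzs3] at hymem; exact absurd hymem.2 (lt_irrefl _)
    have hgt : ∀ x ∈ Ioc zs t, y < v x := by
      intro x hx
      have hxIcc : x ∈ Icc s t := ⟨le_trans hzs1 hx.1.le, hx.2⟩
      rcases lt_trichotomy (v x) y with hc | hc | hc
      · exfalso
        obtain ⟨x', hx'1, hx'2⟩ := intermediate_value_Icc hx.2 hvC.continuousOn
          ⟨hc.le, hymem.2.le⟩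
        have : x' ∈ A := ⟨⟨le_trans hxIcc.1 hx'1.1, hx'1.2⟩, hx'2⟩
        have := hub this
        have : x ≤ zs := le_trans hx'1.1 this
        exact absurd hx.1 (not_lt.2 this)
      · exfalso
        have : x ∈ A := ⟨hxIcc, hc⟩
        exact absurd hx.1 (not_lt.2 (hub this))
      · exact hc
    have hzsW : zs ∈ W := ⟨hzs3 ▸ hy01, hzs3 ▸ hyΘ⟩
    have hvdzs : HasDerivAt v (deriv v zs) zs := (hvda zs hzsW).hasDerivAt
    have hD : 0 ≤ deriv v zs := by
      have hmono : 𝓝[>] zs ≤ 𝓝[≠] zs :=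
        nhdsWithin_mono zs (fun x (hx : x ∈ Ioi zs) => (ne_of_gt hx : x ≠ zs))
      have htd := (hasDerivAt_iff_tendsto_slope.1 hvdzs).mono_left hmono
      have hev3 : ∀ᶠ x in 𝓝[>] zs, 0 ≤ slope v zs x := by
        have hmem3 : Ioc zs t ∈ 𝓝[>] zs := Ioc_mem_nhdsGT_of_mem ⟨le_refl zs, hzst⟩
        filter_upwards [eventually_of_mem hmem3 (fun x hx => hx)] with x hx
        rw [slope_def_field]
        have := hgt x hx
        apply div_nonneg <;> [rw [hzs3]; skip] <;> linarith [hx.1]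
      exact ge_of_tendsto htd hev3
    have := hsign4 zs hzsW (hΦlt zs hzsW)
    linarith
  -- Φ < 0 on all of I_v
  have hΦltS : ∀ z : ℝ, v z ∈ Set.Ioo (0:ℝ) 1 → Φ z < 0 := by
    intro z₀ hv0
    by_cases hθ : v z₀ ∉ Θ
    · exact hΦlt z₀ ⟨hv0, hθ⟩
    push_neg at hθ
    rcases lt_or_eq_of_le (hΦle z₀) with hlt | heq
    · exact hlt
    exfalso
    set θ : ℝ := v z₀ with hθdef
    have hθ01 : θ ∈ Ioo (0:ℝ) 1 := hv0
    set b : ℝ := (1+θ)/2 with hbdef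
    have hbθ : θ < b := by rw [hbdef]; linarith [hθ01.2]
    have hb1 : b < 1 := by rw [hbdef]; linarith [hθ01.2]
    have haθ : θ/2 < θ := by linarith [hθ01.1]
    obtain ⟨ε, hε, hhK⟩ := hhpos (θ/2) b (by linarith [hθ01.1]) (by linarith) hb1
    obtain ⟨⟨m, hm, hdK⟩, -⟩ := hdbounds (θ/2) b (by linarith [hθ01.1]) (by linarith) hb1
    obtain ⟨η, hη, hηb, hηΘ⟩ : ∃ η > 0, θ + η < b ∧ ∀ x ∈ Θ, x ∉ Ioo θ (θ + η) := by
      by_cases hT : (Θ ∩ Ioi θ).Nonempty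
      · obtain ⟨θ', hθ'mem, hθ'min⟩ := Set.exists_min_image _ id (hΘfin.inter_of_left _) hT
        have hθ'gt : θ < θ' := hθ'mem.2
        refine ⟨min ((θ' - θ)/2) ((b - θ)/2), lt_min (by linarith) (by linarith), ?_, ?_⟩
        · have := min_le_right ((θ' - θ)/2) ((b - θ)/2); linarith
        · intro x hx hmem
          have h1 := hθ'min x ⟨hx, hmem.1⟩
          have h2 := hmem.2
          have h3 := min_le_left ((θ' - θ)/2) ((b - θ)/2)
          simp only [id] at h1
          linarith
      · refine ⟨(b - θ)/2, by linarith, by linarith, ?_⟩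
        intro x hx hmem
        exact hT ⟨x, hx, hmem.1⟩
    set c₁ : ℝ := ε / Q with hc₁def
    have hc₁ : 0 < c₁ := div_pos hε hQpos
    have hsmall : 0 < m * (c₁/2) ^ (p-1) :=
      mul_pos hm (Real.rpow_pos_of_pos (by linarith) _)
    have hev1 : ∀ᶠ x in 𝓝 z₀, v x < θ + η :=
      hvC.continuousAt.eventually (eventually_lt_nhds (by linarith : θ < θ + η))
    have hev2 : ∀ᶠ x in 𝓝 z₀, |Φ x| < m * (c₁/2) ^ (p-1) := by
      have ht1 : Tendsto (fun x => |Φ x|) (𝓝 z₀) (𝓝 |Φ z₀|) := (hΦC.abs.continuousAt)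
      rw [heq, abs_zero] at ht1
      exact ht1.eventually_lt_const hsmall
    obtain ⟨r, hr, hball⟩ := Metric.eventually_nhds_iff.1 (hev1.and hev2)
    set δ : ℝ := r/2 with hδdef
    have hδ : 0 < δ := by rw [hδdef]; linarith
    have hprop : ∀ x ∈ Icc (z₀ - δ) z₀, v x < θ + η ∧ |Φ x| < m * (c₁/2) ^ (p-1) := by
      intro x hx
      apply hball
      rw [Real.dist_eq, abs_lt]
      have h1 := hx.1
      have h2 := hx.2
      rw [hδdef] at h1
      constructor <;> linarith
    set hmod : ℝ → ℝ := fun u => if u ∈ Ioo θ (θ+η) then h u else h θ with hmoddef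
    have hmodbd : ∀ u, |hmod u| ≤ Mh := by
      intro u
      simp only [hmoddef]
      split
      · next hu =>
          exact hMh _ ⟨(lt_trans hθ01.1 hu.1).le, by linarith [hu.2, hθ01.2]⟩
      · exact hMh _ ⟨hθ01.1.le, hθ01.2.le⟩
    have hmeasmod : Measurable hmod := by
      classical
      apply measurable_of_isOpen
      intro O hO
      have hUopen : IsOpen (Ioo θ (θ+η)) := isOpen_Ioo
      have hcont : ContinuousOn h (Ioo θ (θ+η)) := by
        intro u hu
        have hu01 : u ∈ Ioo (0:ℝ) 1 :=
          ⟨lt_trans hθ01.1 hu.1, by linarith [hu.2]⟩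
        exact (hhcont u hu01 (fun hc => hηΘ u hc hu)).continuousWithinAt
      have h1 : IsOpen (Ioo θ (θ+η) ∩ h ⁻¹' O) := hcont.isOpen_inter_preimage hUopen hO
      have hset : hmod ⁻¹' O =
          (Ioo θ (θ+η) ∩ h ⁻¹' O) ∪ ((Ioo θ (θ+η))ᶜ ∩ (if h θ ∈ O then univ else ∅)) := by
        ext u
        constructor
        · intro hu
          simp only [mem_preimage, hmoddef] at hu
          by_cases hmem : u ∈ Ioo θ (θ+η)
          · rw [if_pos hmem] at hu
            exact Or.inl ⟨hmem, hu⟩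
          · rw [if_neg hmem] at hu
            refine Or.inr ⟨hmem, ?_⟩
            rw [if_pos hu]; trivial
        · intro hu
          simp only [mem_preimage, hmoddef]
          rcases hu with ⟨hmem, hu⟩ | ⟨hmem, hu⟩
          · rw [if_pos hmem]; exact hu
          · rw [if_neg hmem]
            by_cases hθO : h θ ∈ O
            · exact hθO
            · rw [if_neg hθO] at hu; exact absurd hu (notMem_empty u)
      rw [hset]
      apply (h1.measurableSet).union
      apply (hUopen.measurableSet.compl).inter
      split <;> simp
    have hstep1 : ∀ x ∈ Icc (z₀ - δ) z₀, c₁ * (z₀ - x) ≤ v x - θ := by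
      intro x hx
      have hxz₀ : x ≤ z₀ := hx.2
      have hvrange : ∀ u ∈ Icc x z₀, θ ≤ v u ∧ v u < θ + η := by
        intro u hu
        exact ⟨hanti hu.2, (hprop u ⟨le_trans hx.1 hu.1, hu.2⟩).1⟩
      have hcongr : EqOn (fun u => h (v u)) (fun u => hmod (v u)) (uIcc x z₀) := by
        intro u hu
        rw [Set.uIcc_of_le hxz₀] at hu
        obtain ⟨h1, h2⟩ := hvrange u hu
        rcases lt_or_eq_of_le h1 with hc | hc
        · simp only [hmoddef]
          rw [if_pos ⟨hc, h2⟩]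
        · simp only [hmoddef]
          rw [if_neg (by rw [← hc]; exact fun hcc => absurd hcc.1 (lt_irrefl _)), ← hc]
      have hint : IntervalIntegrable (fun u => hmod (v u)) volume x z₀ := by
        apply IntervalIntegrable.mono_fun' (g := fun _ => Mh)
          (intervalIntegrable_const (c := Mh))
        · exact ((hmeasmod.comp hvC.measurable).aestronglyMeasurable)
        · exact Filter.Eventually.of_forall (fun u => by
            simp only [Real.norm_eq_abs]; exact hmodbd (v u))
      have hlow : ε * (z₀ - x) ≤ ∫ u in x..z₀, h (v u) := by
        rw [intervalIntegral.integral_congr hcongr]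
        have hconst : ∫ _u in x..z₀, (ε:ℝ) = (z₀ - x) * ε := by
          rw [intervalIntegral.integral_const, smul_eq_mul]
        calc ε * (z₀ - x) = (z₀ - x) * ε := mul_comm _ _
          _ = ∫ _u in x..z₀, (ε:ℝ) := hconst.symm
          _ ≤ ∫ u in x..z₀, hmod (v u) := by
              apply intervalIntegral.integral_mono_on hxz₀
                (intervalIntegrable_const (c := ε)) hint
              intro u hu
              obtain ⟨h1, h2⟩ := hvrange u hu
              have hvK : v u ∈ Icc (θ/2) b := ⟨by linarith [hθ01.1], by linarith⟩
              have heqm : hmod (v u) = h (v u) :=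
                (hcongr (by rw [Set.uIcc_of_le hxz₀]; exact hu)).symm
              rw [heqm]
              exact hhK _ hvK
      have hθvx : θ ≤ v x := (hvrange x ⟨le_refl _, hxz₀⟩).1
      have hqbd : |∫ u in (v x)..θ, q u| ≤ Q * (v x - θ) := by
        have h1 : ∀ u ∈ Set.uIoc (v x) θ, ‖q u‖ ≤ Q := by
          intro u hu
          rw [Set.mem_uIoc] at hu
          rw [Real.norm_eq_abs]
          apply hQ
          rcases hu with ⟨hu1, hu2⟩ | ⟨hu1, hu2⟩
          · exact ⟨le_trans (hv01 x).1 hu1.le, le_trans hu2 hθ01.2.le⟩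
          · exact ⟨le_trans hθ01.1.le hu1.le, le_trans hu2 (hv01 x).2⟩
        have h2 := intervalIntegral.norm_integral_le_of_norm_le_const h1
        rw [Real.norm_eq_abs] at h2
        calc |∫ u in (v x)..θ, q u| ≤ Q * |θ - v x| := h2
          _ = Q * (v x - θ) := by rw [abs_of_nonpos (by linarith)]; ring
      have hid' := hid x z₀
      rw [heq] at hid'
      have hΦx := hΦle x
      have hqlow := (abs_le.1 hqbd).1
      have hkey : ε * (z₀ - x) ≤ Q * (v x - θ) := by
        rw [← hθdef] at hid'
        linarith
      rw [hc₁def, div_mul_eq_mul_div, div_le_iff₀ hQpos]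
      linarith [hkey]
    have hWsub2 : Ioo (z₀ - δ) z₀ ⊆ W := by
      intro x hx
      have h1 := hstep1 x ⟨hx.1.le, hx.2.le⟩
      have h2 := (hprop x ⟨hx.1.le, hx.2.le⟩).1
      have hgt : θ < v x := by nlinarith [mul_pos hc₁ (sub_pos.2 hx.2), h1]
      refine ⟨⟨lt_trans hθ01.1 hgt, by linarith⟩, fun hc => hηΘ _ hc ⟨hgt, h2⟩⟩
    have hdbd : ∀ x ∈ Ioo (z₀ - δ) z₀, |deriv v x| ≤ c₁/2 := by
      intro x hx
      have hxW := hWsub2 hx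
      have habs' : |Φ x| = d (v x) * |deriv v x| ^ (p-1) := by
        rw [hphieq x hxW, mul_assoc, abs_mul, habs, abs_of_pos (hdpos _ hxW.1)]
      have hvK : v x ∈ Icc (θ/2) b := by
        have h1 := hstep1 x ⟨hx.1.le, hx.2.le⟩
        have h2 := (hprop x ⟨hx.1.le, hx.2.le⟩).1
        have hgt : θ < v x := by nlinarith [mul_pos hc₁ (sub_pos.2 hx.2), h1]
        exact ⟨by linarith [hθ01.1], by linarith⟩
      have hd1 : m * |deriv v x| ^ (p-1) ≤ |Φ x| := by
        rw [habs']
        exact mul_le_mul_of_nonneg_right (hdK _ hvK) (Real.rpow_nonneg (abs_nonneg _) _)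
      have hd2 := (hprop x ⟨hx.1.le, hx.2.le⟩).2
      by_contra hcc
      push_neg at hcc
      have h3 : (c₁/2) ^ (p-1) < |deriv v x| ^ (p-1) :=
        Real.rpow_lt_rpow (by linarith) hcc (by linarith)
      nlinarith [mul_lt_mul_of_pos_left h3 hm]
    obtain ⟨ξ, hξ, hslope⟩ := exists_deriv_eq_slope v (by linarith : z₀ - δ < z₀)
      hvC.continuousOn
      (fun x hx => ((hvda x (hWsub2 hx)).differentiableWithinAt))
    have he : z₀ - (z₀ - δ) = δ := by ring
    rw [he] at hslope
    have h1 := hstep1 (z₀ - δ) ⟨le_refl _, by linarith⟩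
    rw [he] at h1
    have h2 := hdbd ξ hξ
    have h3 : deriv v ξ ≤ -c₁ := by
      rw [hslope, div_le_iff₀ hδ, ← hθdef]
      linarith
    have h4 := (abs_le.1 h2).1
    linarith
  -- conclusions
  have hSopen : IsOpen {z : ℝ | v z ∈ Set.Ioo (0:ℝ) 1} :=
    isOpen_Ioo.preimage hvC
  have hstrict : StrictAntiOn v {z : ℝ | v z ∈ Set.Ioo (0:ℝ) 1} := by
    intro s hs t ht hst
    rcases lt_or_eq_of_le (hanti hst.le) with hlt | heq
    · exact hlt
    · exfalso
      refine hplateau s t (v s) hst hs (fun z hz => le_antisymm (hanti hz.1.le) ?_)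
      rw [← heq]; exact hanti hz.2.le
  refine ⟨hSopen, ?_, hstrict, ?_, hΦltS, ?_, ?_⟩
  · -- OrdConnected
    constructor
    intro s hs t ht z hz
    exact ⟨lt_of_lt_of_le ht.1 (hanti hz.2), lt_of_le_of_lt (hanti hz.1) hs.2⟩
  · -- deriv v < 0
    intro z hz hzΘ
    exact hsign4 z ⟨hz, hzΘ⟩ (hΦltS z hz)
  · -- ContDiffOn Φ
    have hdiff : DifferentiableOn ℝ Φ W := fun z hz =>
      ((hΦderiv z hz).differentiableAt).differentiableWithinAt
    have hderivC : ContinuousOn (deriv Φ) W := by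
      have heq' : EqOn (deriv Φ) (fun z => -(q (v z) * deriv v z) - h (v z)) W :=
        fun z hz => (hΦderiv z hz).deriv
      refine ContinuousOn.congr ?_ heq'
      have h1 : ContinuousOn (fun z => q (v z)) W := fun z hz =>
        ((hqcont _ hz.1 hz.2).comp hvC.continuousAt).continuousWithinAt
      have h2 : ContinuousOn (deriv v) W :=
        (hvCD.mono hWsub).continuousOn_deriv_of_isOpen hWopen le_rfl
      have h3 : ContinuousOn (fun z => h (v z)) W := fun z hz =>
        ((hhcont _ hz.1 hz.2).comp hvC.continuousAt).continuousWithinAt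
      exact ((h1.mul h2).neg).sub h3
    have hfin : ContDiffOn ℝ ((0:WithTop ℕ∞) + 1) Φ W := by
      rw [contDiffOn_succ_iff_deriv_of_isOpen hWopen]
      refine ⟨hdiff, by simp, ?_⟩
      rw [contDiffOn_zero]
      exact hderivC
    simpa using hfin
  · -- the equation
    intro z hz hzΘ
    have hd := hΦderiv z ⟨hz, hzΘ⟩
    rw [hd.deriv]
    simp only [hqdef]
    ring
end

section
/- Assume additionally that sup_{ξ∈(0,1)} d(ξ) < +∞. Let v : ℝ → [0,1] be continuous with v(z) → 1 as z → −∞ and v(z) → 0 as z → +∞, continuously differentiable on ℝ \ v⁻¹(Θ ∪ {0,1}), and let Φ : ℝ → ℝ be continuous satisfying conditions (i), (iii) and (iv) of the definition of solution. Then Φ(z) → 0 as z → ±∞, i.e. condition (ii) holds automatically, so v is a solution of problem (1.4) with speed c. -/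
open Filter Set MeasureTheory Topology

theorem statement1
    (p : ℝ) (hp : 1 < p)
    (Θ : Set ℝ) (hΘfin : Θ.Finite) (hΘsub : Θ ⊆ Set.Ioo 0 1)
    (f g h d : ℝ → ℝ)
    (hfb : ∃ M, ∀ x ∈ Set.Icc (0:ℝ) 1, |f x| ≤ M)
    (hgb : ∃ M, ∀ x ∈ Set.Icc (0:ℝ) 1, |g x| ≤ M)
    (hhb : ∃ M, ∀ x ∈ Set.Icc (0:ℝ) 1, |h x| ≤ M)
    (hfc : ∀ x ∈ Set.Icc (0:ℝ) 1 \ Θ, ContinuousWithinAt f (Set.Icc 0 1) x)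
    (hgc : ∀ x ∈ Set.Icc (0:ℝ) 1 \ Θ, ContinuousWithinAt g (Set.Icc 0 1) x)
    (hhc : ∀ x ∈ Set.Icc (0:ℝ) 1 \ Θ, ContinuousWithinAt h (Set.Icc 0 1) x)
    (hdc : ∀ x ∈ Set.Ioo (0:ℝ) 1 \ Θ, ContinuousWithinAt d (Set.Ioo 0 1) x)
    (hdbounds : ∀ a b : ℝ, 0 < a → a < b → b < 1 →
      (∃ m > 0, ∀ x ∈ Set.Icc a b, m ≤ d x) ∧ (∃ M, ∀ x ∈ Set.Icc a b, d x ≤ M))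
    (hh0 : h 0 = 0) (hh1 : h 1 = 0)
    (hhpos : ∀ a b : ℝ, 0 < a → a < b → b < 1 → ∃ m > 0, ∀ x ∈ Set.Icc a b, m ≤ h x)
    (κ : ℝ → ℝ) (hκdef : ∀ ξ, κ ξ = d ξ ^ ((1:ℝ)/(p-1)) * h ξ)
    (hκint : MeasureTheory.IntegrableOn κ (Set.Ioo 0 1))
    (hdbdd : ∃ M, ∀ x ∈ Set.Ioo (0:ℝ) 1, d x ≤ M)
    (c : ℝ) (v Φ : ℝ → ℝ)
    (hvc : Continuous v) (hv01 : ∀ z, v z ∈ Set.Icc (0:ℝ) 1)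
    (hvbot : Filter.Tendsto v Filter.atBot (nhds 1))
    (hvtop : Filter.Tendsto v Filter.atTop (nhds 0))
    (hvC1 : ContDiffOn ℝ 1 v {z : ℝ | v z ∉ Θ ∪ ({0, 1} : Set ℝ)})
    (hΦc : Continuous Φ)
    (hi : ∀ a b : ℝ, a < b → ContDiffOn ℝ 1 v (Set.Ioo a b) →
      (∀ z ∈ Set.Ioo a b, v z ∈ Set.Ioo (0:ℝ) 1) →
      ∀ z ∈ Set.Ioo a b, Φ z = d (v z) * |deriv v z| ^ (p - 2) * deriv v z)
    (hiii : ∀ z, (v z = 0 ∨ v z = 1) → Φ z = 0)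
    (hiv : ∀ z₁ z₂ : ℝ,
      Φ z₂ - Φ z₁ + (∫ ξ in (v z₁)..(v z₂), (c * g ξ - f ξ)) + (∫ z in z₁..z₂, h (v z)) = 0) :
    Filter.Tendsto Φ Filter.atBot (nhds 0) ∧
    Filter.Tendsto Φ Filter.atTop (nhds 0) ∧
    IsTWSol p Θ f g h d c v Φ := by
  classical
  -- Basic boundedness constants
  obtain ⟨Mf, hMf⟩ := hfb
  obtain ⟨Mg, hMg⟩ := hgb
  obtain ⟨Md, hMd⟩ := hdbdd
  have hMg0 : 0 ≤ Mg := le_trans (abs_nonneg _) (hMg 0 (by norm_num))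
  have hMf0 : 0 ≤ Mf := le_trans (abs_nonneg _) (hMf 0 (by norm_num))
  obtain ⟨M', hM'0, hM'bd⟩ : ∃ M', 0 ≤ M' ∧ ∀ x ∈ Set.Icc (0:ℝ) 1, |c * g x - f x| ≤ M' := by
    refine ⟨|c| * Mg + Mf, ?_, ?_⟩
    · have : 0 ≤ |c| * Mg := mul_nonneg (abs_nonneg c) hMg0
      linarith
    · intro x hx
      have h1 : |c * g x - f x| ≤ |c * g x| + |f x| := abs_sub _ _
      have h2 : |c * g x| = |c| * |g x| := abs_mul _ _
      have hg := hMg x hx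
      have hf := hMf x hx
      have h3 : |c| * |g x| ≤ |c| * Mg := mul_le_mul_of_nonneg_left hg (abs_nonneg c)
      linarith
  have hMd_pos : 0 < Md := by
    obtain ⟨m0, hm0, hm0le⟩ := (hdbounds (1/4) (3/4) (by norm_num) (by norm_num) (by norm_num)).1
    have h1 := hm0le (1/2) (by norm_num)
    have h2 := hMd (1/2) (by norm_num)
    linarith
  have hp1 : (0:ℝ) < p - 1 := by linarith
  -- h is nonnegative on [0,1]
  have h_nonneg : ∀ x ∈ Set.Icc (0:ℝ) 1, 0 ≤ h x := by
    intro x hx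
    rcases eq_or_lt_of_le hx.1 with h0 | h0
    · rw [← h0, hh0]
    rcases eq_or_lt_of_le hx.2 with h1 | h1
    · rw [h1, hh1]
    obtain ⟨m, hm, hmle⟩ := hhpos x ((x+1)/2) h0 (by linarith) (by linarith)
    have := hmle x ⟨le_rfl, by linarith⟩
    linarith
  -- bound on the first integral
  have hIbound : ∀ u w : ℝ, u ∈ Set.Icc (0:ℝ) 1 → w ∈ Set.Icc (0:ℝ) 1 →
      |∫ ξ in u..w, (c * g ξ - f ξ)| ≤ M' * |w - u| := by
    intro u w hu hw
    have hsub : Set.uIoc u w ⊆ Set.Icc (0:ℝ) 1 :=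
      Set.uIoc_subset_uIcc.trans (Set.uIcc_subset_Icc hu hw)
    have hbd : ∀ x ∈ Set.uIoc u w, ‖c * g x - f x‖ ≤ M' := by
      intro x hx
      rw [Real.norm_eq_abs]
      exact hM'bd x (hsub hx)
    have := intervalIntegral.norm_integral_le_of_norm_le_const
      (a := u) (b := w) (C := M') (f := fun ξ => c * g ξ - f ξ) hbd
    simpa [Real.norm_eq_abs] using this
  -- nonnegativity of the second integral
  have hJnonneg : ∀ z₁ z₂ : ℝ, z₁ ≤ z₂ → 0 ≤ ∫ z in z₁..z₂, h (v z) :=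
    fun z₁ z₂ hle => intervalIntegral.integral_nonneg hle (fun u _ => h_nonneg _ (hv01 u))
  -- almost-monotonicity of Φ
  have hstep : ∀ z₁ z₂ : ℝ, z₁ ≤ z₂ → Φ z₂ ≤ Φ z₁ + M' * |v z₂ - v z₁| := by
    intro z₁ z₂ hle
    have hIV := hiv z₁ z₂
    have hJ := hJnonneg z₁ z₂ hle
    have hI := hIbound (v z₁) (v z₂) (hv01 _) (hv01 _)
    have habs : -(M' * |v z₂ - v z₁|) ≤ ∫ ξ in (v z₁)..(v z₂), (c * g ξ - f ξ) := by
      have := neg_abs_le (∫ ξ in (v z₁)..(v z₂), (c * g ξ - f ξ))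
      linarith
    linarith
  -- the C¹ set is open
  have hΘ01closed : IsClosed (Θ ∪ ({0,1} : Set ℝ)) :=
    hΘfin.isClosed.union (Set.toFinite ({0,1} : Set ℝ)).isClosed
  have hU_open : IsOpen {z : ℝ | v z ∉ Θ ∪ ({0,1} : Set ℝ)} := by
    have heq : {z : ℝ | v z ∉ Θ ∪ ({0,1} : Set ℝ)} = v ⁻¹' (Θ ∪ ({0,1} : Set ℝ))ᶜ := rfl
    rw [heq]
    exact hΘ01closed.isOpen_compl.preimage hvc
  -- from "not in Θ ∪ {0,1}" conclude v ∈ (0,1)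
  have hIoo : ∀ w : ℝ, v w ∉ Θ ∪ ({0,1} : Set ℝ) → v w ∈ Set.Ioo (0:ℝ) 1 := by
    intro w hmem
    simp only [Set.mem_union, Set.mem_insert_iff, Set.mem_singleton_iff] at hmem
    push_neg at hmem
    exact ⟨lt_of_le_of_ne (hv01 w).1 (Ne.symm hmem.2.1), lt_of_le_of_ne (hv01 w).2 hmem.2.2⟩
  -- pointwise formula from (i)
  have hformula : ∀ a b : ℝ, (∀ w ∈ Set.Ioo a b, v w ∉ Θ ∪ ({0,1} : Set ℝ)) →
      ∀ z ∈ Set.Ioo a b, Φ z = d (v z) * |deriv v z| ^ (p - 2) * deriv v z := by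
    intro a b hw z hz
    have hab : a < b := lt_trans hz.1 hz.2
    exact hi a b hab (hvC1.mono hw) (fun w hww => hIoo w (hw w hww)) z hz
  -- key pointwise derivative bound
  have hkey : ∀ δ : ℝ, 0 < δ → ∀ z : ℝ, δ ≤ |Φ z| →
      Φ z = d (v z) * |deriv v z| ^ (p - 2) * deriv v z → v z ∈ Set.Ioo (0:ℝ) 1 →
      (δ / Md) ^ ((1:ℝ)/(p-1)) ≤ |deriv v z| ∧
      (0 < Φ z → 0 < deriv v z) ∧ (Φ z < 0 → deriv v z < 0) := by
    intro δ hδ z hzδ hform hv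
    set D := deriv v z with hD
    have hD0 : D ≠ 0 := by
      intro h0
      rw [h0, mul_zero] at hform
      rw [hform, abs_zero] at hzδ
      linarith
    have hDabs : 0 < |D| := abs_pos.2 hD0
    have hdpos : 0 < d (v z) := by
      obtain ⟨m1, hm1, hm1le⟩ :=
        (hdbounds (v z) ((v z + 1)/2) hv.1 (by linarith [hv.2]) (by linarith [hv.2])).1
      exact lt_of_lt_of_le hm1 (hm1le (v z) ⟨le_rfl, by linarith [hv.2]⟩)
    have hB : (0:ℝ) < |D| ^ (p - 2) := Real.rpow_pos_of_pos hDabs _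
    have habsΦ : |Φ z| = d (v z) * |D| ^ (p - 1) := by
      have h1 : |Φ z| = d (v z) * |D| ^ (p - 2) * |D| := by
        rw [hform, abs_mul, abs_mul, abs_of_pos hdpos, abs_of_pos hB]
      have h2 : |D| ^ (p - 2) * |D| = |D| ^ (p - 1) := by
        rw [← Real.rpow_add_one (ne_of_gt hDabs) (p - 2)]
        congr 1
        ring
      rw [h1, mul_assoc, h2]
    have hDM : δ / Md ≤ |D| ^ (p - 1) := by
      have hle : δ ≤ Md * |D| ^ (p - 1) := by
        have hmm := mul_le_mul_of_nonneg_right (hMd (v z) hv)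
          (le_of_lt (Real.rpow_pos_of_pos hDabs (p-1)))
        rw [habsΦ] at hzδ
        linarith
      rw [div_le_iff₀ hMd_pos]
      linarith [mul_comm Md (|D| ^ (p - 1))]
    have hmain : (δ / Md) ^ ((1:ℝ)/(p-1)) ≤ |D| := by
      have hmono := Real.rpow_le_rpow (le_of_lt (div_pos hδ hMd_pos)) hDM
        (le_of_lt (by positivity : (0:ℝ) < 1/(p-1)))
      have hEq : (|D| ^ (p-1)) ^ ((1:ℝ)/(p-1)) = |D| := by
        rw [← Real.rpow_mul (abs_nonneg D), mul_one_div, div_self (ne_of_gt hp1), Real.rpow_one]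
      rwa [hEq] at hmono
    refine ⟨hmain, ?_, ?_⟩
    · intro hpos
      by_contra hle
      push_neg at hle
      have hΦnp : Φ z ≤ 0 := by
        rw [hform]
        exact mul_nonpos_of_nonneg_of_nonpos (le_of_lt (mul_pos hdpos hB)) hle
      linarith
    · intro hneg
      by_contra hle
      push_neg at hle
      have hΦnn : 0 ≤ Φ z := by
        rw [hform]
        exact mul_nonneg (le_of_lt (mul_pos hdpos hB)) hle
      linarith
  -- eventually not in Θ
  have hv_notΘ_top : ∀ᶠ z in Filter.atTop, v z ∉ Θ := by
    have h0Θ : (0:ℝ) ∈ Θᶜ := fun hm => lt_irrefl 0 (hΘsub hm).1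
    exact hvtop.eventually_mem (hΘfin.isClosed.isOpen_compl.mem_nhds h0Θ)
  have hv_notΘ_bot : ∀ᶠ z in Filter.atBot, v z ∉ Θ := by
    have h1Θ : (1:ℝ) ∈ Θᶜ := fun hm => lt_irrefl 1 (hΘsub hm).2
    exact hvbot.eventually_mem (hΘfin.isClosed.isOpen_compl.mem_nhds h1Θ)
  -- frequently small at +∞
  have hfreq_top : ∀ δ : ℝ, 0 < δ → ∀ Z₀ : ℝ, ∃ z, Z₀ ≤ z ∧ |Φ z| < δ := by
    intro δ hδ Z₀
    by_contra hcon
    push_neg at hcon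
    obtain ⟨ZΘ, hZΘ⟩ := Filter.eventually_atTop.mp hv_notΘ_top
    set Z := max Z₀ ZΘ with hZdef
    have hZle : ∀ w : ℝ, Z < w → Z₀ ≤ w := fun w hw => le_trans (le_max_left _ _) (le_of_lt hw)
    have hnotin : ∀ w ∈ Set.Ioi Z, v w ∉ Θ ∪ ({0,1} : Set ℝ) := by
      intro w hw
      have hδw := hcon w (hZle w hw)
      have hΦw0 : Φ w ≠ 0 := by
        intro h0; rw [h0, abs_zero] at hδw; linarith
      have h0 : v w ≠ 0 := fun hh => hΦw0 (hiii w (Or.inl hh))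
      have h1 : v w ≠ 1 := fun hh => hΦw0 (hiii w (Or.inr hh))
      have hΘw : v w ∉ Θ := hZΘ w (le_trans (le_max_right _ _) (le_of_lt hw))
      simp only [Set.mem_union, Set.mem_insert_iff, Set.mem_singleton_iff]
      push_neg
      exact ⟨hΘw, h0, h1⟩
    have hform : ∀ z ∈ Set.Ioi Z, Φ z = d (v z) * |deriv v z| ^ (p-2) * deriv v z := by
      intro z hz
      exact hformula Z (z+1) (fun w hw => hnotin w (Set.mem_Ioi.2 hw.1)) z
        ⟨Set.mem_Ioi.1 hz, lt_add_one z⟩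
    set m : ℝ := (δ / Md) ^ ((1:ℝ)/(p-1)) with hmdef
    have hm_pos : 0 < m := Real.rpow_pos_of_pos (div_pos hδ hMd_pos) _
    have hm0 : m ≠ 0 := ne_of_gt hm_pos
    have hKey : ∀ z ∈ Set.Ioi Z, m ≤ |deriv v z| ∧
        (0 < Φ z → 0 < deriv v z) ∧ (Φ z < 0 → deriv v z < 0) := by
      intro z hz
      exact hkey δ hδ z (hcon z (hZle z hz)) (hform z hz) (hIoo z (hnotin z hz))
    have hdiff : DifferentiableOn ℝ v (interior (Set.Ici (Z+1))) := by
      rw [interior_Ici]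
      intro x hx
      have hxZ : x ∈ Set.Ioi Z := lt_trans (lt_add_one Z) hx
      exact ((hvC1.contDiffAt (hU_open.mem_nhds (hnotin x hxZ))).differentiableAt
        one_ne_zero).differentiableWithinAt
    have hne : ∀ z ∈ Set.Ioi Z, Φ z ≠ 0 := by
      intro z hz h0
      have := hcon z (hZle z hz)
      rw [h0, abs_zero] at this; linarith
    have hZ1mem : (Z:ℝ) + 1 ∈ Set.Ioi Z := Set.mem_Ioi.2 (lt_add_one Z)
    have hsign : (∀ z ∈ Set.Ioi Z, 0 < Φ z) ∨ (∀ z ∈ Set.Ioi Z, Φ z < 0) := by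
      rcases lt_or_gt_of_ne (hne _ hZ1mem) with hneg | hpos
      · right
        intro z hz
        by_contra hle
        push_neg at hle
        have hzpos : 0 < Φ z := lt_of_le_of_ne hle (Ne.symm (hne z hz))
        have h0mem : (0:ℝ) ∈ Set.uIcc (Φ (Z+1)) (Φ z) :=
          Set.mem_uIcc.2 (Or.inl ⟨le_of_lt hneg, le_of_lt hzpos⟩)
        obtain ⟨w, hw, hΦw⟩ := intermediate_value_uIcc hΦc.continuousOn h0mem
        have hwZ : Z < w := by
          rcases Set.mem_uIcc.1 hw with ⟨ha, _⟩ | ⟨ha, _⟩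
          · linarith
          · have := Set.mem_Ioi.1 hz; linarith
        exact hne w (Set.mem_Ioi.2 hwZ) hΦw
      · left
        intro z hz
        by_contra hle
        push_neg at hle
        have hzneg : Φ z < 0 := lt_of_le_of_ne hle (hne z hz)
        have h0mem : (0:ℝ) ∈ Set.uIcc (Φ (Z+1)) (Φ z) :=
          Set.mem_uIcc.2 (Or.inr ⟨le_of_lt hzneg, le_of_lt hpos⟩)
        obtain ⟨w, hw, hΦw⟩ := intermediate_value_uIcc hΦc.continuousOn h0mem
        have hwZ : Z < w := by
          rcases Set.mem_uIcc.1 hw with ⟨ha, _⟩ | ⟨ha, _⟩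
          · linarith
          · have := Set.mem_Ioi.1 hz; linarith
        exact hne w (Set.mem_Ioi.2 hwZ) hΦw
    have hymem : Z + 1 + 2/m ∈ Set.Ici (Z+1) := by
      have : 0 < 2/m := by positivity
      simp only [Set.mem_Ici]; linarith
    have hxy : Z + 1 ≤ Z + 1 + 2/m := by
      have : 0 < 2/m := by positivity
      linarith
    have h2 : m * ((Z + 1 + 2/m) - (Z + 1)) = 2 := by
      field_simp
      ring
    rcases hsign with hposAll | hnegAll
    · have hbound : ∀ x ∈ interior (Set.Ici (Z+1)), m ≤ deriv v x := by
        rw [interior_Ici]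
        intro x hx
        have hxZ : x ∈ Set.Ioi Z := lt_trans (lt_add_one Z) hx
        obtain ⟨habs, hsg, -⟩ := hKey x hxZ
        have hd := hsg (hposAll x hxZ)
        rwa [abs_of_pos hd] at habs
      have hmvt := (convex_Ici (Z+1)).mul_sub_le_image_sub_of_le_deriv hvc.continuousOn hdiff
        hbound (Z+1) Set.self_mem_Ici (Z+1+2/m) hymem hxy
      rw [h2] at hmvt
      have hv1 := (hv01 (Z+1+2/m)).2
      have hv0 := (hv01 (Z+1)).1
      linarith
    · have hbound : ∀ x ∈ interior (Set.Ici (Z+1)), deriv v x ≤ -m := by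
        rw [interior_Ici]
        intro x hx
        have hxZ : x ∈ Set.Ioi Z := lt_trans (lt_add_one Z) hx
        obtain ⟨habs, -, hsg⟩ := hKey x hxZ
        have hd := hsg (hnegAll x hxZ)
        rw [abs_of_neg hd] at habs
        linarith
      have hmvt := (convex_Ici (Z+1)).image_sub_le_mul_sub_of_deriv_le hvc.continuousOn hdiff
        hbound (Z+1) Set.self_mem_Ici (Z+1+2/m) hymem hxy
      rw [show -m * ((Z+1+2/m) - (Z+1)) = -(m * ((Z+1+2/m) - (Z+1))) by ring, h2] at hmvt
      have hv1 := (hv01 (Z+1)).2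
      have hv0 := (hv01 (Z+1+2/m)).1
      linarith
  -- frequently small at -∞
  have hfreq_bot : ∀ δ : ℝ, 0 < δ → ∀ Z₀ : ℝ, ∃ z, z ≤ Z₀ ∧ |Φ z| < δ := by
    intro δ hδ Z₀
    by_contra hcon
    push_neg at hcon
    obtain ⟨ZΘ, hZΘ⟩ := Filter.eventually_atBot.mp hv_notΘ_bot
    set Z := min Z₀ ZΘ with hZdef
    have hZle : ∀ w : ℝ, w < Z → w ≤ Z₀ := fun w hw => le_trans (le_of_lt hw) (min_le_left _ _)
    have hnotin : ∀ w ∈ Set.Iio Z, v w ∉ Θ ∪ ({0,1} : Set ℝ) := by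
      intro w hw
      have hδw := hcon w (hZle w hw)
      have hΦw0 : Φ w ≠ 0 := by
        intro h0; rw [h0, abs_zero] at hδw; linarith
      have h0 : v w ≠ 0 := fun hh => hΦw0 (hiii w (Or.inl hh))
      have h1 : v w ≠ 1 := fun hh => hΦw0 (hiii w (Or.inr hh))
      have hΘw : v w ∉ Θ := hZΘ w (le_trans (le_of_lt hw) (min_le_right _ _))
      simp only [Set.mem_union, Set.mem_insert_iff, Set.mem_singleton_iff]
      push_neg
      exact ⟨hΘw, h0, h1⟩
    have hform : ∀ z ∈ Set.Iio Z, Φ z = d (v z) * |deriv v z| ^ (p-2) * deriv v z := by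
      intro z hz
      exact hformula (z-1) Z (fun w hw => hnotin w (Set.mem_Iio.2 hw.2)) z
        ⟨by linarith, Set.mem_Iio.1 hz⟩
    set m : ℝ := (δ / Md) ^ ((1:ℝ)/(p-1)) with hmdef
    have hm_pos : 0 < m := Real.rpow_pos_of_pos (div_pos hδ hMd_pos) _
    have hm0 : m ≠ 0 := ne_of_gt hm_pos
    have hKey : ∀ z ∈ Set.Iio Z, m ≤ |deriv v z| ∧
        (0 < Φ z → 0 < deriv v z) ∧ (Φ z < 0 → deriv v z < 0) := by
      intro z hz
      exact hkey δ hδ z (hcon z (hZle z hz)) (hform z hz) (hIoo z (hnotin z hz))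
    have hdiff : DifferentiableOn ℝ v (interior (Set.Iic (Z-1))) := by
      rw [interior_Iic]
      intro x hx
      have hxZ : x ∈ Set.Iio Z := Set.mem_Iio.2 (lt_trans (Set.mem_Iio.1 hx) (by linarith))
      exact ((hvC1.contDiffAt (hU_open.mem_nhds (hnotin x hxZ))).differentiableAt
        one_ne_zero).differentiableWithinAt
    have hne : ∀ z ∈ Set.Iio Z, Φ z ≠ 0 := by
      intro z hz h0
      have := hcon z (hZle z hz)
      rw [h0, abs_zero] at this; linarith
    have hZ1mem : (Z:ℝ) - 1 ∈ Set.Iio Z := Set.mem_Iio.2 (by linarith)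
    have hsign : (∀ z ∈ Set.Iio Z, 0 < Φ z) ∨ (∀ z ∈ Set.Iio Z, Φ z < 0) := by
      rcases lt_or_gt_of_ne (hne _ hZ1mem) with hneg | hpos
      · right
        intro z hz
        by_contra hle
        push_neg at hle
        have hzpos : 0 < Φ z := lt_of_le_of_ne hle (Ne.symm (hne z hz))
        have h0mem : (0:ℝ) ∈ Set.uIcc (Φ (Z-1)) (Φ z) :=
          Set.mem_uIcc.2 (Or.inl ⟨le_of_lt hneg, le_of_lt hzpos⟩)
        obtain ⟨w, hw, hΦw⟩ := intermediate_value_uIcc hΦc.continuousOn h0mem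
        have hwZ : w < Z := by
          rcases Set.mem_uIcc.1 hw with ⟨_, hb⟩ | ⟨_, hb⟩
          · have := Set.mem_Iio.1 hz; linarith
          · linarith
        exact hne w (Set.mem_Iio.2 hwZ) hΦw
      · left
        intro z hz
        by_contra hle
        push_neg at hle
        have hzneg : Φ z < 0 := lt_of_le_of_ne hle (hne z hz)
        have h0mem : (0:ℝ) ∈ Set.uIcc (Φ (Z-1)) (Φ z) :=
          Set.mem_uIcc.2 (Or.inr ⟨le_of_lt hzneg, le_of_lt hpos⟩)
        obtain ⟨w, hw, hΦw⟩ := intermediate_value_uIcc hΦc.continuousOn h0mem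
        have hwZ : w < Z := by
          rcases Set.mem_uIcc.1 hw with ⟨_, hb⟩ | ⟨_, hb⟩
          · have := Set.mem_Iio.1 hz; linarith
          · linarith
        exact hne w (Set.mem_Iio.2 hwZ) hΦw
    have hxmem : Z - 1 - 2/m ∈ Set.Iic (Z-1) := by
      have : 0 < 2/m := by positivity
      simp only [Set.mem_Iic]; linarith
    have hxy : Z - 1 - 2/m ≤ Z - 1 := by
      have : 0 < 2/m := by positivity
      linarith
    have h2 : m * ((Z - 1) - (Z - 1 - 2/m)) = 2 := by
      field_simp
      ring
    rcases hsign with hposAll | hnegAll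
    · have hbound : ∀ x ∈ interior (Set.Iic (Z-1)), m ≤ deriv v x := by
        rw [interior_Iic]
        intro x hx
        have hxZ : x ∈ Set.Iio Z := Set.mem_Iio.2 (lt_trans (Set.mem_Iio.1 hx) (by linarith))
        obtain ⟨habs, hsg, -⟩ := hKey x hxZ
        have hd := hsg (hposAll x hxZ)
        rwa [abs_of_pos hd] at habs
      have hmvt := (convex_Iic (Z-1)).mul_sub_le_image_sub_of_le_deriv hvc.continuousOn hdiff
        hbound (Z-1-2/m) hxmem (Z-1) Set.self_mem_Iic hxy
      rw [h2] at hmvt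
      have hv1 := (hv01 (Z-1)).2
      have hv0 := (hv01 (Z-1-2/m)).1
      linarith
    · have hbound : ∀ x ∈ interior (Set.Iic (Z-1)), deriv v x ≤ -m := by
        rw [interior_Iic]
        intro x hx
        have hxZ : x ∈ Set.Iio Z := Set.mem_Iio.2 (lt_trans (Set.mem_Iio.1 hx) (by linarith))
        obtain ⟨habs, -, hsg⟩ := hKey x hxZ
        have hd := hsg (hnegAll x hxZ)
        rw [abs_of_neg hd] at habs
        linarith
      have hmvt := (convex_Iic (Z-1)).image_sub_le_mul_sub_of_deriv_le hvc.continuousOn hdiff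
        hbound (Z-1-2/m) hxmem (Z-1) Set.self_mem_Iic hxy
      rw [show -m * ((Z-1) - (Z-1-2/m)) = -(m * ((Z-1) - (Z-1-2/m))) by ring, h2] at hmvt
      have hv1 := (hv01 (Z-1-2/m)).2
      have hv0 := (hv01 (Z-1)).1
      linarith
  -- eventual smallness of v near the limits
  have hv_top_small : ∀ r : ℝ, 0 < r → ∃ Z, ∀ z, Z ≤ z → |v z| ≤ r := by
    intro r hr
    have hev := hvtop.eventually_mem (Metric.closedBall_mem_nhds (0:ℝ) hr)
    rw [Filter.eventually_atTop] at hev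
    obtain ⟨Z, hZ⟩ := hev
    exact ⟨Z, fun z hz => by simpa [Metric.mem_closedBall, Real.dist_eq] using hZ z hz⟩
  have hv_bot_small : ∀ r : ℝ, 0 < r → ∃ Z, ∀ z, z ≤ Z → |v z - 1| ≤ r := by
    intro r hr
    have hev := hvbot.eventually_mem (Metric.closedBall_mem_nhds (1:ℝ) hr)
    rw [Filter.eventually_atBot] at hev
    obtain ⟨Z, hZ⟩ := hev
    exact ⟨Z, fun z hz => by simpa [Metric.mem_closedBall, Real.dist_eq] using hZ z hz⟩
  have hM1 : (0:ℝ) < M' + 1 := by linarith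
  have hdivkey : ∀ a ε' : ℝ, a ≠ 0 → a * (ε' / (2 * a)) = ε' / 2 := by
    intro a ε' ha
    field_simp
  have hq : ∀ ε' a : ℝ, a ≠ 0 → ε' / (4 * a) + ε' / (4 * a) = ε' / (2 * a) := by
    intro ε' a ha
    field_simp
    ring
  -- the limit at +∞
  have htop : Filter.Tendsto Φ Filter.atTop (nhds 0) := by
    rw [NormedAddCommGroup.tendsto_nhds_zero]
    intro ε hε
    obtain ⟨Z₁, hZ₁⟩ := hv_top_small (ε / (4 * (M' + 1))) (by positivity)
    have hstep' : ∀ z₁ z₂ : ℝ, Z₁ ≤ z₁ → z₁ ≤ z₂ → Φ z₂ ≤ Φ z₁ + ε/2 := by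
      intro z₁ z₂ h1 h2
      have hv1 := hZ₁ z₁ h1
      have hv2 := hZ₁ z₂ (le_trans h1 h2)
      have habs : |v z₂ - v z₁| ≤ ε / (2 * (M' + 1)) := by
        calc |v z₂ - v z₁| ≤ |v z₂| + |v z₁| := abs_sub _ _
        _ ≤ ε / (4 * (M' + 1)) + ε / (4 * (M' + 1)) := add_le_add hv2 hv1
        _ = ε / (2 * (M' + 1)) := hq ε (M'+1) (ne_of_gt hM1)
      have hM : M' * |v z₂ - v z₁| ≤ ε/2 := by
        calc M' * |v z₂ - v z₁| ≤ M' * (ε / (2 * (M' + 1))) :=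
              mul_le_mul_of_nonneg_left habs hM'0
        _ ≤ (M'+1) * (ε / (2 * (M' + 1))) :=
              mul_le_mul_of_nonneg_right (by linarith) (by positivity)
        _ = ε/2 := hdivkey (M'+1) ε (ne_of_gt hM1)
      have := hstep z₁ z₂ h2
      linarith
    obtain ⟨z₁, hz₁Z, hz₁⟩ := hfreq_top (ε/2) (half_pos hε) Z₁
    rw [Filter.eventually_atTop]
    refine ⟨z₁, fun z hz => ?_⟩
    rw [Real.norm_eq_abs, abs_lt]
    constructor
    · by_contra hle
      push_neg at hle
      obtain ⟨w, hwz, hw⟩ := hfreq_top (ε/2) (half_pos hε) z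
      have hΦw : Φ w ≤ Φ z + ε/2 := hstep' z w (le_trans hz₁Z hz) hwz
      have hwneg : Φ w ≤ -(ε/2) := by linarith
      have := neg_lt_of_abs_lt hw
      linarith
    · have hs := hstep' z₁ z hz₁Z hz
      have : Φ z₁ < ε/2 := lt_of_abs_lt hz₁
      linarith
  -- the limit at -∞
  have hbot : Filter.Tendsto Φ Filter.atBot (nhds 0) := by
    rw [NormedAddCommGroup.tendsto_nhds_zero]
    intro ε hε
    obtain ⟨Z₁, hZ₁⟩ := hv_bot_small (ε / (4 * (M' + 1))) (by positivity)
    have hstep' : ∀ z₁ z₂ : ℝ, z₁ ≤ z₂ → z₂ ≤ Z₁ → Φ z₂ ≤ Φ z₁ + ε/2 := by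
      intro z₁ z₂ h2 h1
      have hv1 := hZ₁ z₁ (le_trans h2 h1)
      have hv2 := hZ₁ z₂ h1
      have habs : |v z₂ - v z₁| ≤ ε / (2 * (M' + 1)) := by
        calc |v z₂ - v z₁| = |(v z₂ - 1) - (v z₁ - 1)| := by ring_nf
        _ ≤ |v z₂ - 1| + |v z₁ - 1| := abs_sub _ _
        _ ≤ ε / (4 * (M' + 1)) + ε / (4 * (M' + 1)) := add_le_add hv2 hv1
        _ = ε / (2 * (M' + 1)) := hq ε (M'+1) (ne_of_gt hM1)
      have hM : M' * |v z₂ - v z₁| ≤ ε/2 := by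
        calc M' * |v z₂ - v z₁| ≤ M' * (ε / (2 * (M' + 1))) :=
              mul_le_mul_of_nonneg_left habs hM'0
        _ ≤ (M'+1) * (ε / (2 * (M' + 1))) :=
              mul_le_mul_of_nonneg_right (by linarith) (by positivity)
        _ = ε/2 := hdivkey (M'+1) ε (ne_of_gt hM1)
      have := hstep z₁ z₂ h2
      linarith
    obtain ⟨z₁, hz₁Z, hz₁⟩ := hfreq_bot (ε/2) (half_pos hε) Z₁
    rw [Filter.eventually_atBot]
    refine ⟨z₁, fun z hz => ?_⟩
    rw [Real.norm_eq_abs, abs_lt]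
    constructor
    · have hs := hstep' z z₁ hz hz₁Z
      have := neg_lt_of_abs_lt hz₁
      linarith
    · by_contra hle
      push_neg at hle
      obtain ⟨w, hwz, hw⟩ := hfreq_bot (ε/2) (half_pos hε) z
      have hΦz : Φ z ≤ Φ w + ε/2 := hstep' w z hwz (le_trans hz hz₁Z)
      have hwpos : ε/2 ≤ Φ w := by linarith
      have := lt_of_abs_lt hw
      linarith
  refine ⟨hbot, htop, ?_⟩
  exact ⟨hvc, hv01, hvbot, hvtop, hvC1, hΦc, hi, hbot, htop, hiii, hiv⟩
end

section
/- If the first-order problem (3.1) with speed c admits a solution, then λ := ℓ_p^{1/(p−1)} < +∞, where ℓ_p := liminf_{ξ→0⁺} κ(ξ)^{p−1}/ξ; moreover, setting η(t) := t^{p/(p−1)} − (c g(0) − f(0)) t^{1/(p−1)} + λ for t ≥ 0, one has min_{t≥0} η(t) ≤ 0. -/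
open Filter Set MeasureTheory Topology


/-- A solution of the first-order singular problem (3.1) with speed `c`. -/
def IsFOSol (p : ℝ) (Θ : Set ℝ) (f g κ : ℝ → ℝ) (c : ℝ) (y : ℝ → ℝ) : Prop :=
  ContinuousOn y (Set.Ioo 0 1) ∧
  ContDiffOn ℝ 1 y (Set.Ioo 0 1 \ Θ) ∧
  (∀ ξ ∈ Set.Ioo (0:ℝ) 1, 0 < y ξ) ∧
  Filter.Tendsto y (nhdsWithin 0 (Set.Ioi 0)) (nhds 0) ∧
  Filter.Tendsto y (nhdsWithin 1 (Set.Iio 1)) (nhds 0) ∧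
  (∀ ξ ∈ Set.Ioo (0:ℝ) 1 \ Θ,
    HasDerivAt y (c * g ξ - f ξ - κ ξ / (y ξ) ^ ((1:ℝ)/(p-1))) ξ)

lemma key_lemma {F y : ℝ → ℝ} {δ M : ℝ}
    (hFc : ∀ x ∈ Set.Ioo (0:ℝ) δ, ContinuousAt F x)
    (hyd : ∀ x ∈ Set.Ioo (0:ℝ) δ, HasDerivAt y (F x) x)
    (hF : ∀ x ∈ Set.Ioo (0:ℝ) δ, F x ≤ M)
    (hy0 : Filter.Tendsto y (nhdsWithin 0 (Set.Ioi 0)) (nhds 0)) :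
    ∀ ξ ∈ Set.Ioo (0:ℝ) δ, y ξ ≤ M * ξ := by
  intro ξ hξ
  have hstep : ∀ ε' ∈ Set.Ioo (0:ℝ) ξ, y ξ ≤ y ε' + M * (ξ - ε') := by
    intro ε' hε'
    have hsub : Set.Icc ε' ξ ⊆ Set.Ioo 0 δ := fun x hx =>
      ⟨lt_of_lt_of_le hε'.1 hx.1, lt_of_le_of_lt hx.2 hξ.2⟩
    have hle : ε' ≤ ξ := le_of_lt hε'.2
    have hcont : ContinuousOn F (Set.Icc ε' ξ) := fun x hx =>
      (hFc x (hsub hx)).continuousWithinAt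
    have hint : IntervalIntegrable F MeasureTheory.volume ε' ξ :=
      (hcont.intervalIntegrable_of_Icc hle)
    have hftc : ∫ s in ε'..ξ, F s = y ξ - y ε' := by
      apply intervalIntegral.integral_eq_sub_of_hasDerivAt
      · intro x hx
        rw [Set.uIcc_of_le hle] at hx
        exact hyd x (hsub hx)
      · exact hint
    have hmono : ∫ s in ε'..ξ, F s ≤ ∫ s in ε'..ξ, M := by
      apply intervalIntegral.integral_mono_on hle hint (intervalIntegrable_const)
      intro x hx
      exact hF x (hsub hx)
    rw [hftc] at hmono
    rw [intervalIntegral.integral_const, smul_eq_mul] at hmono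
    linarith [hmono]
  have hlim : Filter.Tendsto (fun ε' => y ε' + M * (ξ - ε')) (nhdsWithin 0 (Set.Ioi 0))
      (nhds (0 + M * (ξ - 0))) := by
    apply Filter.Tendsto.add hy0
    apply Filter.Tendsto.mono_left _ nhdsWithin_le_nhds
    exact (tendsto_const_nhds.mul ((tendsto_const_nhds.sub tendsto_id)))
  have hev : ∀ᶠ ε' in nhdsWithin 0 (Set.Ioi 0), y ξ ≤ y ε' + M * (ξ - ε') := by
    filter_upwards [Ioo_mem_nhdsGT_of_mem ⟨le_refl 0, hξ.1⟩] with ε' hε'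
    exact hstep ε' hε'
  have := ge_of_tendsto hlim hev
  simpa using this

theorem statement4
    (p : ℝ) (hp : 1 < p)
    (Θ : Set ℝ) (hΘfin : Θ.Finite) (hΘsub : Θ ⊆ Set.Ioo 0 1)
    (f g h d : ℝ → ℝ)
    (hfb : ∃ M, ∀ x ∈ Set.Icc (0:ℝ) 1, |f x| ≤ M)
    (hgb : ∃ M, ∀ x ∈ Set.Icc (0:ℝ) 1, |g x| ≤ M)
    (hhb : ∃ M, ∀ x ∈ Set.Icc (0:ℝ) 1, |h x| ≤ M)
    (hfc : ∀ x ∈ Set.Icc (0:ℝ) 1 \ Θ, ContinuousWithinAt f (Set.Icc 0 1) x)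
    (hgc : ∀ x ∈ Set.Icc (0:ℝ) 1 \ Θ, ContinuousWithinAt g (Set.Icc 0 1) x)
    (hhc : ∀ x ∈ Set.Icc (0:ℝ) 1 \ Θ, ContinuousWithinAt h (Set.Icc 0 1) x)
    (hdc : ∀ x ∈ Set.Ioo (0:ℝ) 1 \ Θ, ContinuousWithinAt d (Set.Ioo 0 1) x)
    (hdbounds : ∀ a b : ℝ, 0 < a → a < b → b < 1 →
      (∃ m > 0, ∀ x ∈ Set.Icc a b, m ≤ d x) ∧ (∃ M, ∀ x ∈ Set.Icc a b, d x ≤ M))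
    (hh0 : h 0 = 0) (hh1 : h 1 = 0)
    (hhpos : ∀ a b : ℝ, 0 < a → a < b → b < 1 → ∃ m > 0, ∀ x ∈ Set.Icc a b, m ≤ h x)
    (κ : ℝ → ℝ) (hκdef : ∀ ξ, κ ξ = d ξ ^ ((1:ℝ)/(p-1)) * h ξ)
    (hκint : MeasureTheory.IntegrableOn κ (Set.Ioo 0 1))
    (hΘ0 : (0:ℝ) ∉ Θ)
    (c : ℝ) (y : ℝ → ℝ)
    (hy : IsFOSol p Θ f g κ c y)
    (lp : EReal)
    (hlp : lp = Filter.liminf (fun ξ : ℝ => ((κ ξ ^ (p - 1) / ξ : ℝ) : EReal))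
      (nhdsWithin 0 (Set.Ioi 0))) :
    lp < ⊤ ∧
    ∃ t : ℝ, 0 ≤ t ∧
      t ^ (p/(p-1)) - (c * g 0 - f 0) * t ^ ((1:ℝ)/(p-1)) + lp.toReal ^ ((1:ℝ)/(p-1)) ≤ 0 := by
  obtain ⟨hycont, hycd, hypos, hy0, hy1, hyderiv⟩ := hy
  set ν : Filter ℝ := nhdsWithin 0 (Set.Ioi 0) with hν
  set r : ℝ := 1/(p-1) with hrdef
  have hp1 : (0:ℝ) < p - 1 := by linarith
  have hr : 0 < r := by positivity
  have hpr : (p - 1) * r = 1 := by rw [hrdef]; field_simp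
  set A : ℝ := c * g 0 - f 0 with hA
  set F : ℝ → ℝ := fun ξ => c * g ξ - f ξ - κ ξ / y ξ ^ r with hF
  -- positivity of κ on (0,1)
  have hdpos : ∀ ξ ∈ Set.Ioo (0:ℝ) 1, 0 < d ξ := by
    intro ξ hξ
    obtain ⟨⟨m, hm, hmle⟩, -⟩ := hdbounds ξ ((ξ+1)/2) hξ.1 (by linarith [hξ.2]) (by linarith [hξ.2])
    exact lt_of_lt_of_le hm (hmle ξ ⟨le_refl _, by linarith [hξ.2]⟩)
  have hhposx : ∀ ξ ∈ Set.Ioo (0:ℝ) 1, 0 < h ξ := by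
    intro ξ hξ
    obtain ⟨m, hm, hmle⟩ := hhpos ξ ((ξ+1)/2) hξ.1 (by linarith [hξ.2]) (by linarith [hξ.2])
    exact lt_of_lt_of_le hm (hmle ξ ⟨le_refl _, by linarith [hξ.2]⟩)
  have hkpos : ∀ ξ ∈ Set.Ioo (0:ℝ) 1, 0 < κ ξ := by
    intro ξ hξ
    rw [hκdef]
    exact mul_pos (Real.rpow_pos_of_pos (hdpos ξ hξ) _) (hhposx ξ hξ)
  have hypow : ∀ ξ ∈ Set.Ioo (0:ℝ) 1, 0 < y ξ ^ r :=
    fun ξ hξ => Real.rpow_pos_of_pos (hypos ξ hξ) r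
  -- eventual facts
  have hevI : ∀ᶠ ξ in ν, ξ ∈ Set.Ioo (0:ℝ) 1 :=
    Ioo_mem_nhdsGT_of_mem ⟨le_refl 0, one_pos⟩
  have hevΘ : ∀ᶠ ξ in ν, ξ ∉ Θ := by
    have hopen : IsOpen Θᶜ := hΘfin.isClosed.isOpen_compl
    have : Θᶜ ∈ nhds (0:ℝ) := hopen.mem_nhds hΘ0
    exact Filter.Eventually.filter_mono nhdsWithin_le_nhds this
  -- continuity of F at points of Ioo 0 1 \ Θ
  have hFcont : ∀ x ∈ Set.Ioo (0:ℝ) 1 \ Θ, ContinuousAt F x := by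
    intro x hx
    have hxI : x ∈ Set.Ioo (0:ℝ) 1 := hx.1
    have hIooN : Set.Ioo (0:ℝ) 1 ∈ nhds x := isOpen_Ioo.mem_nhds hxI
    have hIccN : Set.Icc (0:ℝ) 1 ∈ nhds x := Filter.mem_of_superset hIooN Set.Ioo_subset_Icc_self
    have hxIcc : x ∈ Set.Icc (0:ℝ) 1 \ Θ := ⟨Set.Ioo_subset_Icc_self hxI, hx.2⟩
    have hgx : ContinuousAt g x := (hgc x hxIcc).continuousAt hIccN
    have hfx : ContinuousAt f x := (hfc x hxIcc).continuousAt hIccN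
    have hhx : ContinuousAt h x := (hhc x hxIcc).continuousAt hIccN
    have hdx : ContinuousAt d x := (hdc x hx).continuousAt hIooN
    have hkx : ContinuousAt κ x := by
      have : ContinuousAt (fun ξ => d ξ ^ r * h ξ) x :=
        (hdx.rpow_const (Or.inl (ne_of_gt (hdpos x hxI)))).mul hhx
      have hfun : κ = fun ξ => d ξ ^ r * h ξ := funext hκdef
      rw [hfun]; exact this
    have hyx : ContinuousAt y x := hycont.continuousAt hIooN
    have hyrx : ContinuousAt (fun ξ => y ξ ^ r) x :=
      hyx.rpow_const (Or.inl (ne_of_gt (hypos x hxI)))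
    exact ((continuousAt_const.mul hgx).sub hfx).sub
      (hkx.div hyrx (ne_of_gt (hypow x hxI)))
  -- tendsto of c*g - f at 0+
  have hνIcc : ν ≤ nhdsWithin 0 (Set.Icc (0:ℝ) 1) := by
    apply nhdsWithin_le_iff.2
    exact Filter.mem_of_superset hevI Set.Ioo_subset_Icc_self
  have h0Icc : (0:ℝ) ∈ Set.Icc (0:ℝ) 1 \ Θ := ⟨⟨le_refl 0, zero_le_one⟩, hΘ0⟩
  have htA : Filter.Tendsto (fun ξ => c * g ξ - f ξ) ν (nhds A) := by
    have hg0 : Filter.Tendsto g ν (nhds (g 0)) := (hgc 0 h0Icc).mono_left hνIcc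
    have hf0 : Filter.Tendsto f ν (nhds (f 0)) := (hfc 0 h0Icc).mono_left hνIcc
    exact (tendsto_const_nhds.mul hg0).sub hf0
  -- THE KEY step
  have hkey : ∀ C : ℝ, (∀ᶠ s in ν, C ≤ κ s / y s ^ r) → ∀ ε : ℝ, 0 < ε →
      ∀ᶠ ξ in ν, y ξ ≤ (A + ε - C) * ξ := by
    intro C hC ε hε
    have hevfg : ∀ᶠ ξ in ν, |(c * g ξ - f ξ) - A| < ε := by
      have h3 := Metric.tendsto_nhds.1 htA ε hε
      filter_upwards [h3] with ξ hξ
      rwa [Real.dist_eq] at hξ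
    have hall : ∀ᶠ ξ in ν, ξ ∈ Set.Ioo (0:ℝ) 1 ∧ ξ ∉ Θ ∧ |(c * g ξ - f ξ) - A| < ε
        ∧ C ≤ κ ξ / y ξ ^ r := by
      filter_upwards [hevI, hevΘ, hevfg, hC] with ξ h1 h2 h3 h4
      exact ⟨h1, h2, h3, h4⟩
    obtain ⟨δ, hδmem, hδ⟩ := mem_nhdsGT_iff_exists_Ioo_subset.1 hall
    have hres := key_lemma (δ := δ) (M := A + ε - C) (F := F) (y := y)
      (fun x hx => hFcont x ⟨(hδ hx).1, (hδ hx).2.1⟩)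
      (fun x hx => hyderiv x ⟨(hδ hx).1, (hδ hx).2.1⟩)
      (fun x hx => by
        obtain ⟨h1, h2, h3, h4⟩ := hδ hx
        have := abs_lt.1 h3
        simp only [hF]
        linarith [this.2])
      hy0
    filter_upwards [Ioo_mem_nhdsGT_of_mem ⟨le_refl 0, hδmem⟩] with ξ hξ
    exact hres ξ hξ
  -- trivial lower bound C = 0
  have hC0 : ∀ᶠ s in ν, (0:ℝ) ≤ κ s / y s ^ r := by
    filter_upwards [hevI] with s hs
    exact le_of_lt (div_pos (hkpos s hs) (hypow s hs))
  set B : ℝ := A + 1 - 0 with hBdef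
  have hyB : ∀ᶠ ξ in ν, y ξ ≤ B * ξ := hkey 0 hC0 1 one_pos
  have hννe : ν.NeBot := by rw [hν]; infer_instance
  have hBpos : 0 < B := by
    obtain ⟨ξ, hξ1, hξ2⟩ := (hyB.and hevI).exists
    nlinarith [hypos ξ hξ2, hξ2.1]
  -- lower bounds on κ from liminf
  have hklow : ∀ K : ℝ, 0 ≤ K → (K:EReal) < lp → ∀ᶠ s in ν, (K * s) ^ r ≤ κ s := by
    intro K hK hKlp
    rw [hlp] at hKlp
    have hev := Filter.eventually_lt_of_lt_liminf hKlp
    filter_upwards [hev, hevI] with s hs hsI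
    have hs' : K < κ s ^ (p-1) / s := by exact_mod_cast hs
    have hks : K * s ≤ κ s ^ (p-1) := by
      rw [lt_div_iff₀ hsI.1] at hs'
      linarith
    calc (K * s) ^ r ≤ (κ s ^ (p-1)) ^ r :=
          Real.rpow_le_rpow (mul_nonneg hK (le_of_lt hsI.1)) hks (le_of_lt hr)
      _ = κ s ^ ((p-1) * r) := (Real.rpow_mul (le_of_lt (hkpos s hsI)) _ _).symm
      _ = κ s := by rw [hpr, Real.rpow_one]
  -- combined lower bound on κ / y^r
  have hC : ∀ K : ℝ, 0 ≤ K → (K:EReal) < lp → ∀ K2 : ℝ, 0 < K2 →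
      (∀ᶠ s in ν, y s ≤ K2 * s) → ∀ᶠ s in ν, (K / K2) ^ r ≤ κ s / y s ^ r := by
    intro K hK hKlp K2 hK2 hyK2
    filter_upwards [hklow K hK hKlp, hyK2, hevI] with s h1 h2 hsI
    have hys : y s ^ r ≤ (K2 * s) ^ r :=
      Real.rpow_le_rpow (le_of_lt (hypos s hsI)) h2 (le_of_lt hr)
    have hK2s : (0:ℝ) < (K2 * s) ^ r := Real.rpow_pos_of_pos (mul_pos hK2 hsI.1) r
    have hKs : (K * s) ^ r = (K/K2) ^ r * (K2 * s) ^ r := by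
      rw [← Real.mul_rpow (div_nonneg hK (le_of_lt hK2)) (le_of_lt (mul_pos hK2 hsI.1))]
      congr 1
      field_simp
    calc (K/K2) ^ r = (K * s) ^ r / (K2 * s) ^ r := by
          rw [hKs, mul_div_assoc, div_self (ne_of_gt hK2s), mul_one]
      _ ≤ κ s / y s ^ r :=
          div_le_div₀ (le_of_lt (hkpos s hsI)) h1 (hypow s hsI) hys
  -- finiteness
  have hfin : lp < ⊤ := by
    by_contra htop
    have htop' : lp = ⊤ := top_le_iff.1 (not_lt.1 htop)
    have hKlp : ((B ^ p : ℝ) : EReal) < lp := by rw [htop']; exact EReal.coe_lt_top _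
    have hBp : (0:ℝ) ≤ B ^ p := le_of_lt (Real.rpow_pos_of_pos hBpos p)
    have hCB := hC _ hBp hKlp B hBpos hyB
    have hBB : (B ^ p / B : ℝ) ^ r = B := by
      rw [show (B ^ p / B : ℝ) = B ^ p / B ^ (1:ℝ) by rw [Real.rpow_one],
        ← Real.rpow_sub hBpos, ← Real.rpow_mul (le_of_lt hBpos)]
      rw [show (p - 1) * r = 1 from hpr, Real.rpow_one]
    rw [hBB] at hCB
    have := hkey B hCB 1 one_pos
    obtain ⟨ξ, hξ1, hξ2⟩ := (this.and hevI).exists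
    have : y ξ ≤ (A + 1 - B) * ξ := hξ1
    rw [hBdef] at this
    nlinarith [hypos ξ hξ2, hξ2.1]
  -- lp ≥ 0
  have hlp0 : (0:EReal) ≤ lp := by
    rw [hlp]
    refine Filter.le_liminf_of_le (by isBoundedDefault) ?_
    filter_upwards [hevI] with s hs
    have : (0:ℝ) ≤ κ s ^ (p-1) / s := le_of_lt (div_pos (Real.rpow_pos_of_pos (hkpos s hs) _) hs.1)
    exact_mod_cast this
  have hlpbot : lp ≠ ⊥ := ne_bot_of_le_ne_bot (by simp) hlp0
  set ℓ : ℝ := lp.toReal with hℓdef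
  have hℓeq : (ℓ : EReal) = lp := EReal.coe_toReal (ne_of_lt hfin) hlpbot
  have hℓ0 : 0 ≤ ℓ := by
    have := hlp0
    rw [← hℓeq] at this
    exact_mod_cast this
  -- limsup of y ξ / ξ
  set q : ℝ → ℝ := fun ξ => y ξ / ξ with hqdef
  have hqB : ∀ᶠ ξ in ν, q ξ ≤ B := by
    filter_upwards [hyB, hevI] with ξ h1 h2
    exact (div_le_iff₀ h2.1).2 h1
  have hq0 : ∀ᶠ ξ in ν, 0 ≤ q ξ := by
    filter_upwards [hevI] with ξ h2
    exact le_of_lt (div_pos (hypos ξ h2) h2.1)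
  have hbdd : Filter.IsBoundedUnder (· ≤ ·) ν q := ⟨B, by simpa [Filter.eventually_map] using hqB⟩
  have hcbdd : Filter.IsCoboundedUnder (· ≤ ·) ν q := by
    have hb : Filter.IsBoundedUnder (· ≥ ·) ν q := ⟨0, by simpa [Filter.eventually_map] using hq0⟩
    exact hb.isCoboundedUnder_le
  set L : ℝ := Filter.limsup q ν with hLdef
  have hL0 : 0 ≤ L := Filter.le_limsup_of_frequently_le (hq0.frequently) hbdd
  have hyLe : ∀ K2 : ℝ, L < K2 → ∀ᶠ ξ in ν, y ξ ≤ K2 * ξ := by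
    intro K2 hK2
    have hev := Filter.eventually_lt_of_limsup_lt hK2 hbdd
    filter_upwards [hev, hevI] with ξ h1 h2
    have := (div_lt_iff₀ h2.1).1 h1
    linarith
  -- general eventual inequality
  have hCev : ∀ ε : ℝ, 0 < ε → ∀ K2 : ℝ, 0 < K2 → (∀ᶠ s in ν, y s ≤ K2 * s) →
      ∀ᶠ ξ in ν, y ξ ≤ (A + ε - (max (ℓ - ε) 0 / K2) ^ r) * ξ := by
    intro ε hε K2 hK2 hyK2
    by_cases hcase : max (ℓ - ε) 0 = 0
    · have hz : (max (ℓ - ε) 0 / K2) ^ r = 0 := by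
        rw [hcase, zero_div, Real.zero_rpow (ne_of_gt hr)]
      rw [hz]
      exact hkey 0 hC0 ε hε
    · have hmax0 : 0 ≤ max (ℓ - ε) 0 := le_max_right _ _
      have hlt : max (ℓ - ε) 0 < ℓ := by
        rcases max_cases (ℓ - ε) 0 with ⟨h1, h2⟩ | ⟨h1, h2⟩
        · rw [h1]; linarith
        · exact absurd h1 hcase
      have hlte : ((max (ℓ - ε) 0 : ℝ) : EReal) < lp := by
        rw [← hℓeq]; exact_mod_cast hlt
      exact hkey _ (hC _ hmax0 hlte K2 hK2 hyK2) ε hε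
  refine ⟨hfin, ?_⟩
  rcases eq_or_lt_of_le hL0 with hLz | hL
  · -- case L = 0 : show ℓ = 0 and take t = 0
    have hℓz : ℓ = 0 := by
      by_contra hne
      have hℓpos : 0 < ℓ := lt_of_le_of_ne hℓ0 (Ne.symm hne)
      set D : ℝ := max (A + ℓ) 0 + 1 with hD
      have hDpos : 0 < D := by positivity
      have hDp : (0:ℝ) < D ^ (p-1) := Real.rpow_pos_of_pos hDpos _
      set K2 : ℝ := (ℓ/2) / D ^ (p-1) with hK2def
      have hK2pos : 0 < K2 := div_pos (by linarith) hDp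
      have hyK2 : ∀ᶠ s in ν, y s ≤ K2 * s := hyLe K2 (by rw [← hLz]; exact hK2pos)
      have hev := hCev (ℓ/2) (by linarith) K2 hK2pos hyK2
      have hmax : max (ℓ - ℓ/2) 0 = ℓ/2 := by
        rw [max_eq_left (by linarith)]; ring
      have hfrac : max (ℓ - ℓ/2) 0 / K2 = D ^ (p-1) := by
        rw [hmax, hK2def]
        field_simp
      have hCval : (max (ℓ - ℓ/2) 0 / K2) ^ r = D := by
        rw [hfrac, ← Real.rpow_mul (le_of_lt hDpos), hpr, Real.rpow_one]
      rw [hCval] at hev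
      obtain ⟨ξ, h1, h2⟩ := (hev.and hevI).exists
      have hyξ := hypos ξ h2
      have hξ0 := h2.1
      have hDA : max (A + ℓ) 0 + 1 ≤ A + ℓ/2 := by nlinarith
      have := le_max_left (A + ℓ) 0
      linarith
    refine ⟨0, le_refl 0, ?_⟩
    rw [hℓz, Real.zero_rpow (ne_of_gt hr), Real.zero_rpow ?hne]
    · norm_num
    · case hne =>
        have : 0 < p/(p-1) := by positivity
        exact ne_of_gt this
  · -- case L > 0
    have hLe : ∀ ε : ℝ, 0 < ε → 0 ≤ (A + ε - (max (ℓ - ε) 0 / (L + ε)) ^ r) - (L - ε) := by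
      intro ε hε
      have hev := hCev ε hε (L + ε) (by linarith) (hyLe (L + ε) (by linarith))
      have hfr : ∃ᶠ ξ in ν, L - ε < q ξ :=
        Filter.frequently_lt_of_lt_limsup hcbdd (by rw [← hLdef]; linarith)
      obtain ⟨ξ, h1, h2, h3⟩ := (hfr.and_eventually (hev.and hevI)).exists
      have h4 : q ξ ≤ A + ε - (max (ℓ - ε) 0 / (L + ε)) ^ r := (div_le_iff₀ h3.1).2 h2
      linarith
    have hlim : Filter.Tendsto
        (fun ε : ℝ => (A + ε - (max (ℓ - ε) 0 / (L + ε)) ^ r) - (L - ε))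
        (nhdsWithin 0 (Set.Ioi 0))
        (nhds ((A + 0 - (max (ℓ - 0) 0 / (L + 0)) ^ r) - (L - 0))) := by
      apply Filter.Tendsto.mono_left _ nhdsWithin_le_nhds
      apply ContinuousAt.tendsto
      have hb : ContinuousAt (fun ε : ℝ => max (ℓ - ε) 0 / (L + ε)) 0 := by
        apply ContinuousAt.div
        · exact (continuousAt_const.sub continuousAt_id).max continuousAt_const
        · exact continuousAt_const.add continuousAt_id
        · simpa using ne_of_gt hL
      have hbr : ContinuousAt (fun ε : ℝ => (max (ℓ - ε) 0 / (L + ε)) ^ r) 0 :=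
        hb.rpow_const (Or.inr (le_of_lt hr))
      exact ((continuousAt_const.add continuousAt_id).sub hbr).sub
        (continuousAt_const.sub continuousAt_id)
    have hge := ge_of_tendsto hlim (by
      filter_upwards [self_mem_nhdsWithin] with ε hε
      exact hLe ε hε)
    have hmaxℓ : max ℓ 0 = ℓ := max_eq_left hℓ0
    simp only [sub_zero, add_zero, hmaxℓ] at hge
    have hmain : L + (ℓ / L) ^ r ≤ A := by linarith
    refine ⟨L, hL0, ?_⟩
    have hLr : 0 < L ^ r := Real.rpow_pos_of_pos hL r
    have h1 : L * L ^ r = L ^ (p/(p-1)) := by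
      nth_rewrite 1 [← Real.rpow_one L]
      rw [← Real.rpow_add hL]
      congr 1
      rw [hrdef]
      field_simp
      ring
    have h2 : (ℓ/L) ^ r * L ^ r = ℓ ^ r := by
      rw [← Real.mul_rpow (div_nonneg hℓ0 (le_of_lt hL)) (le_of_lt hL),
        div_mul_cancel₀ _ (ne_of_gt hL)]
    have h3 : (L + (ℓ/L) ^ r) * L ^ r ≤ A * L ^ r :=
      mul_le_mul_of_nonneg_right hmain (le_of_lt hLr)
    rw [add_mul, h1, h2] at h3
    linarith
end

section
/- Let r₀ ∈ (0,1/2) be such that Θ ⊂ [r₀, 1−r₀]. For every r ∈ (0, r₀/2) and every m, M > 0 there exists δ = δ(p,r,m,M) > 0 with the following property: for every c ∈ ℝ, if inf_{ξ∈[r,1−r]} κ(ξ) ≥ m and sup_{ξ∈[r,1−r]} |c g(ξ) − f(ξ)| ≤ M, then every function y that is continuous on (0,1), continuously differentiable on (0,1) \ Θ, positive on (0,1), and satisfies y′(ξ) = c g(ξ) − f(ξ) − κ(ξ) y(ξ)^{−1/(p−1)} for every ξ ∈ (0,1) \ Θ, fulfills y(ξ) ≥ δ for all ξ ∈ [2r,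 1−2r]. -/
open Filter Set MeasureTheory Topology

lemma aux_decrease (s : Set ℝ) (hs : s.Finite) : ∀ (a b : ℝ) (z : ℝ → ℝ), a ≤ b →
    ContinuousOn z (Set.Icc a b) →
    (∀ x ∈ Set.Ioo a b \ s, ∃ z', HasDerivAt z z' x ∧ z' ≤ 0) → z b ≤ z a := by
  refine Set.Finite.induction_on (motive := fun s _ => ∀ (a b : ℝ) (z : ℝ → ℝ), a ≤ b →
    ContinuousOn z (Set.Icc a b) →
    (∀ x ∈ Set.Ioo a b \ s, ∃ z', HasDerivAt z z' x ∧ z' ≤ 0) → z b ≤ z a) s hs ?_ ?_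
  · intro a b z hab hc hz
    have hanti : AntitoneOn z (Set.Icc a b) := by
      apply antitoneOn_of_deriv_nonpos (convex_Icc a b) hc
      · intro x hx
        rw [interior_Icc] at hx
        obtain ⟨z', hd, _⟩ := hz x ⟨hx, Set.notMem_empty x⟩
        exact hd.differentiableAt.differentiableWithinAt
      · intro x hx
        rw [interior_Icc] at hx
        obtain ⟨z', hd, hle⟩ := hz x ⟨hx, Set.notMem_empty x⟩
        rw [hd.deriv]; exact hle
    exact hanti (Set.left_mem_Icc.2 hab) (Set.right_mem_Icc.2 hab) hab
  · intro c s' _ hsf ih a b z hab hcont hz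
    by_cases hcm : c ∈ Set.Ioo a b
    · have h1 : z c ≤ z a := by
        apply ih a c z hcm.1.le (hcont.mono (Set.Icc_subset_Icc le_rfl hcm.2.le))
        intro x hx
        refine hz x ⟨⟨hx.1.1, hx.1.2.trans hcm.2⟩, ?_⟩
        rw [Set.mem_insert_iff]
        push_neg
        exact ⟨ne_of_lt hx.1.2, hx.2⟩
      have h2 : z b ≤ z c := by
        apply ih c b z hcm.2.le (hcont.mono (Set.Icc_subset_Icc hcm.1.le le_rfl))
        intro x hx
        refine hz x ⟨⟨hcm.1.trans hx.1.1, hx.1.2⟩, ?_⟩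
        rw [Set.mem_insert_iff]
        push_neg
        exact ⟨(ne_of_lt hx.1.1).symm, hx.2⟩
      exact h2.trans h1
    · apply ih a b z hab hcont
      intro x hx
      refine hz x ⟨hx.1, ?_⟩
      rw [Set.mem_insert_iff]
      push_neg
      exact ⟨fun hxc => hcm (hxc ▸ hx.1), hx.2⟩


theorem statement5
    (p : ℝ) (hp : 1 < p)
    (Θ : Set ℝ) (hΘfin : Θ.Finite) (hΘsub : Θ ⊆ Set.Ioo 0 1)
    (f g h d : ℝ → ℝ)
    (hfb : ∃ M, ∀ x ∈ Set.Icc (0:ℝ) 1, |f x| ≤ M)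
    (hgb : ∃ M, ∀ x ∈ Set.Icc (0:ℝ) 1, |g x| ≤ M)
    (hhb : ∃ M, ∀ x ∈ Set.Icc (0:ℝ) 1, |h x| ≤ M)
    (hfc : ∀ x ∈ Set.Icc (0:ℝ) 1 \ Θ, ContinuousWithinAt f (Set.Icc 0 1) x)
    (hgc : ∀ x ∈ Set.Icc (0:ℝ) 1 \ Θ, ContinuousWithinAt g (Set.Icc 0 1) x)
    (hhc : ∀ x ∈ Set.Icc (0:ℝ) 1 \ Θ, ContinuousWithinAt h (Set.Icc 0 1) x)
    (hdc : ∀ x ∈ Set.Ioo (0:ℝ) 1 \ Θ, ContinuousWithinAt d (Set.Ioo 0 1) x)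
    (hdbounds : ∀ a b : ℝ, 0 < a → a < b → b < 1 →
      (∃ m > 0, ∀ x ∈ Set.Icc a b, m ≤ d x) ∧ (∃ M, ∀ x ∈ Set.Icc a b, d x ≤ M))
    (hh0 : h 0 = 0) (hh1 : h 1 = 0)
    (hhpos : ∀ a b : ℝ, 0 < a → a < b → b < 1 → ∃ m > 0, ∀ x ∈ Set.Icc a b, m ≤ h x)
    (κ : ℝ → ℝ) (hκdef : ∀ ξ, κ ξ = d ξ ^ ((1:ℝ)/(p-1)) * h ξ)
    (hκint : MeasureTheory.IntegrableOn κ (Set.Ioo 0 1))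
    (r₀ : ℝ) (hr₀ : r₀ ∈ Set.Ioo (0:ℝ) (1/2)) (hΘr₀ : Θ ⊆ Set.Icc r₀ (1 - r₀)) :
    ∀ r ∈ Set.Ioo (0:ℝ) (r₀ / 2), ∀ m M : ℝ, 0 < m → 0 < M →
      ∃ δ > 0, ∀ c : ℝ, ∀ y : ℝ → ℝ,
        (∀ ξ ∈ Set.Icc r (1 - r), m ≤ κ ξ) →
        (∀ ξ ∈ Set.Icc r (1 - r), |c * g ξ - f ξ| ≤ M) →
        ContinuousOn y (Set.Ioo 0 1) →
        ContDiffOn ℝ 1 y (Set.Ioo 0 1 \ Θ) →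
        (∀ ξ ∈ Set.Ioo (0:ℝ) 1, 0 < y ξ) →
        (∀ ξ ∈ Set.Ioo (0:ℝ) 1 \ Θ,
          HasDerivAt y (c * g ξ - f ξ - κ ξ / (y ξ) ^ ((1:ℝ)/(p-1))) ξ) →
        ∀ ξ ∈ Set.Icc (2 * r) (1 - 2 * r), δ ≤ y ξ := by
  intro r hr m M hm hM
  obtain ⟨hr0, hrr⟩ := hr
  obtain ⟨hr₀0, hr₀half⟩ := hr₀
  have hr1 : r < 1/4 := by linarith
  have hp1 : (0:ℝ) < p - 1 := by linarith
  set q : ℝ := 1/(p-1) with hqdef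
  have hq : 0 < q := by positivity
  have hbase : (0:ℝ) < m/(2*M) := by positivity
  set δ₁ : ℝ := (m/(2*M)) ^ (p-1) with hδ₁def
  have hδ₁pos : 0 < δ₁ := Real.rpow_pos_of_pos hbase _
  have hδ₁q : δ₁ ^ q = m/(2*M) := by
    rw [hδ₁def, ← Real.rpow_mul hbase.le, hqdef, mul_one_div, div_self hp1.ne',
      Real.rpow_one]
  refine ⟨min δ₁ (M*r) / 2, by positivity, ?_⟩
  set δ : ℝ := min δ₁ (M*r) / 2 with hδdef
  have hδδ₁ : δ < δ₁ := by
    have : δ ≤ δ₁ / 2 := by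
      rw [hδdef]
      have := min_le_left δ₁ (M*r)
      linarith
    linarith
  have hδMr : δ ≤ M*r/2 := by
    rw [hδdef]
    have := min_le_right δ₁ (M*r)
    linarith
  intro c y hκm hA hycont hyC1 hypos hyode
  by_contra hcon
  push_neg at hcon
  obtain ⟨ξ, hξmem, hyξ⟩ := hcon
  obtain ⟨hξl, hξr⟩ := hξmem
  -- key decrease lemma
  have key : ∀ T ∈ Set.Icc ξ (1-r), (∀ t ∈ Set.Ioo ξ T, y t ≤ δ₁) →
      y T ≤ y ξ - M * (T - ξ) := by
    intro T hT hsmall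
    have hzz : y T + M * T ≤ y ξ + M * ξ := by
      apply aux_decrease Θ hΘfin ξ T (fun t => y t + M * t) hT.1
      · apply ContinuousOn.add
        · apply hycont.mono
          intro t ht
          constructor
          · linarith [ht.1]
          · have : t ≤ 1 - r := le_trans ht.2 hT.2
            linarith
        · exact (continuous_const.mul continuous_id).continuousOn
      · intro x hx
        have hxIoo : x ∈ Set.Ioo (0:ℝ) 1 := by
          constructor
          · linarith [hx.1.1]
          · have : x < 1 - r := lt_of_lt_of_le hx.1.2 hT.2
            linarith
        have hxIcc : x ∈ Set.Icc r (1-r) := by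
          constructor
          · linarith [hx.1.1]
          · have : x < 1 - r := lt_of_lt_of_le hx.1.2 hT.2
            linarith
        have hypx : 0 < y x := hypos x hxIoo
        have hylex : y x ≤ δ₁ := hsmall x hx.1
        have hder := hyode x ⟨hxIoo, hx.2⟩
        refine ⟨c * g x - f x - κ x / (y x) ^ q + M * 1, ?_, ?_⟩
        · exact hder.add ((hasDerivAt_id x).const_mul M)
        · have hrq : (y x) ^ q ≤ m/(2*M) := by
            rw [← hδ₁q]
            exact Real.rpow_le_rpow hypx.le hylex hq.le
          have hrqpos : (0:ℝ) < (y x) ^ q := Real.rpow_pos_of_pos hypx _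
          have hκx : m ≤ κ x := hκm x hxIcc
          have hdiv : m / (m/(2*M)) ≤ κ x / (y x) ^ q :=
            div_le_div₀ (le_trans hm.le hκx) hκx hrqpos hrq
          have heq : m / (m/(2*M)) = 2*M := by
            field_simp
          rw [heq] at hdiv
          have hAx : c * g x - f x ≤ M := (abs_le.1 (hA x hxIcc)).2
          linarith
    linarith
  -- the set where y exceeds δ₁
  set S : Set ℝ := {t ∈ Set.Icc ξ (1-r) | δ₁ < y t} with hSdef
  have hξle : ξ ≤ 1 - r := by linarith
  by_cases hS : S.Nonempty
  · have hbdd : BddBelow S := (bddBelow_Icc : BddBelow (Set.Icc ξ (1-r))).mono (fun t ht => ht.1)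
    set T : ℝ := sInf S with hTdef
    have hCclosed : IsClosed {t ∈ Set.Icc ξ (1-r) | δ₁ ≤ y t} := by
      have hIccsub : Set.Icc ξ (1-r) ⊆ Set.Ioo (0:ℝ) 1 := by
        intro t ht
        constructor
        · linarith [ht.1]
        · linarith [ht.2]
      have : {t ∈ Set.Icc ξ (1-r) | δ₁ ≤ y t} = Set.Icc ξ (1-r) ∩ y ⁻¹' (Set.Ici δ₁) := by
        ext t; simp [Set.mem_Ici]
      rw [this]
      exact ContinuousOn.preimage_isClosed_of_isClosed (hycont.mono hIccsub)
        isClosed_Icc isClosed_Ici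
    have hTC : T ∈ {t ∈ Set.Icc ξ (1-r) | δ₁ ≤ y t} := by
      have h1 : T ∈ closure S := csInf_mem_closure hS hbdd
      have h2 : closure S ⊆ {t ∈ Set.Icc ξ (1-r) | δ₁ ≤ y t} := by
        apply closure_minimal _ hCclosed
        intro t ht
        exact ⟨ht.1, ht.2.le⟩
      exact h2 h1
    have hyT : y T ≤ y ξ - M * (T - ξ) := by
      apply key T hTC.1
      intro t ht
      by_contra hcon2
      push_neg at hcon2
      have htS : t ∈ S := ⟨⟨ht.1.le, le_trans ht.2.le hTC.1.2⟩, hcon2⟩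
      have := csInf_le hbdd htS
      linarith [ht.2]
    have hMT : 0 ≤ M * (T - ξ) := mul_nonneg hM.le (by linarith [hTC.1.1])
    linarith [hTC.2]
  · -- S empty : y ≤ δ₁ on all of [ξ, 1-r], so y (1-r) < 0
    have hyT : y (1-r) ≤ y ξ - M * ((1-r) - ξ) := by
      apply key (1-r) ⟨hξle, le_rfl⟩
      intro t ht
      by_contra hcon2
      push_neg at hcon2
      exact hS ⟨t, ⟨ht.1.le, ht.2.le⟩, hcon2⟩
    have hpos : 0 < y (1-r) := hypos (1-r) ⟨by linarith, by linarith⟩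
    have : r ≤ (1-r) - ξ := by linarith
    nlinarith [mul_le_mul_of_nonneg_left this hM.le]
end

section
/- Every solution y of the first-order problem (3.1) with speed c is Lipschitz continuous on every compact subinterval of (0,1); consequently, its extension to [0,1] obtained by setting y(0) = y(1) = 0 is absolutely continuous on [0,1]. -/
open Filter Set MeasureTheory Topology

lemma ftc_finite_exceptions {S : Set ℝ} (hS : S.Finite) :
    ∀ (y ψ : ℝ → ℝ) (s t : ℝ), s ≤ t → ContinuousOn y (Set.Icc s t) →
      (∀ x ∈ Set.Ioo s t \ S, HasDerivAt y (ψ x) x) →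
      IntervalIntegrable ψ MeasureTheory.volume s t →
      ∫ u in s..t, ψ u = y t - y s := by
  refine @Set.Finite.induction_on ℝ (fun S _ => ∀ (y ψ : ℝ → ℝ) (s t : ℝ), s ≤ t → ContinuousOn y (Set.Icc s t) →
      (∀ x ∈ Set.Ioo s t \ S, HasDerivAt y (ψ x) x) →
      IntervalIntegrable ψ MeasureTheory.volume s t →
      ∫ u in s..t, ψ u = y t - y s) S hS ?_ @?_
  ·
    intro y ψ s t hst hcont hderiv hint
    exact intervalIntegral.integral_eq_sub_of_hasDeriv_right_of_le hst hcont
      (fun x hx => ((hderiv x ⟨hx, Set.notMem_empty x⟩).hasDerivWithinAt)) hint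
  · intro a S' haS' hS' IH
    intro y ψ s t hst hcont hderiv hint
    by_cases ha : a ∈ Set.Ioo s t
    · have has : s ≤ a := ha.1.le
      have hat : a ≤ t := ha.2.le
      have h1 : IntervalIntegrable ψ volume s a :=
        hint.mono_set (by rw [Set.uIcc_of_le has, Set.uIcc_of_le hst]
                          exact Set.Icc_subset_Icc le_rfl hat)
      have h2 : IntervalIntegrable ψ volume a t :=
        hint.mono_set (by rw [Set.uIcc_of_le hat, Set.uIcc_of_le hst]
                          exact Set.Icc_subset_Icc has le_rfl)
      have e1 := IH y ψ s a has (hcont.mono (Set.Icc_subset_Icc le_rfl hat))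
        (fun x hx => hderiv x ⟨⟨hx.1.1, hx.1.2.trans_le hat⟩,
          fun hmem => by
            rcases Set.mem_insert_iff.mp hmem with h | h
            · exact absurd h (ne_of_lt hx.1.2)
            · exact hx.2 h⟩) h1
      have e2 := IH y ψ a t hat (hcont.mono (Set.Icc_subset_Icc has le_rfl))
        (fun x hx => hderiv x ⟨⟨lt_of_le_of_lt has hx.1.1, hx.1.2⟩,
          fun hmem => by
            rcases Set.mem_insert_iff.mp hmem with h | h
            · exact absurd h (ne_of_gt hx.1.1)
            · exact hx.2 h⟩) h2
      rw [← intervalIntegral.integral_add_adjacent_intervals h1 h2, e1, e2]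
      ring
    · refine IH y ψ s t hst hcont (fun x hx => hderiv x ⟨hx.1, fun hmem => ?_⟩) hint
      rcases Set.mem_insert_iff.mp hmem with h | h
      · exact ha (h ▸ hx.1)
      · exact hx.2 h

theorem statement6
    (p : ℝ) (hp : 1 < p)
    (Θ : Set ℝ) (hΘfin : Θ.Finite) (hΘsub : Θ ⊆ Set.Ioo 0 1)
    (f g h d : ℝ → ℝ)
    (hfb : ∃ M, ∀ x ∈ Set.Icc (0:ℝ) 1, |f x| ≤ M)
    (hgb : ∃ M, ∀ x ∈ Set.Icc (0:ℝ) 1, |g x| ≤ M)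
    (hhb : ∃ M, ∀ x ∈ Set.Icc (0:ℝ) 1, |h x| ≤ M)
    (hfc : ∀ x ∈ Set.Icc (0:ℝ) 1 \ Θ, ContinuousWithinAt f (Set.Icc 0 1) x)
    (hgc : ∀ x ∈ Set.Icc (0:ℝ) 1 \ Θ, ContinuousWithinAt g (Set.Icc 0 1) x)
    (hhc : ∀ x ∈ Set.Icc (0:ℝ) 1 \ Θ, ContinuousWithinAt h (Set.Icc 0 1) x)
    (hdc : ∀ x ∈ Set.Ioo (0:ℝ) 1 \ Θ, ContinuousWithinAt d (Set.Ioo 0 1) x)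
    (hdbounds : ∀ a b : ℝ, 0 < a → a < b → b < 1 →
      (∃ m > 0, ∀ x ∈ Set.Icc a b, m ≤ d x) ∧ (∃ M, ∀ x ∈ Set.Icc a b, d x ≤ M))
    (hh0 : h 0 = 0) (hh1 : h 1 = 0)
    (hhpos : ∀ a b : ℝ, 0 < a → a < b → b < 1 → ∃ m > 0, ∀ x ∈ Set.Icc a b, m ≤ h x)
    (κ : ℝ → ℝ) (hκdef : ∀ ξ, κ ξ = d ξ ^ ((1:ℝ)/(p-1)) * h ξ)
    (hκint : MeasureTheory.IntegrableOn κ (Set.Ioo 0 1))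
    (c : ℝ) (y : ℝ → ℝ)
    (hy : IsFOSol p Θ f g κ c y) :
    (∀ a b : ℝ, 0 < a → a ≤ b → b < 1 → ∃ K : NNReal, LipschitzOnWith K y (Set.Icc a b)) ∧
    ∃ φ : ℝ → ℝ, MeasureTheory.IntegrableOn φ (Set.Icc 0 1) ∧
      ∀ x ∈ Set.Icc (0:ℝ) 1, Set.indicator (Set.Ioo 0 1) y x = ∫ t in (0:ℝ)..x, φ t := by
  classical
  obtain ⟨ycont, -, ypos, y0lim, y1lim, yderiv⟩ := hy
  obtain ⟨Mf, hMf⟩ := hfb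
  obtain ⟨Mg, hMg⟩ := hgb
  obtain ⟨Mh, hMh⟩ := hhb
  have h01 : (0:ℝ) ∈ Set.Icc (0:ℝ) 1 := ⟨le_rfl, zero_le_one⟩
  have hMf0 : 0 ≤ Mf := le_trans (abs_nonneg _) (hMf 0 h01)
  have hMg0 : 0 ≤ Mg := le_trans (abs_nonneg _) (hMg 0 h01)
  have hMh0 : 0 ≤ Mh := le_trans (abs_nonneg _) (hMh 0 h01)
  set e : ℝ := (1:ℝ)/(p-1) with he
  have hepos : 0 < e := by
    rw [he]; apply div_pos one_pos; linarith
  set ψ : ℝ → ℝ := fun ξ => c * g ξ - f ξ - κ ξ / y ξ ^ e with hψ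
  set η : ℝ → ℝ := fun ξ => κ ξ / y ξ ^ e with hη
  set F : ℝ → ℝ := fun ξ => c * g ξ - f ξ with hF
  have hΘnull : MeasureTheory.volume Θ = 0 := hΘfin.measure_zero _
  have hd_pos : ∀ x ∈ Set.Ioo (0:ℝ) 1, 0 < d x := by
    intro x hx
    obtain ⟨⟨m', hm', hm'le⟩, -⟩ := hdbounds (x/2) ((x+1)/2)
      (by linarith [hx.1]) (by linarith [hx.1, hx.2]) (by linarith [hx.2])
    exact lt_of_lt_of_le hm' (hm'le x ⟨by linarith [hx.1], by linarith [hx.2]⟩)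
  have hh_pos : ∀ x ∈ Set.Ioo (0:ℝ) 1, 0 < h x := by
    intro x hx
    obtain ⟨m', hm', hm'le⟩ := hhpos (x/2) ((x+1)/2)
      (by linarith [hx.1]) (by linarith [hx.1, hx.2]) (by linarith [hx.2])
    exact lt_of_lt_of_le hm' (hm'le x ⟨by linarith [hx.1], by linarith [hx.2]⟩)
  have hη_nonneg : ∀ x ∈ Set.Ioo (0:ℝ) 1, 0 ≤ η x := by
    intro x hx
    apply div_nonneg _ (Real.rpow_nonneg (ypos x hx).le e)
    rw [hκdef]
    exact mul_nonneg (Real.rpow_nonneg (hd_pos x hx).le e) (hh_pos x hx).le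
  -- continuity off Θ
  have hFa : ∀ x ∈ Set.Ioo (0:ℝ) 1 \ Θ, ContinuousAt F x := by
    intro x hx
    have hIcc : Set.Icc (0:ℝ) 1 ∈ 𝓝 x := Icc_mem_nhds hx.1.1 hx.1.2
    have hxIccΘ : x ∈ Set.Icc (0:ℝ) 1 \ Θ := ⟨Set.Ioo_subset_Icc_self hx.1, hx.2⟩
    exact (continuousAt_const.mul ((hgc x hxIccΘ).continuousAt hIcc)).sub
      ((hfc x hxIccΘ).continuousAt hIcc)
  have hηa : ∀ x ∈ Set.Ioo (0:ℝ) 1 \ Θ, ContinuousAt η x := by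
    intro x hx
    have hIcc : Set.Icc (0:ℝ) 1 ∈ 𝓝 x := Icc_mem_nhds hx.1.1 hx.1.2
    have hIoo : Set.Ioo (0:ℝ) 1 ∈ 𝓝 x := Ioo_mem_nhds hx.1.1 hx.1.2
    have hxIccΘ : x ∈ Set.Icc (0:ℝ) 1 \ Θ := ⟨Set.Ioo_subset_Icc_self hx.1, hx.2⟩
    have hκa : ContinuousAt κ x := by
      have hκeq : κ = fun ξ => d ξ ^ e * h ξ := funext hκdef
      rw [hκeq]
      exact (((hdc x hx).continuousAt hIoo).rpow_const (Or.inr hepos.le)).mul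
        ((hhc x hxIccΘ).continuousAt hIcc)
    exact hκa.div ((ycont.continuousAt hIoo).rpow_const (Or.inr hepos.le))
      (ne_of_gt (Real.rpow_pos_of_pos (ypos x hx.1) e))
  have hψa : ∀ x ∈ Set.Ioo (0:ℝ) 1 \ Θ, ContinuousAt ψ x := fun x hx =>
    (hFa x hx).sub (hηa x hx)
  -- measurability helper
  have measHelp : ∀ q : ℝ → ℝ, (∀ x ∈ Set.Ioo (0:ℝ) 1 \ Θ, ContinuousAt q x) →
      ∀ A : Set ℝ, MeasurableSet A → A ⊆ Set.Ioo 0 1 →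
      MeasureTheory.AEStronglyMeasurable q (MeasureTheory.volume.restrict A) := by
    intro q hq A hA hAsub
    have h1 : ContinuousOn q (A \ Θ) := fun x hx =>
      (hq x ⟨hAsub hx.1, hx.2⟩).continuousWithinAt
    have h2 := h1.aestronglyMeasurable (μ := MeasureTheory.volume) (hA.diff hΘfin.measurableSet)
    rwa [MeasureTheory.Measure.restrict_congr_set
      (MeasureTheory.diff_ae_eq_self.mpr
        (measure_mono_null Set.inter_subset_right hΘnull))] at h2
  -- the key local lemma
  have key : ∀ a b : ℝ, 0 < a → a ≤ b → b < 1 →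
      ∃ K : ℝ, 0 ≤ K ∧ (∀ x ∈ Set.Icc a b, |ψ x| ≤ K) ∧
        MeasureTheory.IntegrableOn ψ (Set.Icc a b) ∧
        (∀ s t : ℝ, s ∈ Set.Icc a b → t ∈ Set.Icc a b → s ≤ t →
          ∫ u in s..t, ψ u = y t - y s) := by
    intro a b ha hab hb1
    have hsub : Set.Icc a b ⊆ Set.Ioo 0 1 := fun x hx =>
      ⟨lt_of_lt_of_le ha hx.1, lt_of_le_of_lt hx.2 hb1⟩
    obtain ⟨x₀, hx₀, hx₀min⟩ := isCompact_Icc.exists_isMinOn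
      (Set.nonempty_Icc.mpr hab) (ycont.mono hsub)
    set m := y x₀ with hm'
    have hm : 0 < m := ypos x₀ (hsub hx₀)
    have hmle : ∀ x ∈ Set.Icc a b, m ≤ y x := fun x hx => hx₀min hx
    obtain ⟨⟨md, hmd, hmdle⟩, ⟨Md, hMdle⟩⟩ := hdbounds (a/2) ((b+1)/2)
      (by linarith) (by linarith) (by linarith)
    have hsub2 : Set.Icc a b ⊆ Set.Icc (a/2) ((b+1)/2) :=
      Set.Icc_subset_Icc (by linarith) (by linarith)
    have hMd0 : 0 ≤ Md := by
      have := hmdle a ⟨by linarith, by linarith⟩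
      have := hMdle a ⟨by linarith, by linarith⟩
      linarith
    set K : ℝ := |c| * Mg + Mf + (Md ^ e * Mh) / m ^ e with hK
    have hme : 0 < m ^ e := Real.rpow_pos_of_pos hm e
    have hK0 : 0 ≤ K := by
      have h1 : 0 ≤ Md ^ e * Mh := mul_nonneg (Real.rpow_nonneg hMd0 e) hMh0
      have h2 : 0 ≤ (Md ^ e * Mh) / m ^ e := div_nonneg h1 hme.le
      have : 0 ≤ |c| * Mg := mul_nonneg (abs_nonneg c) hMg0
      rw [hK]; linarith
    have hψb : ∀ x ∈ Set.Icc a b, |ψ x| ≤ K := by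
      intro x hx
      have hx01 := hsub hx
      have hxI : x ∈ Set.Icc (0:ℝ) 1 := Set.Ioo_subset_Icc_self hx01
      have h1 : |c * g x| ≤ |c| * Mg := by
        rw [abs_mul]
        exact mul_le_mul_of_nonneg_left (hMg x hxI) (abs_nonneg c)
      have h2 : |f x| ≤ Mf := hMf x hxI
      have hdx : 0 < d x := hd_pos x hx01
      have hκx : |κ x| ≤ Md ^ e * Mh := by
        rw [hκdef, abs_mul, abs_of_nonneg (Real.rpow_nonneg hdx.le e)]
        exact mul_le_mul (Real.rpow_le_rpow hdx.le (hMdle x (hsub2 hx)) hepos.le)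
          (hMh x hxI) (abs_nonneg _) (Real.rpow_nonneg hMd0 e)
      have hyx : m ^ e ≤ y x ^ e := Real.rpow_le_rpow hm.le (hmle x hx) hepos.le
      have h3 : |κ x / y x ^ e| ≤ (Md ^ e * Mh) / m ^ e := by
        rw [abs_div, abs_of_pos (lt_of_lt_of_le hme hyx)]
        exact div_le_div₀ (mul_nonneg (Real.rpow_nonneg hMd0 e) hMh0) hκx hme hyx
      calc |ψ x| ≤ |c * g x - f x| + |κ x / y x ^ e| := abs_sub _ _
        _ ≤ (|c * g x| + |f x|) + |κ x / y x ^ e| := by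
            have := abs_sub (c * g x) (f x); linarith
        _ ≤ K := by rw [hK]; linarith
    have hmeas : MeasureTheory.AEStronglyMeasurable ψ
        (MeasureTheory.volume.restrict (Set.Icc a b)) :=
      measHelp ψ hψa _ measurableSet_Icc hsub
    haveI : MeasureTheory.IsFiniteMeasure
        (MeasureTheory.volume.restrict (Set.Icc a b)) :=
      ⟨by rw [MeasureTheory.Measure.restrict_apply_univ]
          exact lt_of_le_of_lt (measure_mono (Set.Icc_subset_Icc_left (le_refl a)))
            measure_Icc_lt_top⟩
    have hint : MeasureTheory.IntegrableOn ψ (Set.Icc a b) := by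
      refine MeasureTheory.Integrable.mono' (MeasureTheory.integrable_const K) hmeas ?_
      refine (MeasureTheory.ae_restrict_iff' measurableSet_Icc).mpr
        (Filter.Eventually.of_forall fun x hx => ?_)
      simpa [Real.norm_eq_abs] using hψb x hx
    refine ⟨K, hK0, hψb, hint, ?_⟩
    intro s t hs ht hst
    refine ftc_finite_exceptions hΘfin y ψ s t hst
      (ycont.mono ((Set.Icc_subset_Icc hs.1 ht.2).trans hsub)) ?_
      ((intervalIntegrable_iff_integrableOn_Icc_of_le hst).mpr
        (hint.mono_set (Set.Icc_subset_Icc hs.1 ht.2)))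
    intro x hx
    have hx01 : x ∈ Set.Ioo (0:ℝ) 1 :=
      hsub ⟨hs.1.trans hx.1.1.le, hx.1.2.le.trans ht.2⟩
    exact yderiv x ⟨hx01, hx.2⟩
  constructor
  · -- Lipschitz part
    intro a b ha hab hb1
    obtain ⟨K, hK0, hψb, hint, hftc⟩ := key a b ha hab hb1
    refine ⟨K.toNNReal, LipschitzOnWith.of_dist_le_mul fun s hs t ht => ?_⟩
    rw [Real.coe_toNNReal K hK0]
    have main : ∀ s t : ℝ, s ∈ Set.Icc a b → t ∈ Set.Icc a b → s ≤ t →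
        dist (y s) (y t) ≤ K * dist s t := by
      intro s t hs ht hst
      have h1 : ∀ x ∈ Set.uIoc s t, ‖ψ x‖ ≤ K := by
        intro x hx
        rw [Set.uIoc_of_le hst] at hx
        exact hψb x ⟨hs.1.trans hx.1.le, hx.2.trans ht.2⟩
      have h2 := intervalIntegral.norm_integral_le_of_norm_le_const h1
      rw [hftc s t hs ht hst] at h2
      rw [Real.dist_eq, Real.dist_eq, abs_sub_comm (y s) (y t), abs_sub_comm s t]
      simpa [Real.norm_eq_abs] using h2
    rcases le_total s t with hst | hst
    · exact main s t hs ht hst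
    · rw [dist_comm (y s) (y t), dist_comm s t]
      exact main t s ht hs hst
  · -- absolute continuity part
    haveI : MeasureTheory.IsFiniteMeasure
        (MeasureTheory.volume.restrict (Set.Ioo (0:ℝ) 1)) :=
      ⟨by rw [MeasureTheory.Measure.restrict_apply_univ]
          exact lt_of_le_of_lt (measure_mono Set.Ioo_subset_Icc_self) measure_Icc_lt_top⟩
    set C₁ : ℝ := |c| * Mg + Mf with hC₁def
    have hC₁ : 0 ≤ C₁ := by
      have : 0 ≤ |c| * Mg := mul_nonneg (abs_nonneg c) hMg0
      rw [hC₁def]; linarith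
    have hFb : ∀ x ∈ Set.Icc (0:ℝ) 1, |F x| ≤ C₁ := by
      intro x hx
      have h1 : |c * g x| ≤ |c| * Mg := by
        rw [abs_mul]
        exact mul_le_mul_of_nonneg_left (hMg x hx) (abs_nonneg c)
      have := abs_sub (c * g x) (f x)
      have := hMf x hx
      rw [hC₁def]
      calc |F x| ≤ |c * g x| + |f x| := abs_sub _ _
        _ ≤ |c| * Mg + Mf := by linarith [hMf x hx]
    have hFint : MeasureTheory.IntegrableOn F (Set.Ioo (0:ℝ) 1) := by
      refine MeasureTheory.Integrable.mono' (MeasureTheory.integrable_const C₁)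
        (measHelp F hFa _ measurableSet_Ioo (le_refl _)) ?_
      refine (MeasureTheory.ae_restrict_iff' measurableSet_Ioo).mpr
        (Filter.Eventually.of_forall fun x hx => ?_)
      simpa [Real.norm_eq_abs] using hFb x (Set.Ioo_subset_Icc_self hx)
    -- the exhausting sequence
    set u : ℕ → ℝ := fun n => 1/((n:ℝ)+2) with hu
    set v : ℕ → ℝ := fun n => 1 - 1/((n:ℝ)+2) with hv
    have hu0 : ∀ n, 0 < u n := by
      intro n; rw [hu]; positivity
    have huhalf : ∀ n, u n ≤ 1/2 := by
      intro n
      rw [hu]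
      apply one_div_le_one_div_of_le two_pos
      have : (0:ℝ) ≤ (n:ℝ) := Nat.cast_nonneg n
      linarith
    have huv : ∀ n, u n ≤ v n := by
      intro n; have h1 := huhalf n; rw [hv]; linarith
    have hv1 : ∀ n, v n < 1 := by
      intro n; have := hu0 n; rw [hv]; linarith
    have hutend : Filter.Tendsto u Filter.atTop (nhds 0) := by
      have h1 : Filter.Tendsto (fun n : ℕ => (n:ℝ) + 2) Filter.atTop Filter.atTop :=
        Filter.tendsto_atTop_add_const_right _ 2 tendsto_natCast_atTop_atTop
      have := tendsto_inv_atTop_zero.comp h1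
      simpa [hu, one_div, Function.comp_def] using this
    have hvtend : Filter.Tendsto v Filter.atTop (nhds 1) := by
      have h2 : Filter.Tendsto (fun n : ℕ => (1:ℝ) - u n) Filter.atTop (nhds (1 - 0)) :=
        tendsto_const_nhds.sub hutend
      rw [sub_zero] at h2
      exact h2
    have hcovsub : ∀ n, Set.Icc (u n) (v n) ⊆ Set.Ioo (0:ℝ) 1 := fun n x hx =>
      ⟨lt_of_lt_of_le (hu0 n) hx.1, lt_of_le_of_lt hx.2 (hv1 n)⟩
    have cover : MeasureTheory.AECover
        (MeasureTheory.volume.restrict (Set.Ioo (0:ℝ) 1)) Filter.atTop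
        (fun n => Set.Icc (u n) (v n)) := by
      refine ⟨?_, fun n => measurableSet_Icc⟩
      filter_upwards [MeasureTheory.ae_restrict_mem measurableSet_Ioo] with x hx
      filter_upwards [hutend.eventually_lt_const hx.1, hvtend.eventually_const_lt hx.2]
        with n h1 h2
      exact ⟨h1.le, h2.le⟩
    -- integrability of η over each Icc (u n) (v n)
    have hηIcc : ∀ n, MeasureTheory.IntegrableOn η (Set.Icc (u n) (v n)) := by
      intro n
      obtain ⟨K, -, -, hψint, -⟩ := key (u n) (v n) (hu0 n) (huv n) (hv1 n)
      have h1 : MeasureTheory.IntegrableOn (fun x => F x - ψ x) (Set.Icc (u n) (v n)) :=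
        (hFint.mono_set (hcovsub n)).sub hψint
      refine h1.congr_fun (fun x hx => ?_) measurableSet_Icc
      rw [hF, hψ, hη]; ring
    have hrestr : ∀ n, (MeasureTheory.volume.restrict (Set.Ioo (0:ℝ) 1)).restrict
        (Set.Icc (u n) (v n)) = MeasureTheory.volume.restrict (Set.Icc (u n) (v n)) := by
      intro n
      rw [MeasureTheory.Measure.restrict_restrict measurableSet_Icc,
        Set.inter_eq_self_of_subset_left (hcovsub n)]
    have hfi : ∀ n, MeasureTheory.IntegrableOn η (Set.Icc (u n) (v n))
        (MeasureTheory.volume.restrict (Set.Ioo (0:ℝ) 1)) := by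
      intro n
      unfold MeasureTheory.IntegrableOn
      rw [hrestr n]
      exact hηIcc n
    have hbound : ∀ᶠ n in Filter.atTop,
        (∫ x in Set.Icc (u n) (v n), ‖η x‖
          ∂(MeasureTheory.volume.restrict (Set.Ioo (0:ℝ) 1))) ≤ C₁ + 2 := by
      have hyu : Filter.Tendsto (fun n => y (u n)) Filter.atTop (nhds 0) :=
        y0lim.comp (tendsto_nhdsWithin_iff.mpr
          ⟨hutend, Filter.Eventually.of_forall fun n => hu0 n⟩)
      have hyv : Filter.Tendsto (fun n => y (v n)) Filter.atTop (nhds 0) :=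
        y1lim.comp (tendsto_nhdsWithin_iff.mpr
          ⟨hvtend, Filter.Eventually.of_forall fun n => hv1 n⟩)
      filter_upwards [Metric.tendsto_nhds.mp hyu 1 one_pos,
        Metric.tendsto_nhds.mp hyv 1 one_pos] with n h1 h2
      obtain ⟨K, -, -, hψint, hftc⟩ := key (u n) (v n) (hu0 n) (huv n) (hv1 n)
      rw [hrestr n]
      have hnormeq : Set.EqOn (fun x => ‖η x‖) η (Set.Icc (u n) (v n)) := by
        intro x hx
        simp only [Real.norm_eq_abs]
        exact abs_of_nonneg (hη_nonneg x (hcovsub n hx))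
      rw [MeasureTheory.setIntegral_congr_fun measurableSet_Icc hnormeq,
        MeasureTheory.integral_Icc_eq_integral_Ioc,
        ← intervalIntegral.integral_of_le (huv n)]
      have hψii : IntervalIntegrable ψ MeasureTheory.volume (u n) (v n) :=
        (intervalIntegrable_iff_integrableOn_Icc_of_le (huv n)).mpr hψint
      have hFii : IntervalIntegrable F MeasureTheory.volume (u n) (v n) :=
        (intervalIntegrable_iff_integrableOn_Icc_of_le (huv n)).mpr
          (hFint.mono_set (hcovsub n))
      have hηsplit : (∫ x in (u n)..(v n), η x)
          = (∫ x in (u n)..(v n), F x) - ∫ x in (u n)..(v n), ψ x := by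
        rw [← intervalIntegral.integral_sub hFii hψii]
        apply intervalIntegral.integral_congr
        intro x hx
        rw [hη, hF, hψ]; ring
      rw [hηsplit, hftc (u n) (v n) ⟨le_rfl, huv n⟩ ⟨huv n, le_rfl⟩ (huv n)]
      have hFest : ‖∫ x in (u n)..(v n), F x‖ ≤ C₁ * |v n - u n| := by
        refine intervalIntegral.norm_integral_le_of_norm_le_const fun x hx => ?_
        rw [Set.uIoc_of_le (huv n)] at hx
        have hx01 : x ∈ Set.Icc (0:ℝ) 1 :=
          Set.Ioo_subset_Icc_self (hcovsub n ⟨hx.1.le, hx.2⟩)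
        simpa [Real.norm_eq_abs] using hFb x hx01
      have habs : |v n - u n| ≤ 1 := by
        rw [abs_of_nonneg (sub_nonneg.mpr (huv n))]
        have := hu0 n; have := hv1 n; linarith
      rw [Real.norm_eq_abs] at hFest
      have hF1 : (∫ x in (u n)..(v n), F x) ≤ C₁ :=
        le_trans (le_abs_self _) (le_trans hFest (mul_le_of_le_one_right hC₁ habs))
      rw [Real.dist_eq, sub_zero] at h1 h2
      have hyabs1 := abs_lt.mp h1
      have hyabs2 := abs_lt.mp h2
      linarith [hyabs1.1, hyabs1.2, hyabs2.1, hyabs2.2]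
    have hηint01 : MeasureTheory.IntegrableOn η (Set.Ioo (0:ℝ) 1) :=
      cover.integrable_of_integral_norm_bounded (C₁ + 2) hfi hbound
    have hψint01 : MeasureTheory.IntegrableOn ψ (Set.Ioo (0:ℝ) 1) := by
      have h1 : MeasureTheory.IntegrableOn (fun x => F x - η x) (Set.Ioo (0:ℝ) 1) :=
        hFint.sub hηint01
      refine h1.congr_fun (fun x hx => ?_) measurableSet_Ioo
      rw [hF, hψ, hη]
    set φ : ℝ → ℝ := Set.indicator (Set.Ioo 0 1) ψ with hφdef
    have hφ : MeasureTheory.Integrable φ :=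
      (MeasureTheory.integrable_indicator_iff measurableSet_Ioo).mpr hψint01
    set G : ℝ → ℝ := fun x => ∫ t in (0:ℝ)..x, φ t with hGdef
    have hGc : Continuous G :=
      intervalIntegral.continuous_primitive (fun a b => hφ.intervalIntegrable) 0
    have hGsub : ∀ s t : ℝ, s ∈ Set.Ioo (0:ℝ) 1 → t ∈ Set.Ioo (0:ℝ) 1 → s ≤ t →
        G t - G s = y t - y s := by
      intro s t hs ht hst
      obtain ⟨K, -, -, -, hftc⟩ := key s t hs.1 hst ht.2
      have h1 : G t - G s = ∫ x in s..t, φ x :=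
        intervalIntegral.integral_interval_sub_left hφ.intervalIntegrable
          hφ.intervalIntegrable
      have h2 : (∫ x in s..t, φ x) = ∫ x in s..t, ψ x := by
        apply intervalIntegral.integral_congr
        intro x hx
        rw [Set.uIcc_of_le hst] at hx
        have hxIoo : x ∈ Set.Ioo (0:ℝ) 1 :=
          ⟨lt_of_lt_of_le hs.1 hx.1, lt_of_le_of_lt hx.2 ht.2⟩
        rw [hφdef]
        exact Set.indicator_of_mem hxIoo ψ
      rw [h1, h2, hftc s t ⟨le_rfl, hst⟩ ⟨hst, le_rfl⟩ hst]
    have hG0 : G 0 = 0 := intervalIntegral.integral_same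
    have hyG : ∀ x ∈ Set.Ioo (0:ℝ) 1, y x = G x := by
      intro x hx
      haveI : (nhdsWithin (0:ℝ) (Set.Ioo 0 x)).NeBot :=
        mem_closure_iff_nhdsWithin_neBot.mp
          (by rw [closure_Ioo (ne_of_lt hx.1)]; exact ⟨le_rfl, hx.1.le⟩)
      have t1 : Filter.Tendsto y (nhdsWithin 0 (Set.Ioo 0 x)) (nhds 0) :=
        y0lim.mono_left (nhdsWithin_mono 0 (fun a ha => ha.1))
      have t2 : Filter.Tendsto G (nhdsWithin 0 (Set.Ioo 0 x)) (nhds (G 0)) :=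
        (hGc.tendsto 0).mono_left nhdsWithin_le_nhds
      have t3 : Filter.Tendsto (fun a => G x - G a) (nhdsWithin 0 (Set.Ioo 0 x))
          (nhds (G x - G 0)) := tendsto_const_nhds.sub t2
      have t4 : Filter.Tendsto (fun a => y x - y a) (nhdsWithin 0 (Set.Ioo 0 x))
          (nhds (y x - 0)) := tendsto_const_nhds.sub t1
      have heq : (fun a => y x - y a) =ᶠ[nhdsWithin 0 (Set.Ioo 0 x)]
          (fun a => G x - G a) := by
        filter_upwards [eventually_mem_nhdsWithin] with a ha
        exact (hGsub a x ⟨ha.1, ha.2.trans hx.2⟩ hx ha.2.le).symm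
      have := tendsto_nhds_unique (Filter.Tendsto.congr' heq t4) t3
      rw [hG0, sub_zero, sub_zero] at this
      exact this
    have hG1 : G 1 = 0 := by
      haveI : (nhdsWithin (1:ℝ) (Set.Ioo 0 1)).NeBot :=
        mem_closure_iff_nhdsWithin_neBot.mp
          (by rw [closure_Ioo (by norm_num : (0:ℝ) ≠ 1)]; exact ⟨zero_le_one, le_rfl⟩)
      have t1 : Filter.Tendsto y (nhdsWithin 1 (Set.Ioo 0 1)) (nhds 0) :=
        y1lim.mono_left (nhdsWithin_mono 1 (fun a ha => ha.2))
      have t2 : Filter.Tendsto G (nhdsWithin 1 (Set.Ioo 0 1)) (nhds (G 1)) :=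
        (hGc.tendsto 1).mono_left nhdsWithin_le_nhds
      have heq : y =ᶠ[nhdsWithin 1 (Set.Ioo 0 1)] G := by
        filter_upwards [eventually_mem_nhdsWithin] with a ha
        exact hyG a ha
      exact (tendsto_nhds_unique (Filter.Tendsto.congr' heq t1) t2).symm
    refine ⟨φ, hφ.integrableOn, ?_⟩
    intro x hx
    by_cases hxm : x ∈ Set.Ioo (0:ℝ) 1
    · rw [Set.indicator_of_mem hxm, hyG x hxm]
    · have hx01 : x = 0 ∨ x = 1 := by
        rcases lt_or_ge 0 x with h0 | h0
        · right
          rcases lt_or_ge x 1 with h1 | h1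
          · exact absurd ⟨h0, h1⟩ hxm
          · exact le_antisymm hx.2 h1
        · left
          exact le_antisymm h0 hx.1
      rw [Set.indicator_of_notMem hxm]
      rcases hx01 with rfl | rfl
      · exact hG0.symm
      · exact hG1.symm
end

section
/- If the first-order problem (3.1) with speed c admits a solution, then c ∫₀¹ g(ξ) dξ > ∫₀¹ f(ξ) dξ. -/
open Filter Set MeasureTheory Topology

lemma ftc_fin {s : Set ℝ} (hs : s.Finite) (y F : ℝ → ℝ) :
    ∀ a b : ℝ, a ≤ b → ContinuousOn y (Set.Icc a b) →
      (∀ x ∈ Set.Ioo a b \ s, HasDerivAt y (F x) x) →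
      IntervalIntegrable F MeasureTheory.volume a b →
      ∫ x in a..b, F x = y b - y a := by
  refine Set.Finite.induction_on (motive := fun s _ => ∀ a b : ℝ, a ≤ b → ContinuousOn y (Set.Icc a b) →
      (∀ x ∈ Set.Ioo a b \ s, HasDerivAt y (F x) x) →
      IntervalIntegrable F MeasureTheory.volume a b →
      ∫ x in a..b, F x = y b - y a) s hs ?_ ?_
  · intro a b hab hcont hderiv hint
    exact intervalIntegral.integral_eq_sub_of_hasDeriv_right_of_le hab hcont
      (fun x hx => ((hderiv x ⟨hx, Set.notMem_empty x⟩).hasDerivWithinAt)) hint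
  · intro t s ht hsfin IH a b hab hcont hderiv hint
    by_cases htab : t ∈ Set.Ioo a b
    · have htmem : t ∈ Set.uIcc a b := by
        rw [Set.uIcc_of_le hab]; exact ⟨htab.1.le, htab.2.le⟩
      have hiat : IntervalIntegrable F MeasureTheory.volume a t :=
        hint.mono_set (Set.uIcc_subset_uIcc Set.left_mem_uIcc htmem)
      have hitb : IntervalIntegrable F MeasureTheory.volume t b :=
        hint.mono_set (Set.uIcc_subset_uIcc htmem Set.right_mem_uIcc)
      have h1 : ∫ x in a..t, F x = y t - y a := by
        refine IH a t htab.1.le (hcont.mono (Set.Icc_subset_Icc le_rfl htab.2.le)) ?_ hiat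
        intro x hx
        exact hderiv x ⟨⟨hx.1.1, hx.1.2.trans htab.2⟩, by
          simp only [Set.mem_insert_iff, not_or]
          exact ⟨ne_of_lt hx.1.2, hx.2⟩⟩
      have h2 : ∫ x in t..b, F x = y b - y t := by
        refine IH t b htab.2.le (hcont.mono (Set.Icc_subset_Icc htab.1.le le_rfl)) ?_ hitb
        intro x hx
        exact hderiv x ⟨⟨htab.1.trans hx.1.1, hx.1.2⟩, by
          simp only [Set.mem_insert_iff, not_or]
          exact ⟨ne_of_gt hx.1.1, hx.2⟩⟩
      rw [← intervalIntegral.integral_add_adjacent_intervals hiat hitb, h1, h2]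
      ring
    · refine IH a b hab hcont ?_ hint
      intro x hx
      refine hderiv x ⟨hx.1, ?_⟩
      simp only [Set.mem_insert_iff, not_or]
      exact ⟨fun hxt => htab (hxt ▸ hx.1), hx.2⟩

set_option maxHeartbeats 1000000 in
theorem statement7
    (p : ℝ) (hp : 1 < p)
    (Θ : Set ℝ) (hΘfin : Θ.Finite) (hΘsub : Θ ⊆ Set.Ioo 0 1)
    (f g h d : ℝ → ℝ)
    (hfb : ∃ M, ∀ x ∈ Set.Icc (0:ℝ) 1, |f x| ≤ M)
    (hgb : ∃ M, ∀ x ∈ Set.Icc (0:ℝ) 1, |g x| ≤ M)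
    (hhb : ∃ M, ∀ x ∈ Set.Icc (0:ℝ) 1, |h x| ≤ M)
    (hfc : ∀ x ∈ Set.Icc (0:ℝ) 1 \ Θ, ContinuousWithinAt f (Set.Icc 0 1) x)
    (hgc : ∀ x ∈ Set.Icc (0:ℝ) 1 \ Θ, ContinuousWithinAt g (Set.Icc 0 1) x)
    (hhc : ∀ x ∈ Set.Icc (0:ℝ) 1 \ Θ, ContinuousWithinAt h (Set.Icc 0 1) x)
    (hdc : ∀ x ∈ Set.Ioo (0:ℝ) 1 \ Θ, ContinuousWithinAt d (Set.Ioo 0 1) x)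
    (hdbounds : ∀ a b : ℝ, 0 < a → a < b → b < 1 →
      (∃ m > 0, ∀ x ∈ Set.Icc a b, m ≤ d x) ∧ (∃ M, ∀ x ∈ Set.Icc a b, d x ≤ M))
    (hh0 : h 0 = 0) (hh1 : h 1 = 0)
    (hhpos : ∀ a b : ℝ, 0 < a → a < b → b < 1 → ∃ m > 0, ∀ x ∈ Set.Icc a b, m ≤ h x)
    (κ : ℝ → ℝ) (hκdef : ∀ ξ, κ ξ = d ξ ^ ((1:ℝ)/(p-1)) * h ξ)
    (hκint : MeasureTheory.IntegrableOn κ (Set.Ioo 0 1))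
    (c : ℝ) (y : ℝ → ℝ)
    (hy : IsFOSol p Θ f g κ c y) :
    (∫ ξ in (0:ℝ)..1, f ξ) < c * ∫ ξ in (0:ℝ)..1, g ξ := by
  obtain ⟨hycont, -, hypos, hy0, hy1, hyderiv⟩ := hy
  obtain ⟨Mf, hMf⟩ := hfb
  obtain ⟨Mg, hMg⟩ := hgb
  have hp1 : 0 < p - 1 := by linarith
  have hαpos : 0 < (1:ℝ)/(p-1) := by positivity
  -- measurability and integrability of f and g on [0,1]
  have hΘnull : MeasureTheory.volume Θ = 0 := hΘfin.measure_zero _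
  have hsm : MeasurableSet (Set.Icc (0:ℝ) 1 \ Θ) := measurableSet_Icc.diff hΘfin.measurableSet
  have hae : (Set.Icc (0:ℝ) 1 \ Θ : Set ℝ) =ᵐ[MeasureTheory.volume] Set.Icc (0:ℝ) 1 :=
    MeasureTheory.diff_ae_eq_self.2 (measure_mono_null Set.inter_subset_right hΘnull)
  have hrestr := MeasureTheory.Measure.restrict_congr_set hae
  have key_int : ∀ (u : ℝ → ℝ) (M : ℝ),
      (∀ x ∈ Set.Icc (0:ℝ) 1 \ Θ, ContinuousWithinAt u (Set.Icc 0 1) x) →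
      (∀ x ∈ Set.Icc (0:ℝ) 1, |u x| ≤ M) → IntegrableOn u (Set.Icc (0:ℝ) 1) := by
    intro u M hc hb
    have hcont : ContinuousOn u (Set.Icc (0:ℝ) 1 \ Θ) := fun x hx =>
      (hc x hx).mono Set.diff_subset
    have hmeas : AEStronglyMeasurable u (MeasureTheory.volume.restrict (Set.Icc (0:ℝ) 1)) := by
      rw [← hrestr]
      exact hcont.aestronglyMeasurable hsm
    refine MeasureTheory.Integrable.mono' (integrable_const M) hmeas ?_
    filter_upwards [MeasureTheory.ae_restrict_mem measurableSet_Icc] with x hx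
    simpa using hb x hx
  have hfint : IntegrableOn f (Set.Icc (0:ℝ) 1) := key_int f Mf hfc hMf
  have hgint : IntegrableOn g (Set.Icc (0:ℝ) 1) := key_int g Mg hgc hMg
  have hφint : IntegrableOn (fun ξ => c * g ξ - f ξ) (Set.Icc (0:ℝ) 1) :=
    (hgint.const_mul c).sub hfint
  have hφii : ∀ u v : ℝ, u ∈ Set.Icc (0:ℝ) 1 → v ∈ Set.Icc (0:ℝ) 1 →
      IntervalIntegrable (fun ξ => c * g ξ - f ξ) MeasureTheory.volume u v := by
    intro u v hu hv
    exact (hφint.mono_set (Set.uIcc_subset_Icc hu hv)).intervalIntegrable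
  -- positivity of κ on (0,1)
  have hκpos : ∀ ξ ∈ Set.Ioo (0:ℝ) 1, 0 < κ ξ := by
    intro ξ hξ
    have h2 : ξ < (ξ+1)/2 := by linarith [hξ.2]
    have h3 : (ξ+1)/2 < 1 := by linarith [hξ.2]
    obtain ⟨m, hm, hmd⟩ := (hdbounds ξ ((ξ+1)/2) hξ.1 h2 h3).1
    obtain ⟨mh, hmh, hmhd⟩ := hhpos ξ ((ξ+1)/2) hξ.1 h2 h3
    have hd : 0 < d ξ := lt_of_lt_of_le hm (hmd ξ ⟨le_rfl, h2.le⟩)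
    have hh : 0 < h ξ := lt_of_lt_of_le hmh (hmhd ξ ⟨le_rfl, h2.le⟩)
    rw [hκdef]
    exact mul_pos (Real.rpow_pos_of_pos hd _) hh
  have hqpos : ∀ ξ ∈ Set.Ioo (0:ℝ) 1, 0 < κ ξ / y ξ ^ ((1:ℝ)/(p-1)) := fun ξ hξ =>
    div_pos (hκpos ξ hξ) (Real.rpow_pos_of_pos (hypos ξ hξ) _)
  -- integrability of q on compact subintervals
  have hqint : ∀ a b : ℝ, 0 < a → a ≤ b → b < 1 →
      IntegrableOn (fun ξ => κ ξ / y ξ ^ ((1:ℝ)/(p-1))) (Set.Icc a b) := by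
    intro a b ha hab hb
    have hsub : Set.Icc a b ⊆ Set.Ioo (0:ℝ) 1 := fun x hx =>
      ⟨lt_of_lt_of_le ha hx.1, lt_of_le_of_lt hx.2 hb⟩
    have hycont' : ContinuousOn y (Set.Icc a b) := hycont.mono hsub
    have hw : ContinuousOn (fun x => (y x ^ ((1:ℝ)/(p-1)))⁻¹) (Set.Icc a b) := by
      apply ContinuousOn.inv₀
      · exact hycont'.rpow_const (fun x hx => Or.inl (ne_of_gt (hypos x (hsub hx))))
      · exact fun x hx => ne_of_gt (Real.rpow_pos_of_pos (hypos x (hsub hx)) _)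
    obtain ⟨x0, -, hx0⟩ := isCompact_Icc.exists_isMaxOn (Set.nonempty_Icc.2 hab) hw
    set W := (y x0 ^ ((1:ℝ)/(p-1)))⁻¹ with hW
    have hκ' : IntegrableOn κ (Set.Icc a b) := hκint.mono_set hsub
    have hmeas : AEStronglyMeasurable (fun ξ => κ ξ / y ξ ^ ((1:ℝ)/(p-1)))
        (MeasureTheory.volume.restrict (Set.Icc a b)) := by
      have h2 : AEMeasurable (fun x => y x ^ ((1:ℝ)/(p-1))) (MeasureTheory.volume.restrict (Set.Icc a b)) :=
        ((hycont'.rpow_const (fun x hx => Or.inl (ne_of_gt (hypos x (hsub hx))))).aemeasurable measurableSet_Icc)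
      exact (hκ'.aemeasurable.div h2).aestronglyMeasurable
    refine MeasureTheory.Integrable.mono' (hκ'.norm.const_mul W) hmeas ?_
    filter_upwards [MeasureTheory.ae_restrict_mem measurableSet_Icc] with x hx
    have hyp := Real.rpow_pos_of_pos (hypos x (hsub hx)) ((1:ℝ)/(p-1))
    have hWx : (y x ^ ((1:ℝ)/(p-1)))⁻¹ ≤ W := hx0 hx
    calc ‖κ x / y x ^ ((1:ℝ)/(p-1))‖ = ‖κ x‖ * (y x ^ ((1:ℝ)/(p-1)))⁻¹ := by
          rw [Real.norm_eq_abs, Real.norm_eq_abs, abs_div, abs_of_pos hyp, div_eq_mul_inv]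
      _ ≤ ‖κ x‖ * W := mul_le_mul_of_nonneg_left hWx (norm_nonneg _)
      _ = W * ‖κ x‖ := mul_comm _ _
  -- lower bound δ for q on [1/4,3/4]
  obtain ⟨md, hmd0, hmd⟩ := (hdbounds (1/4) (3/4) (by norm_num) (by norm_num) (by norm_num)).1
  obtain ⟨mh, hmh0, hmh⟩ := hhpos (1/4) (3/4) (by norm_num) (by norm_num) (by norm_num)
  have hsub34 : Set.Icc (1/4:ℝ) (3/4) ⊆ Set.Ioo (0:ℝ) 1 := fun x hx =>
    ⟨by linarith [hx.1], by linarith [hx.2]⟩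
  obtain ⟨x1, hx1m, hx1⟩ := isCompact_Icc.exists_isMaxOn
    (Set.nonempty_Icc.2 (by norm_num : (1/4:ℝ) ≤ 3/4)) (hycont.mono hsub34)
  have hY : 0 < y x1 := hypos x1 (hsub34 hx1m)
  obtain ⟨δ, hδ, hqδ⟩ : ∃ δ : ℝ, 0 < δ ∧
      ∀ x ∈ Set.Icc (1/4:ℝ) (3/4), δ ≤ κ x / y x ^ ((1:ℝ)/(p-1)) := by
    refine ⟨(md ^ ((1:ℝ)/(p-1)) * mh) / y x1 ^ ((1:ℝ)/(p-1)),
      div_pos (mul_pos (Real.rpow_pos_of_pos hmd0 _) hmh0) (Real.rpow_pos_of_pos hY _), ?_⟩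
    intro x hx
    have hdx : 0 < d x := lt_of_lt_of_le hmd0 (hmd x hx)
    have hκlow : md ^ ((1:ℝ)/(p-1)) * mh ≤ κ x := by
      rw [hκdef]
      exact mul_le_mul (Real.rpow_le_rpow hmd0.le (hmd x hx) hαpos.le) (hmh x hx)
        hmh0.le (Real.rpow_nonneg hdx.le _)
    have hyx : 0 < y x ^ ((1:ℝ)/(p-1)) := Real.rpow_pos_of_pos (hypos x (hsub34 hx)) _
    have hyle : y x ^ ((1:ℝ)/(p-1)) ≤ y x1 ^ ((1:ℝ)/(p-1)) :=
      Real.rpow_le_rpow (hypos x (hsub34 hx)).le (hx1 hx) hαpos.le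
    exact div_le_div₀ (le_trans (mul_pos (Real.rpow_pos_of_pos hmd0 _) hmh0).le hκlow) hκlow hyx hyle
  -- main identity on [a,b]
  have key : ∀ a b : ℝ, 0 < a → a ≤ 1/4 → 3/4 ≤ b → b < 1 →
      δ/2 + (y b - y a) ≤ ∫ x in a..b, (c * g x - f x) := by
    intro a b ha ha4 hb4 hb
    have hab : a ≤ b := by linarith
    have hsub : Set.Icc a b ⊆ Set.Ioo (0:ℝ) 1 := fun x hx =>
      ⟨lt_of_lt_of_le ha hx.1, lt_of_le_of_lt hx.2 hb⟩
    have hqIcc := hqint a b ha hab hb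
    have hqii : ∀ u v : ℝ, u ∈ Set.Icc a b → v ∈ Set.Icc a b →
        IntervalIntegrable (fun ξ => κ ξ / y ξ ^ ((1:ℝ)/(p-1))) MeasureTheory.volume u v :=
      fun u v hu hv => (hqIcc.mono_set (Set.uIcc_subset_Icc hu hv)).intervalIntegrable
    have hφab : IntervalIntegrable (fun ξ => c * g ξ - f ξ) MeasureTheory.volume a b :=
      hφii a b ⟨ha.le, by linarith⟩ ⟨by linarith, hb.le⟩
    have hqab : IntervalIntegrable (fun ξ => κ ξ / y ξ ^ ((1:ℝ)/(p-1))) MeasureTheory.volume a b :=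
      hqii a b ⟨le_rfl, hab⟩ ⟨hab, le_rfl⟩
    have hF : ∫ x in a..b, (c * g x - f x - κ x / y x ^ ((1:ℝ)/(p-1))) = y b - y a := by
      refine ftc_fin hΘfin y _ a b hab (hycont.mono hsub) ?_ (hφab.sub hqab)
      intro x hx
      exact hyderiv x ⟨hsub (Set.Ioo_subset_Icc_self hx.1), hx.2⟩
    rw [intervalIntegral.integral_sub hφab hqab] at hF
    -- lower bound for ∫ q
    have hmem14 : (1/4:ℝ) ∈ Set.Icc a b := ⟨ha4, by linarith⟩
    have hmem34 : (3/4:ℝ) ∈ Set.Icc a b := ⟨by linarith, hb4⟩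
    have hmema : a ∈ Set.Icc a b := ⟨le_rfl, hab⟩
    have hmemb : b ∈ Set.Icc a b := ⟨hab, le_rfl⟩
    have hsplit1 := intervalIntegral.integral_add_adjacent_intervals
      (hqii a (1/4) hmema hmem14) (hqii (1/4) b hmem14 hmemb)
    have hsplit2 := intervalIntegral.integral_add_adjacent_intervals
      (hqii (1/4) (3/4) hmem14 hmem34) (hqii (3/4) b hmem34 hmemb)
    have h1 : 0 ≤ ∫ x in a..(1/4:ℝ), κ x / y x ^ ((1:ℝ)/(p-1)) :=
      intervalIntegral.integral_nonneg ha4 (fun u hu =>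
        (hqpos u (hsub ⟨hu.1, by linarith [hu.2]⟩)).le)
    have h3 : 0 ≤ ∫ x in (3/4:ℝ)..b, κ x / y x ^ ((1:ℝ)/(p-1)) :=
      intervalIntegral.integral_nonneg hb4 (fun u hu =>
        (hqpos u (hsub ⟨by linarith [hu.1], hu.2⟩)).le)
    have h2 : δ/2 ≤ ∫ x in (1/4:ℝ)..(3/4:ℝ), κ x / y x ^ ((1:ℝ)/(p-1)) := by
      have := intervalIntegral.integral_mono_on (by norm_num : (1/4:ℝ) ≤ 3/4)
        (intervalIntegrable_const (c := δ)) (hqii (1/4) (3/4) hmem14 hmem34) hqδ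
      rw [intervalIntegral.integral_const] at this
      calc δ/2 = ((3:ℝ)/4 - 1/4) • δ := by norm_num; ring
        _ ≤ _ := this
    have hq2 : δ/2 ≤ ∫ x in a..b, κ x / y x ^ ((1:ℝ)/(p-1)) := by
      rw [← hsplit1, ← hsplit2]
      linarith
    linarith
  -- choose a near 0 and b near 1
  have hC0 : 0 ≤ |c| * Mg + Mf := by
    have h1 := abs_nonneg (g 0)
    have h2 := abs_nonneg (f 0)
    have := hMf 0 (by norm_num)
    have := hMg 0 (by norm_num)
    have := abs_nonneg c
    nlinarith
  obtain ⟨C, hC0', hφbound⟩ : ∃ C : ℝ, 0 ≤ C ∧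
      ∀ x ∈ Set.Icc (0:ℝ) 1, ‖c * g x - f x‖ ≤ C := by
    refine ⟨|c| * Mg + Mf, hC0, ?_⟩
    intro x hx
    have h1 := hMf x hx
    have h2 := hMg x hx
    calc ‖c * g x - f x‖ ≤ |c * g x| + |f x| := abs_sub _ _
      _ = |c| * |g x| + |f x| := by rw [abs_mul]
      _ ≤ |c| * Mg + Mf := by
          have := abs_nonneg c
          nlinarith [abs_nonneg (g x)]
  have hC1 : (0:ℝ) < C + 1 := by linarith
  obtain ⟨a, hya, ha0, ha1⟩ : ∃ a : ℝ, y a < δ/8 ∧ a ∈ Set.Ioi (0:ℝ) ∧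
      a < min (1/4) (δ/(8*(C+1))) := by
    have e1 : ∀ᶠ a in nhdsWithin (0:ℝ) (Set.Ioi 0), y a < δ/8 :=
      hy0.eventually_lt_const (by positivity)
    have e2 : ∀ᶠ a in nhdsWithin (0:ℝ) (Set.Ioi 0), a ∈ Set.Ioi (0:ℝ) :=
      eventually_mem_nhdsWithin
    have e3 : ∀ᶠ a in nhdsWithin (0:ℝ) (Set.Ioi 0), a < min (1/4) (δ/(8*(C+1))) :=
      mem_nhdsWithin_of_mem_nhds (Iio_mem_nhds (by positivity))
    obtain ⟨a, h1, h2, h3⟩ := ((e1.and (e2.and e3)).exists)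
    exact ⟨a, h1, h2, h3⟩
  obtain ⟨b, hyb, hb1, hb0⟩ : ∃ b : ℝ, y b < δ/8 ∧ b ∈ Set.Iio (1:ℝ) ∧
      max (3/4) (1 - δ/(8*(C+1))) < b := by
    have e1 : ∀ᶠ b in nhdsWithin (1:ℝ) (Set.Iio 1), y b < δ/8 :=
      hy1.eventually_lt_const (by positivity)
    have e2 : ∀ᶠ b in nhdsWithin (1:ℝ) (Set.Iio 1), b ∈ Set.Iio (1:ℝ) :=
      eventually_mem_nhdsWithin
    have e3 : ∀ᶠ b in nhdsWithin (1:ℝ) (Set.Iio 1), max (3/4) (1 - δ/(8*(C+1))) < b := by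
      refine mem_nhdsWithin_of_mem_nhds (Ioi_mem_nhds ?_)
      have : 1 - δ/(8*(C+1)) < 1 := by
        have : 0 < δ/(8*(C+1)) := by positivity
        linarith
      exact max_lt (by norm_num) this
    obtain ⟨b, h1, h2, h3⟩ := ((e1.and (e2.and e3)).exists)
    exact ⟨b, h1, h2, h3⟩
  have ha0' : 0 < a := ha0
  have hb1' : b < 1 := hb1
  have ha4 : a ≤ 1/4 := (lt_of_lt_of_le ha1 (min_le_left _ _)).le
  have hb4 : 3/4 ≤ b := (lt_of_le_of_lt (le_max_left _ _) hb0).le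
  have haC : a ≤ δ/(8*(C+1)) := (lt_of_lt_of_le ha1 (min_le_right _ _)).le
  have hbC : 1 - b ≤ δ/(8*(C+1)) := by
    have := lt_of_le_of_lt (le_max_right (3/4:ℝ) _) hb0
    linarith
  have ha01 : a ∈ Set.Icc (0:ℝ) 1 := ⟨ha0'.le, by linarith⟩
  have hb01 : b ∈ Set.Icc (0:ℝ) 1 := ⟨by linarith, hb1'.le⟩
  have h001 : (0:ℝ) ∈ Set.Icc (0:ℝ) 1 := by norm_num
  have h101 : (1:ℝ) ∈ Set.Icc (0:ℝ) 1 := by norm_num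
  -- split the integral
  have hsplit1 := intervalIntegral.integral_add_adjacent_intervals
    (hφii a b ha01 hb01) (hφii b 1 hb01 h101)
  have hsplit2 := intervalIntegral.integral_add_adjacent_intervals
    (hφii 0 a h001 ha01) (hφii a 1 ha01 h101)
  -- tail bounds
  have hB1 : ‖∫ x in (0:ℝ)..a, (c * g x - f x)‖ ≤ C * a := by
    have := intervalIntegral.norm_integral_le_of_norm_le_const (C := C)
      (f := fun x => c * g x - f x) (a := 0) (b := a) ?_
    · simpa [abs_of_nonneg ha0'.le] using this
    · intro x hx
      rw [Set.uIoc_of_le ha0'.le] at hx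
      exact hφbound x ⟨hx.1.le, by linarith [hx.2]⟩
  have hB3 : ‖∫ x in b..(1:ℝ), (c * g x - f x)‖ ≤ C * (1 - b) := by
    have := intervalIntegral.norm_integral_le_of_norm_le_const (C := C)
      (f := fun x => c * g x - f x) (a := b) (b := 1) ?_
    · have h1b : |1 - b| = 1 - b := abs_of_nonneg (by linarith)
      rw [h1b] at this
      exact this
    · intro x hx
      rw [Set.uIoc_of_le hb1'.le] at hx
      exact hφbound x ⟨by linarith [hx.1], hx.2⟩
  have hCa : C * a ≤ δ/8 := by
    have h8 : a * (8*(C+1)) ≤ δ := by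
      rw [← le_div_iff₀ (by positivity)]
      exact haC
    nlinarith
  have hCb : C * (1 - b) ≤ δ/8 := by
    have h8 : (1 - b) * (8*(C+1)) ≤ δ := by
      rw [← le_div_iff₀ (by positivity)]
      exact hbC
    nlinarith
  -- apply the key estimate
  have hkey := key a b ha0' ha4 hb4 hb1'
  have hybpos : 0 < y b := hypos b ⟨by linarith, hb1'⟩
  have hmid : 3*δ/8 ≤ ∫ x in a..b, (c * g x - f x) := by
    have : δ/2 + (y b - y a) ≥ δ/2 + (0 - δ/8) := by linarith
    linarith
  rw [Real.norm_eq_abs] at hB1 hB3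
  have hlow1 : -(C * a) ≤ ∫ x in (0:ℝ)..a, (c * g x - f x) := (abs_le.1 hB1).1
  have hlow3 : -(C * (1 - b)) ≤ ∫ x in b..(1:ℝ), (c * g x - f x) := (abs_le.1 hB3).1
  have hpos01 : 0 < ∫ x in (0:ℝ)..1, (c * g x - f x) := by
    rw [← hsplit2, ← hsplit1]
    linarith
  have hfii01 : IntervalIntegrable f MeasureTheory.volume 0 1 :=
    (hfint.mono_set (Set.uIcc_subset_Icc h001 h101)).intervalIntegrable
  have hgii01 : IntervalIntegrable g MeasureTheory.volume 0 1 :=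
    (hgint.mono_set (Set.uIcc_subset_Icc h001 h101)).intervalIntegrable
  have heq : ∫ x in (0:ℝ)..1, (c * g x - f x)
      = c * (∫ x in (0:ℝ)..1, g x) - ∫ x in (0:ℝ)..1, f x := by
    rw [intervalIntegral.integral_sub (hgii01.const_mul c) hfii01,
      intervalIntegral.integral_const_mul]
  linarith [heq ▸ hpos01]
end

section
/- For every fixed c ∈ ℝ, the first-order problem (3.1) admits at most one solution: if y₁ and y₂ are both solutions of (3.1) with speed c, then y₁(ξ) = y₂(ξ) for all ξ ∈ (0,1). -/
open Filter Set MeasureTheory Topology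

theorem fosol_key (p : ℝ) (hp : 1 < p) (Θ : Set ℝ) (hΘfin : Θ.Finite)
    (f g κ : ℝ → ℝ) (hκpos : ∀ ξ ∈ Set.Ioo (0:ℝ) 1, 0 < κ ξ)
    (c : ℝ) (y₁ y₂ : ℝ → ℝ)
    (hy₁ : IsFOSol p Θ f g κ c y₁) (hy₂ : IsFOSol p Θ f g κ c y₂)
    (ξ₀ : ℝ) (hξ₀ : ξ₀ ∈ Set.Ioo (0:ℝ) 1) : ¬ y₂ ξ₀ < y₁ ξ₀ := by
  intro hlt
  obtain ⟨hc₁, -, hpos₁, -, hT₁, hd₁⟩ := hy₁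
  obtain ⟨hc₂, -, hpos₂, -, hT₂, hd₂⟩ := hy₂
  set w : ℝ → ℝ := fun x => y₁ x - y₂ x with hw
  have hwc : ContinuousOn w (Set.Ioo 0 1) := hc₁.sub hc₂
  have hε0 : 0 < w ξ₀ := sub_pos.mpr hlt
  have hp1 : (0:ℝ) < p - 1 := sub_pos.mpr hp
  have hα : 0 < (1:ℝ)/(p-1) := by positivity
  have hwd : ∀ ξ ∈ Set.Ioo (0:ℝ) 1 \ Θ,
      HasDerivAt w (κ ξ / y₂ ξ ^ ((1:ℝ)/(p-1)) - κ ξ / y₁ ξ ^ ((1:ℝ)/(p-1))) ξ := by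
    intro ξ hξ
    have := (hd₁ ξ hξ).sub (hd₂ ξ hξ)
    refine this.congr_deriv ?_
    ring
  have hwle : ∀ x, 0 < w x → y₂ x ≤ y₁ x := fun x hx => by
    have : 0 < y₁ x - y₂ x := hx
    linarith
  have hTw : Filter.Tendsto w (nhdsWithin 1 (Set.Iio 1)) (nhds 0) := by
    have := hT₁.sub hT₂
    simpa using this
  clear_value w
  set ε := w ξ₀ with hε
  clear_value ε
  have hclaim : ∀ x ∈ Set.Ico ξ₀ 1, ε ≤ w x := by
    by_contra hcon
    push_neg at hcon
    obtain ⟨x₁, hx₁, hx₁w⟩ := hcon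
    set B := {x | x ∈ Set.Ico ξ₀ 1 ∧ w x < ε} with hB
    have hBne : B.Nonempty := ⟨x₁, hx₁, hx₁w⟩
    have hBbd : BddBelow B := ⟨ξ₀, fun x hx => hx.1.1⟩
    set b := sInf B with hbdef
    clear_value b
    have hξ₀b : ξ₀ ≤ b := by rw [hbdef]; exact le_csInf hBne fun x hx => hx.1.1
    have hbx₁ : b ≤ x₁ := by rw [hbdef]; exact csInf_le hBbd ⟨hx₁, hx₁w⟩
    have hbI : b ∈ Set.Ioo (0:ℝ) 1 := ⟨lt_of_lt_of_le hξ₀.1 hξ₀b, lt_of_le_of_lt hbx₁ hx₁.2⟩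
    have hwcb : ContinuousAt w b := hwc.continuousAt (isOpen_Ioo.mem_nhds hbI)
    -- `w b ≥ ε`
    have hwb : ε ≤ w b := by
      by_contra hwb
      push_neg at hwb
      have hev : ∀ᶠ x in nhds b, w x < ε :=
        hwcb.eventually_lt continuousAt_const hwb
      rw [Metric.eventually_nhds_iff] at hev
      obtain ⟨η, hη, hηw⟩ := hev
      rcases eq_or_lt_of_le hξ₀b with hbe | hbl
      · rw [← hbe] at hwb; rw [hε] at hwb; exact lt_irrefl _ hwb
      · have hxlt : max ξ₀ (b - η/2) < b := max_lt hbl (by linarith)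
        have hxd : dist (max ξ₀ (b - η/2)) b < η := by
          rw [Real.dist_eq, abs_of_nonpos (by linarith)]
          have : b - η/2 ≤ max ξ₀ (b - η/2) := le_max_right _ _
          linarith
        have hxB : max ξ₀ (b - η/2) ∈ B :=
          ⟨⟨le_max_left _ _, lt_trans hxlt hbI.2⟩, hηw hxd⟩
        have := csInf_le hBbd hxB
        rw [← hbdef] at this
        exact absurd this (not_le.mpr hxlt)
    -- continuity: `w > ε/2` near `b`
    obtain ⟨δ₁, hδ₁, hδ₁w⟩ : ∃ δ₁ > 0, ∀ x, dist x b < δ₁ → |w x - w b| < ε/2 := by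
      have := Metric.continuousAt_iff.mp hwcb (ε/2) (by linarith)
      obtain ⟨δ, hδ, hδw⟩ := this
      exact ⟨δ, hδ, fun x hx => by simpa [Real.dist_eq] using hδw hx⟩
    -- avoid Θ to the right of b
    obtain ⟨δ₂, hδ₂, hδ₂Θ⟩ : ∃ δ₂ > 0, ∀ x, dist x b < δ₂ → x ∉ Θ \ {b} := by
      have hcl : IsClosed (Θ \ {b}) := (hΘfin.subset Set.diff_subset).isClosed
      have hbn : b ∈ (Θ \ {b})ᶜ := by simp
      obtain ⟨δ, hδ, hball⟩ := Metric.isOpen_iff.mp hcl.isOpen_compl b hbn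
      exact ⟨δ, hδ, fun x hx => hball hx⟩
    set δ := min (min δ₁ δ₂) (1 - b) / 2 with hδdef
    clear_value δ
    have hδ0 : 0 < δ := by
      have h2 : (0:ℝ) < 1 - b := by linarith [hbI.2]
      rw [hδdef]; positivity
    have hδlt₁ : δ < δ₁ := by
      have h1 : min (min δ₁ δ₂) (1 - b) ≤ δ₁ := le_trans (min_le_left _ _) (min_le_left _ _)
      rw [hδdef]; linarith
    have hδlt₂ : δ < δ₂ := by
      have h1 : min (min δ₁ δ₂) (1 - b) ≤ δ₂ := le_trans (min_le_left _ _) (min_le_right _ _)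
      rw [hδdef]; linarith
    have hδlt₃ : δ < 1 - b := by
      have h1 : min (min δ₁ δ₂) (1 - b) ≤ 1 - b := min_le_right _ _
      rw [hδdef]; linarith [hbI.2]
    set e := b + δ with hedef
    clear_value e
    have hbe : b < e := by simp [hedef]; linarith
    have hIcc : Set.Icc b e ⊆ Set.Ioo 0 1 := fun x hx =>
      ⟨lt_of_lt_of_le hbI.1 hx.1, lt_of_le_of_lt hx.2 (by simp [hedef]; linarith)⟩
    have hint : interior (Set.Icc b e) = Set.Ioo b e := interior_Icc
    -- monotone on [b, e]
    have hmono : MonotoneOn w (Set.Icc b e) := by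
      apply monotoneOn_of_deriv_nonneg (convex_Icc b e) (hwc.mono hIcc)
      · rw [hint]
        intro x hx
        have hxI : x ∈ Set.Ioo (0:ℝ) 1 := hIcc ⟨hx.1.le, hx.2.le⟩
        have hxd : dist x b < δ₂ := by
          rw [Real.dist_eq, abs_of_pos (by linarith [hx.1])]
          have := hx.2; simp [hedef] at this; linarith
        have hxΘ : x ∉ Θ := fun hxΘ => hδ₂Θ x hxd ⟨hxΘ, by simp [ne_of_gt hx.1]⟩
        exact ((hwd x ⟨hxI, hxΘ⟩).differentiableAt).differentiableWithinAt
      · rw [hint]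
        intro x hx
        have hxI : x ∈ Set.Ioo (0:ℝ) 1 := hIcc ⟨hx.1.le, hx.2.le⟩
        have hxd₂ : dist x b < δ₂ := by
          rw [Real.dist_eq, abs_of_pos (by linarith [hx.1])]
          have := hx.2; simp [hedef] at this; linarith
        have hxd₁ : dist x b < δ₁ := by
          rw [Real.dist_eq, abs_of_pos (by linarith [hx.1])]
          have := hx.2; simp [hedef] at this; linarith
        have hxΘ : x ∉ Θ := fun hxΘ => hδ₂Θ x hxd₂ ⟨hxΘ, by simp [ne_of_gt hx.1]⟩
        have hwx : ε/2 < w x := by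
          have := abs_lt.mp (hδ₁w x hxd₁)
          linarith [this.1, hwb]
        have hyle : y₂ x ≤ y₁ x := hwle x (by linarith)
        have hy2 : 0 < y₂ x := hpos₂ x hxI
        rw [(hwd x ⟨hxI, hxΘ⟩).deriv]
        have hrle : y₂ x ^ ((1:ℝ)/(p-1)) ≤ y₁ x ^ ((1:ℝ)/(p-1)) :=
          Real.rpow_le_rpow hy2.le hyle hα.le
        have hr2 : 0 < y₂ x ^ ((1:ℝ)/(p-1)) := Real.rpow_pos_of_pos hy2 _
        have hκx : 0 ≤ κ x := (hκpos x hxI).le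
        have : κ x / y₁ x ^ ((1:ℝ)/(p-1)) ≤ κ x / y₂ x ^ ((1:ℝ)/(p-1)) :=
          div_le_div_of_nonneg_left hκx hr2 hrle
        linarith
    -- a point of B inside [b, e]
    obtain ⟨x, hxB, hxlt⟩ := Real.lt_sInf_add_pos hBne hδ0
    rw [← hbdef] at hxlt
    have hbx : b ≤ x := by rw [hbdef]; exact csInf_le hBbd hxB
    have hxe : x ≤ e := by simp [hedef]; linarith [hxlt]
    have := hmono (Set.left_mem_Icc.mpr hbe.le) ⟨hbx, hxe⟩ hbx
    have : ε ≤ w x := le_trans hwb this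
    exact absurd this (not_le.mpr hxB.2)
  -- contradiction with w → 0 at 1⁻
  have hev : ∀ᶠ x in nhdsWithin 1 (Set.Iio 1), ε ≤ w x := by
    filter_upwards [Ioo_mem_nhdsLT_of_mem (by constructor <;> [exact hξ₀.2; exact le_refl 1] :
      (1:ℝ) ∈ Set.Ioc ξ₀ 1)] with x hx
    exact hclaim x ⟨hx.1.le, hx.2⟩
  have : ε ≤ 0 := ge_of_tendsto hTw hev
  linarith

theorem statement8
    (p : ℝ) (hp : 1 < p)
    (Θ : Set ℝ) (hΘfin : Θ.Finite) (hΘsub : Θ ⊆ Set.Ioo 0 1)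
    (f g h d : ℝ → ℝ)
    (hfb : ∃ M, ∀ x ∈ Set.Icc (0:ℝ) 1, |f x| ≤ M)
    (hgb : ∃ M, ∀ x ∈ Set.Icc (0:ℝ) 1, |g x| ≤ M)
    (hhb : ∃ M, ∀ x ∈ Set.Icc (0:ℝ) 1, |h x| ≤ M)
    (hfc : ∀ x ∈ Set.Icc (0:ℝ) 1 \ Θ, ContinuousWithinAt f (Set.Icc 0 1) x)
    (hgc : ∀ x ∈ Set.Icc (0:ℝ) 1 \ Θ, ContinuousWithinAt g (Set.Icc 0 1) x)
    (hhc : ∀ x ∈ Set.Icc (0:ℝ) 1 \ Θ, ContinuousWithinAt h (Set.Icc 0 1) x)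
    (hdc : ∀ x ∈ Set.Ioo (0:ℝ) 1 \ Θ, ContinuousWithinAt d (Set.Ioo 0 1) x)
    (hdbounds : ∀ a b : ℝ, 0 < a → a < b → b < 1 →
      (∃ m > 0, ∀ x ∈ Set.Icc a b, m ≤ d x) ∧ (∃ M, ∀ x ∈ Set.Icc a b, d x ≤ M))
    (hh0 : h 0 = 0) (hh1 : h 1 = 0)
    (hhpos : ∀ a b : ℝ, 0 < a → a < b → b < 1 → ∃ m > 0, ∀ x ∈ Set.Icc a b, m ≤ h x)
    (κ : ℝ → ℝ) (hκdef : ∀ ξ, κ ξ = d ξ ^ ((1:ℝ)/(p-1)) * h ξ)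
    (hκint : MeasureTheory.IntegrableOn κ (Set.Ioo 0 1))
    (c : ℝ) (y₁ y₂ : ℝ → ℝ)
    (hy₁ : IsFOSol p Θ f g κ c y₁) (hy₂ : IsFOSol p Θ f g κ c y₂) :
    ∀ ξ ∈ Set.Ioo (0:ℝ) 1, y₁ ξ = y₂ ξ := by
  have hκpos : ∀ ξ ∈ Set.Ioo (0:ℝ) 1, 0 < κ ξ := by
    intro ξ hξ
    obtain ⟨hξ0, hξ1⟩ := hξ
    have ha : (0:ℝ) < ξ/2 := by linarith
    have hab : ξ/2 < (ξ+1)/2 := by linarith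
    have hb1 : (ξ+1)/2 < 1 := by linarith
    have hmem : ξ ∈ Set.Icc (ξ/2) ((ξ+1)/2) := ⟨by linarith, by linarith⟩
    obtain ⟨⟨m, hm, hdm⟩, -⟩ := hdbounds (ξ/2) ((ξ+1)/2) ha hab hb1
    obtain ⟨m', hm', hhm⟩ := hhpos (ξ/2) ((ξ+1)/2) ha hab hb1
    have hd : 0 < d ξ := lt_of_lt_of_le hm (hdm ξ hmem)
    have hh : 0 < h ξ := lt_of_lt_of_le hm' (hhm ξ hmem)
    rw [hκdef]
    exact mul_pos (Real.rpow_pos_of_pos hd _) hh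
  intro ξ hξ
  have h1 := fosol_key p hp Θ hΘfin f g κ hκpos c y₁ y₂ hy₁ hy₂ ξ hξ
  have h2 := fosol_key p hp Θ hΘfin f g κ hκpos c y₂ y₁ hy₂ hy₁ ξ hξ
  exact le_antisymm (not_lt.mp h1) (not_lt.mp h2)
end

section
/- Assume φ is bounded on [ε̄, 1−ε̄]. For x ∈ (0,1] set Φ₀(x) := (1/x)∫₀^x φ(τ) dτ and, for ε ∈ (0,ε̄), Φ_ε(x) := (1/x)∫₀^x φ_ε(τ) dτ. Then for every pair of sequences x_n ∈ (0,1] and ε_n ∈ [0,ε̄) with x_n → x̄ and ε_n → 0 (where Φ_{ε_n} means Φ₀ when ε_n = 0): if x̄ > 0 then Φ_{ε_n}(x_n) → Φ₀(x̄); if x̄ = 0 then liminf_{x→0⁺} Φ₀(x) ≤ liminf_{n→∞} Φ_{ε_n}(x_n) ≤ limsup_{n→∞} Φ_{ε_n}(x_n) ≤ limsup_{x→0⁺} Φ₀(x). -/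
open Filter Set MeasureTheory Topology

theorem statement10
    (φ : ℝ → ℝ) (A : Finset ℝ) (hA : (A : Set ℝ) ⊆ Set.Ioo 0 1)
    (hφint : MeasureTheory.IntegrableOn φ (Set.Ioo 0 1))
    (hφcont : ∀ x ∈ Set.Ioo (0:ℝ) 1, x ∉ A → ContinuousWithinAt φ (Set.Ioo 0 1) x)
    (εbar : ℝ)
    (hεbar : εbar = sInf {t : ℝ | ∃ a ∈ (A : Set ℝ) ∪ {0, 1}, ∃ b ∈ (A : Set ℝ) ∪ {0, 1},
      a < b ∧ t = b - a} / 2)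
    (φε : ℝ → ℝ → ℝ)
    (hφεA : ∀ ε ∈ Set.Ico (0:ℝ) εbar, ∀ a ∈ A, ∀ x ∈ Set.Icc (a - ε) (a + ε),
      φε ε x = φ (a - ε) + (φ (a + ε) - φ (a - ε)) / (2 * ε) * (x - (a - ε)))
    (hφεB : ∀ ε ∈ Set.Ico (0:ℝ) εbar, ∀ x : ℝ,
      (∀ a ∈ A, x ∉ Set.Icc (a - ε) (a + ε)) → φε ε x = φ x)
    (hφbdd : ∃ M, ∀ x ∈ Set.Icc εbar (1 - εbar), |φ x| ≤ M)
    (xbar : ℝ) (xn : ℕ → ℝ) (εn : ℕ → ℝ)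
    (hxn : ∀ n, xn n ∈ Set.Ioc (0:ℝ) 1) (hεn : ∀ n, εn n ∈ Set.Ico (0:ℝ) εbar)
    (hx : Filter.Tendsto xn Filter.atTop (nhds xbar))
    (hε : Filter.Tendsto εn Filter.atTop (nhds 0)) :
    (0 < xbar →
      Filter.Tendsto (fun n => (1 / xn n) * ∫ τ in (0:ℝ)..(xn n), φε (εn n) τ)
        Filter.atTop (nhds ((1 / xbar) * ∫ τ in (0:ℝ)..xbar, φ τ))) ∧
    (xbar = 0 →
      Filter.liminf (fun x : ℝ => (((1 / x) * ∫ τ in (0:ℝ)..x, φ τ : ℝ) : EReal))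
          (nhdsWithin 0 (Set.Ioi 0)) ≤
        Filter.liminf (fun n => (((1 / xn n) * ∫ τ in (0:ℝ)..(xn n), φε (εn n) τ : ℝ) : EReal))
          Filter.atTop ∧
      Filter.limsup (fun n => (((1 / xn n) * ∫ τ in (0:ℝ)..(xn n), φε (εn n) τ : ℝ) : EReal))
          Filter.atTop ≤
        Filter.limsup (fun x : ℝ => (((1 / x) * ∫ τ in (0:ℝ)..x, φ τ : ℝ) : EReal))
          (nhdsWithin 0 (Set.Ioi 0))) := by
  classical
  obtain ⟨M₀, hM₀⟩ := hφbdd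
  set M : ℝ := max M₀ 0 with hMdef
  have hM : ∀ x ∈ Set.Icc εbar (1 - εbar), |φ x| ≤ M :=
    fun x hx => (hM₀ x hx).trans (le_max_left _ _)
  have hM0 : (0:ℝ) ≤ M := le_max_right _ _
  have hεpos : 0 < εbar := lt_of_le_of_lt (hεn 0).1 (hεn 0).2
  -- gap facts
  have hSbdd : BddBelow {t : ℝ | ∃ a ∈ (A : Set ℝ) ∪ {0, 1}, ∃ b ∈ (A : Set ℝ) ∪ {0, 1},
      a < b ∧ t = b - a} := by
    refine ⟨0, fun t ht => ?_⟩
    obtain ⟨a, _, b, _, hab, rfl⟩ := ht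
    linarith
  have hgap : ∀ a ∈ (A : Set ℝ) ∪ {0, 1}, ∀ b ∈ (A : Set ℝ) ∪ {0, 1}, a < b →
      2 * εbar ≤ b - a := by
    intro a ha b hb hab
    have : sInf {t : ℝ | ∃ a ∈ (A : Set ℝ) ∪ {0, 1}, ∃ b ∈ (A : Set ℝ) ∪ {0, 1},
        a < b ∧ t = b - a} ≤ b - a := csInf_le hSbdd ⟨a, ha, b, hb, hab, rfl⟩
    rw [hεbar]; linarith
  have h0mem : (0:ℝ) ∈ (A : Set ℝ) ∪ {0, 1} := Or.inr (Or.inl rfl)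
  have h1mem : (1:ℝ) ∈ (A : Set ℝ) ∪ {0, 1} := Or.inr (Or.inr rfl)
  have hga : ∀ a ∈ A, 2 * εbar ≤ a ∧ a ≤ 1 - 2 * εbar := by
    intro a ha
    have ha' : a ∈ (A : Set ℝ) := ha
    have h1 := hgap 0 h0mem a (Or.inl ha') (hA ha').1
    have h2 := hgap a (Or.inl ha') 1 h1mem (hA ha').2
    constructor <;> linarith
  -- integrability of φ on [0,1]
  have hφIcc : IntegrableOn φ (Set.Icc (0:ℝ) 1) := (integrableOn_Icc_iff_integrableOn_Ioo).mpr hφint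
  have hφII : ∀ x ∈ Set.Ioc (0:ℝ) 1, IntervalIntegrable φ volume 0 x := by
    intro x hx
    rw [intervalIntegrable_iff_integrableOn_Icc_of_le hx.1.le]
    exact hφIcc.mono_set (Set.Icc_subset_Icc le_rfl hx.2)
  -- the correction function
  set lin : ℝ → ℝ → ℝ → ℝ := fun ε a x =>
    φ (a - ε) + (φ (a + ε) - φ (a - ε)) / (2 * ε) * (x - (a - ε)) with hlin
  set D : ℝ → ℝ → ℝ := fun ε x =>
    ∑ a ∈ A, Set.indicator (Set.Icc (a - ε) (a + ε)) (fun x => lin ε a x - φ x) x with hD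
  -- Icc around points of A stays well inside (0,1)
  have hsub : ∀ ε ∈ Set.Ico (0:ℝ) εbar, ∀ a ∈ A,
      Set.Icc (a - ε) (a + ε) ⊆ Set.Icc εbar (1 - εbar) := by
    intro ε hε a ha x hx
    obtain ⟨h1, h2⟩ := hga a ha
    obtain ⟨hx1, hx2⟩ := hx
    exact ⟨by linarith [hε.1, hε.2], by linarith [hε.1, hε.2]⟩
  have hsub' : ∀ ε ∈ Set.Ico (0:ℝ) εbar, ∀ a ∈ A,
      Set.Icc (a - ε) (a + ε) ⊆ Set.Ioo (0:ℝ) 1 := by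
    intro ε hε a ha x hx
    have := hsub ε hε a ha hx
    exact ⟨by linarith [this.1], by linarith [this.2, hεpos]⟩
  -- boundedness of lin on Icc
  have hlinbdd : ∀ ε ∈ Set.Ico (0:ℝ) εbar, ∀ a ∈ A, ∀ x ∈ Set.Icc (a - ε) (a + ε),
      |lin ε a x| ≤ M := by
    intro ε hε a ha x hx
    have hae : a - ε ∈ Set.Icc (a - ε) (a + ε) := ⟨le_rfl, by linarith [hε.1]⟩
    have hae' : a + ε ∈ Set.Icc (a - ε) (a + ε) := ⟨by linarith [hε.1], le_rfl⟩
    have hb1 : |φ (a - ε)| ≤ M := hM _ (hsub ε hε a ha hae)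
    have hb2 : |φ (a + ε)| ≤ M := hM _ (hsub ε hε a ha hae')
    rcases eq_or_lt_of_le hε.1 with h0 | h0
    · rw [← h0] at hb1 ⊢
      simp only [hlin, mul_zero, div_zero, zero_mul, add_zero, sub_zero] at hb1 ⊢
      exact hb1
    · set t : ℝ := (x - (a - ε)) / (2 * ε) with ht
      have ht0 : 0 ≤ t := div_nonneg (by linarith [hx.1]) (by linarith)
      have ht1 : t ≤ 1 := by
        rw [div_le_one (by linarith : (0:ℝ) < 2 * ε)]
        linarith [hx.2]
      have heq : lin ε a x = (1 - t) * φ (a - ε) + t * φ (a + ε) := by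
        simp only [hlin, ht]
        field_simp
        ring
      rw [heq]
      calc |(1 - t) * φ (a - ε) + t * φ (a + ε)|
          ≤ |(1 - t) * φ (a - ε)| + |t * φ (a + ε)| := abs_add_le _ _
        _ = (1 - t) * |φ (a - ε)| + t * |φ (a + ε)| := by
            rw [abs_mul, abs_mul, abs_of_nonneg (by linarith : (0:ℝ) ≤ 1 - t),
              abs_of_nonneg ht0]
        _ ≤ (1 - t) * M + t * M :=
            add_le_add (mul_le_mul_of_nonneg_left hb1 (by linarith))
              (mul_le_mul_of_nonneg_left hb2 ht0)
        _ = M := by ring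
  -- disjointness and pointwise decomposition φε ε = φ + D ε
  have hdecomp : ∀ ε ∈ Set.Ico (0:ℝ) εbar, ∀ x : ℝ, φε ε x = φ x + D ε x := by
    intro ε hε x
    by_cases hxE : ∃ a ∈ A, x ∈ Set.Icc (a - ε) (a + ε)
    · obtain ⟨a, ha, hxa⟩ := hxE
      have hDx : D ε x = lin ε a x - φ x := by
        simp only [hD]
        rw [Finset.sum_eq_single_of_mem a ha]
        · rw [Set.indicator_of_mem hxa]
        · intro b hb hba
          rw [Set.indicator_of_notMem]
          intro hxb
          rcases lt_or_gt_of_ne hba with hlt | hlt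
          · have := hgap b (Or.inl hb) a (Or.inl ha) hlt
            have := hxa.1; have := hxb.2
            linarith [hε.2]
          · have := hgap a (Or.inl ha) b (Or.inl hb) hlt
            have := hxa.2; have := hxb.1
            linarith [hε.2]
      rw [hDx, hφεA ε hε a ha x hxa]; ring
    · push_neg at hxE
      have hDx : D ε x = 0 := by
        simp only [hD]
        refine Finset.sum_eq_zero fun a ha => Set.indicator_of_notMem (hxE a ha) _
      rw [hDx, hφεB ε hε x hxE]; ring
  -- integrability of D ε and pointwise bound
  have hDint : ∀ ε ∈ Set.Ico (0:ℝ) εbar, Integrable (D ε) volume := by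
    intro ε hε
    refine integrable_finset_sum _ fun a ha => ?_
    refine IntegrableOn.integrable_indicator ?_ measurableSet_Icc
    have h1 : IntegrableOn (fun x => lin ε a x) (Set.Icc (a - ε) (a + ε)) := by
      refine Continuous.integrableOn_Icc ?_
      simp only [hlin]
      exact continuous_const.add (continuous_const.mul (continuous_id.sub continuous_const))
    have h2 : IntegrableOn φ (Set.Icc (a - ε) (a + ε)) :=
      hφint.mono_set (hsub' ε hε a ha)
    exact h1.sub h2
  have hDbound : ∀ ε ∈ Set.Ico (0:ℝ) εbar, ∀ x : ℝ,
      |D ε x| ≤ ∑ a ∈ A, Set.indicator (Set.Icc (a - ε) (a + ε)) (fun x => M + |φ x|) x := by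
    intro ε hε x
    refine (Finset.abs_sum_le_sum_abs _ _).trans (Finset.sum_le_sum fun a ha => ?_)
    by_cases hxa : x ∈ Set.Icc (a - ε) (a + ε)
    · rw [Set.indicator_of_mem hxa, Set.indicator_of_mem hxa]
      calc |lin ε a x - φ x| ≤ |lin ε a x| + |φ x| := abs_sub _ _
        _ ≤ M + |φ x| := by gcongr; exact hlinbdd ε hε a ha x hxa
    · rw [Set.indicator_of_notMem hxa, Set.indicator_of_notMem hxa, abs_zero]
  -- ψ bound is integrable
  have hψint : ∀ ε ∈ Set.Ico (0:ℝ) εbar, ∀ a ∈ A,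
      IntegrableOn (fun x => M + |φ x|) (Set.Icc (a - ε) (a + ε)) := by
    intro ε hε a ha
    exact ((integrableOn_const_iff).mpr (Or.inr measure_Icc_lt_top)).add
      (hφint.mono_set (hsub' ε hε a ha)).abs
  -- the interval integral of D is bounded by B
  set B : ℕ → ℝ := fun n => ∑ a ∈ A,
      ∫ x in Set.Icc (a - εn n) (a + εn n), (M + |φ x|) with hB
  have hDbd : ∀ n, |∫ τ in (0:ℝ)..(xn n), D (εn n) τ| ≤ B n := by
    intro n
    have hint := hDint (εn n) (hεn n)
    calc |∫ τ in (0:ℝ)..(xn n), D (εn n) τ|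
        ≤ ∫ τ in (0:ℝ)..(xn n), |D (εn n) τ| :=
          intervalIntegral.abs_integral_le_integral_abs (hxn n).1.le
      _ = ∫ τ in Set.Ioc 0 (xn n), |D (εn n) τ| :=
          intervalIntegral.integral_of_le (hxn n).1.le
      _ ≤ ∫ τ, |D (εn n) τ| :=
          setIntegral_le_integral hint.abs (Filter.Eventually.of_forall fun x => abs_nonneg _)
      _ ≤ ∫ τ, ∑ a ∈ A, Set.indicator (Set.Icc (a - εn n) (a + εn n))
            (fun x => M + |φ x|) τ := by
          refine integral_mono hint.abs ?_ (hDbound (εn n) (hεn n))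
          exact integrable_finset_sum _ fun a ha =>
            IntegrableOn.integrable_indicator (hψint (εn n) (hεn n) a ha) measurableSet_Icc
      _ = B n := by
          rw [integral_finset_sum _ fun a ha =>
            IntegrableOn.integrable_indicator (hψint (εn n) (hεn n) a ha) measurableSet_Icc]
          exact Finset.sum_congr rfl fun a ha => integral_indicator measurableSet_Icc
  -- B tends to 0
  have hBtendsto : Tendsto B atTop (𝓝 0) := by
    rw [hB]
    have h0 : (0:ℝ) = ∑ a ∈ A, (0:ℝ) := by simp
    rw [h0]
    refine tendsto_finset_sum _ fun a ha => ?_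
    -- ∫ over Icc(a-εn, a+εn) of ψ → 0
    set μ : Measure ℝ := volume.restrict (Set.Ioo 0 1) with hμ
    have hψμ : Integrable (fun x => M + |φ x|) μ := by
      refine Integrable.add ?_ hφint.abs
      exact (integrableOn_const_iff).mpr (Or.inr (by simp [Real.volume_Ioo]))
    have hrw : ∀ n, (∫ x in Set.Icc (a - εn n) (a + εn n), (M + |φ x|)) =
        ∫ x in Set.Icc (a - εn n) (a + εn n), (M + |φ x|) ∂μ := by
      intro n
      rw [hμ, Measure.restrict_restrict measurableSet_Icc,
        Set.inter_eq_left.mpr (hsub' (εn n) (hεn n) a ha)]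
    simp_rw [hrw]
    refine hψμ.tendsto_setIntegral_nhds_zero ?_
    have hle : ∀ n, μ (Set.Icc (a - εn n) (a + εn n)) ≤ ENNReal.ofReal (2 * εn n) := by
      intro n
      calc μ (Set.Icc (a - εn n) (a + εn n))
          = volume (Set.Icc (a - εn n) (a + εn n) ∩ Set.Ioo 0 1) := by
            rw [hμ, Measure.restrict_apply measurableSet_Icc]
        _ ≤ volume (Set.Icc (a - εn n) (a + εn n)) :=
            measure_mono Set.inter_subset_left
        _ = ENNReal.ofReal (2 * εn n) := by rw [Real.volume_Icc]; ring_nf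
    have h2 : Tendsto (fun n => ENNReal.ofReal (2 * εn n)) atTop (𝓝 0) := by
      rw [show (0:ENNReal) = ENNReal.ofReal (2 * 0) by simp]
      exact (ENNReal.continuous_ofReal.tendsto _).comp (hε.const_mul 2)
    exact tendsto_of_tendsto_of_tendsto_of_le_of_le tendsto_const_nhds h2
      (fun n => zero_le) hle
  -- decomposition of the interval integral
  have hIdecomp : ∀ n, (∫ τ in (0:ℝ)..(xn n), φε (εn n) τ) =
      (∫ τ in (0:ℝ)..(xn n), φ τ) + ∫ τ in (0:ℝ)..(xn n), D (εn n) τ := by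
    intro n
    rw [← intervalIntegral.integral_add (hφII (xn n) (hxn n))
      (hDint (εn n) (hεn n)).intervalIntegrable]
    exact intervalIntegral.integral_congr fun x _ => hdecomp (εn n) (hεn n) x
  have hDtendsto : Tendsto (fun n => ∫ τ in (0:ℝ)..(xn n), D (εn n) τ) atTop (𝓝 0) :=
    squeeze_zero_norm (fun n => by simpa using hDbd n) hBtendsto
  -- continuity of the primitive
  have hxbarIcc : xbar ∈ Set.Icc (0:ℝ) 1 :=
    isClosed_Icc.mem_of_tendsto hx (Filter.Eventually.of_forall fun n =>
      ⟨(hxn n).1.le, (hxn n).2⟩)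
  have hFcont : ContinuousOn (fun x => ∫ τ in (0:ℝ)..x, φ τ) (Set.Icc (0:ℝ) 1) := by
    have h := intervalIntegral.continuousOn_primitive_interval (μ := volume) (f := φ)
      (a := 0) (b := 1) (by rw [Set.uIcc_of_le (by norm_num : (0:ℝ) ≤ 1)]; exact hφIcc)
    rwa [Set.uIcc_of_le (by norm_num : (0:ℝ) ≤ 1)] at h
  have hFtendsto : Tendsto (fun n => ∫ τ in (0:ℝ)..(xn n), φ τ) atTop
      (𝓝 (∫ τ in (0:ℝ)..xbar, φ τ)) := by
    refine (hFcont xbar hxbarIcc).tendsto.comp ?_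
    exact tendsto_nhdsWithin_of_tendsto_nhds_of_eventually_within _ hx
      (Filter.Eventually.of_forall fun n => ⟨(hxn n).1.le, (hxn n).2⟩)
  constructor
  · -- case 0 < xbar
    intro hxbar
    have h1 : Tendsto (fun n => 1 / xn n) atTop (𝓝 (1 / xbar)) :=
      tendsto_const_nhds.div hx (ne_of_gt hxbar)
    have h2 : Tendsto (fun n => ∫ τ in (0:ℝ)..(xn n), φε (εn n) τ) atTop
        (𝓝 (∫ τ in (0:ℝ)..xbar, φ τ)) := by
      have := hFtendsto.add hDtendsto
      rw [add_zero] at this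
      refine this.congr fun n => (hIdecomp n).symm
    exact h1.mul h2
  · -- case xbar = 0
    intro hxbar0
    have hxnlt : ∀ᶠ n in atTop, xn n < εbar := by
      rw [hxbar0] at hx
      exact hx.eventually (gt_mem_nhds hεpos)
    have heq : ∀ᶠ n in atTop, (((1 / xn n) * ∫ τ in (0:ℝ)..(xn n), φε (εn n) τ : ℝ) : EReal) =
        (((1 / xn n) * ∫ τ in (0:ℝ)..(xn n), φ τ : ℝ) : EReal) := by
      filter_upwards [hxnlt] with n hn
      congr 1
      congr 1
      refine intervalIntegral.integral_congr fun τ hτ => ?_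
      rw [Set.uIcc_of_le (hxn n).1.le] at hτ
      refine hφεB (εn n) (hεn n) τ fun a ha hτa => ?_
      have h1 := (hga a ha).1
      have h2 := hτa.1
      have h3 := hτ.2
      have h4 := (hεn n).2
      linarith
    set f : ℝ → EReal := fun x => (((1 / x) * ∫ τ in (0:ℝ)..x, φ τ : ℝ) : EReal) with hf
    have hmap : Tendsto xn atTop (𝓝[>] (0:ℝ)) := by
      rw [hxbar0] at hx
      exact tendsto_nhdsWithin_of_tendsto_nhds_of_eventually_within _ hx
        (Filter.Eventually.of_forall fun n => (hxn n).1)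
    constructor
    · calc liminf f (𝓝[>] (0:ℝ)) ≤ liminf (f ∘ xn) atTop := by
            rw [Filter.liminf_comp f xn atTop]
            exact liminf_le_liminf_of_le hmap
        _ = _ := (liminf_congr heq).symm
    · calc limsup (fun n => (((1 / xn n) * ∫ τ in (0:ℝ)..(xn n), φε (εn n) τ : ℝ) : EReal))
            atTop = limsup (f ∘ xn) atTop := limsup_congr heq
        _ ≤ limsup f (𝓝[>] (0:ℝ)) := by
            rw [Filter.limsup_comp f xn atTop]
            exact limsup_le_limsup_of_le hmap
end
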